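/- arXiv:math/0312258 — 7 statements merged into one kernel-verified Lean document; each statement's English description precedes it below -/
import Mathlib

section
/- There exist an absolute constant C > 0 and r₀ > 0 such that for every r ≥ r₀, the hole probability p(r) = P(ψ(z) ≠ 0 for all z with |z| ≤ r) satisfies p(r) ≥ exp(−C r⁴). -/
set_option maxHeartbeats 1000000

open MeasureTheory ProbabilityTheory Metric Real

lemma sqrt_le_one_add (u : ℝ) (hu : 0 ≤ u) : Real.sqrt u ≤ 1 + u := by
  nlinarith [Real.sq_sqrt hu, Real.sqrt_nonneg u]

lemma pow_div_sqrt_factorial_le (x : ℝ) (hx : 0 ≤ x) (k : ℕ) :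
    x ^ k / Real.sqrt (Nat.factorial k) ≤
      (Real.sqrt 2)⁻¹ ^ k + (Real.sqrt 2 * x ^ 2) ^ k / (Nat.factorial k) := by
  have hF : (0:ℝ) < (Nat.factorial k : ℝ) := by exact_mod_cast (Nat.factorial_pos k)
  have hs2 : (0:ℝ) < Real.sqrt 2 := Real.sqrt_pos.2 (by norm_num)
  have h2 : Real.sqrt 2 * Real.sqrt 2 = 2 := Real.mul_self_sqrt (by norm_num)
  have hbase : (Real.sqrt 2 * x) ^ 2 = 2 * x ^ 2 := by
    rw [mul_pow, Real.sq_sqrt (by norm_num : (0:ℝ) ≤ 2)]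
  have hA : (0:ℝ) ≤ (Real.sqrt 2 * x) ^ k := by positivity
  have hu : ((2:ℝ) * x ^ 2) ^ k = ((Real.sqrt 2 * x) ^ k) ^ 2 := by
    rw [← hbase, ← pow_mul, ← pow_mul, Nat.mul_comm]
  have hkey : x ^ k / Real.sqrt (Nat.factorial k)
      = (Real.sqrt 2)⁻¹ ^ k * ((Real.sqrt 2 * x) ^ k / Real.sqrt (Nat.factorial k)) := by
    rw [← mul_div_assoc, ← mul_pow]
    congr 2
    field_simp
  have hsqrt : (Real.sqrt 2 * x) ^ k / Real.sqrt (Nat.factorial k)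
      = Real.sqrt ((2 * x ^ 2) ^ k / (Nat.factorial k)) := by
    rw [Real.sqrt_div' _ hF.le, hu, Real.sqrt_sq hA]
  have hle : Real.sqrt ((2 * x ^ 2) ^ k / (Nat.factorial k)) ≤
      1 + (2 * x ^ 2) ^ k / (Nat.factorial k) := sqrt_le_one_add _ (by positivity)
  have hpow : (Real.sqrt 2)⁻¹ ^ k * (2 * x ^ 2) ^ k = (Real.sqrt 2 * x ^ 2) ^ k := by
    rw [← mul_pow]
    congr 1
    field_simp
    linear_combination x ^ 2 * h2.symm
  calc x ^ k / Real.sqrt (Nat.factorial k)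
      = (Real.sqrt 2)⁻¹ ^ k * Real.sqrt ((2 * x ^ 2) ^ k / (Nat.factorial k)) := by
        rw [hkey, hsqrt]
    _ ≤ (Real.sqrt 2)⁻¹ ^ k * (1 + (2 * x ^ 2) ^ k / (Nat.factorial k)) :=
        mul_le_mul_of_nonneg_left hle (by positivity)
    _ = (Real.sqrt 2)⁻¹ ^ k + (Real.sqrt 2 * x ^ 2) ^ k / (Nat.factorial k) := by
        rw [mul_add, mul_one, mul_div_assoc']
        rw [hpow]

lemma summable_pow_div_sqrt_factorial (x : ℝ) (hx : 0 ≤ x) :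
    Summable (fun k => x ^ k / Real.sqrt (Nat.factorial k)) := by
  have hs2 : (Real.sqrt 2)⁻¹ < 1 := by
    rw [inv_lt_one_iff₀]
    right
    nlinarith [Real.sq_sqrt (by norm_num : (0:ℝ) ≤ 2), Real.sqrt_nonneg 2]
  apply Summable.of_nonneg_of_le (fun k => by positivity)
    (fun k => pow_div_sqrt_factorial_le x hx k)
  exact (summable_geometric_of_lt_one (by positivity) hs2).add
    (Real.summable_pow_div_factorial _)

lemma tsum_exp_series_le (y : ℝ) (hy : 0 ≤ y) :
    ∑' k : ℕ, y ^ k / (Nat.factorial k) ≤ Real.exp y :=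
  Real.tsum_le_of_sum_range_le (fun n => by positivity)
    (fun n => Real.sum_le_exp_of_nonneg hy n)

lemma tsum_pow_div_sqrt_factorial_le (x : ℝ) (hx : 0 ≤ x) :
    ∑' k : ℕ, x ^ k / Real.sqrt (Nat.factorial k) ≤ 4 + Real.exp (2 * x ^ 2) := by
  have hs2 : (0:ℝ) < Real.sqrt 2 := Real.sqrt_pos.2 (by norm_num)
  have hs2' : (Real.sqrt 2)⁻¹ < 1 := by
    rw [inv_lt_one_iff₀]; right
    nlinarith [Real.sq_sqrt (by norm_num : (0:ℝ) ≤ 2), Real.sqrt_nonneg 2]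
  have hsum1 : Summable (fun k : ℕ => (Real.sqrt 2)⁻¹ ^ k) :=
    summable_geometric_of_lt_one (by positivity) hs2'
  have hsum2 : Summable (fun k : ℕ => (Real.sqrt 2 * x ^ 2) ^ k / (Nat.factorial k)) :=
    Real.summable_pow_div_factorial _
  calc ∑' k : ℕ, x ^ k / Real.sqrt (Nat.factorial k)
      ≤ ∑' k : ℕ, ((Real.sqrt 2)⁻¹ ^ k + (Real.sqrt 2 * x ^ 2) ^ k / (Nat.factorial k)) := by
        apply Summable.tsum_le_tsum (fun k => pow_div_sqrt_factorial_le x hx k)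
          (summable_pow_div_sqrt_factorial x hx) (hsum1.add hsum2)
    _ = (∑' k : ℕ, (Real.sqrt 2)⁻¹ ^ k) + ∑' k : ℕ, (Real.sqrt 2 * x ^ 2) ^ k / (Nat.factorial k) :=
        Summable.tsum_add hsum1 hsum2
    _ ≤ 4 + Real.exp (2 * x ^ 2) := by
        apply add_le_add
        · rw [tsum_geometric_of_lt_one (by positivity) hs2']
          rw [show (4:ℝ) = (1/4)⁻¹ by norm_num]
          apply inv_anti₀ (by norm_num)
          have : (4/3 : ℝ) ≤ Real.sqrt 2 := by
            rw [show (4/3:ℝ) = Real.sqrt ((4/3)^2) by rw [Real.sqrt_sq]; norm_num]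
            apply Real.sqrt_le_sqrt; norm_num
          have h22 : (Real.sqrt 2)⁻¹ ≤ 3/4 := by
            rw [inv_le_comm₀ hs2 (by norm_num)]
            linarith
          linarith
        · calc ∑' k : ℕ, (Real.sqrt 2 * x ^ 2) ^ k / (Nat.factorial k)
              ≤ Real.exp (Real.sqrt 2 * x ^ 2) := tsum_exp_series_le _ (by positivity)
            _ ≤ Real.exp (2 * x ^ 2) := by
                apply Real.exp_le_exp.2
                have : Real.sqrt 2 ≤ 2 := by
                  nlinarith [Real.sq_sqrt (by norm_num : (0:ℝ) ≤ 2), Real.sqrt_nonneg 2]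
                nlinarith

lemma pow_self_le_exp_mul_factorial (k : ℕ) :
    (k : ℝ) ^ k ≤ Real.exp k * (Nat.factorial k) := by
  have hF : (0:ℝ) < (Nat.factorial k : ℝ) := by exact_mod_cast Nat.factorial_pos k
  have := Real.pow_div_factorial_le_exp (x := (k:ℝ)) (Nat.cast_nonneg k) k
  rw [div_le_iff₀ hF] at this
  linarith

lemma prod_one_sub_ge (s : Finset ℕ) (x : ℕ → ℝ) (h0 : ∀ i ∈ s, 0 ≤ x i)
    (h1 : ∀ i ∈ s, x i ≤ 1) :
    1 - ∑ i ∈ s, x i ≤ ∏ i ∈ s, (1 - x i) := by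
  classical
  induction s using Finset.induction_on with
  | empty => simp
  | @insert a s' hnot ih =>
    rw [Finset.sum_insert hnot, Finset.prod_insert hnot]
    have hx0 : 0 ≤ x a := h0 a (Finset.mem_insert_self _ _)
    have hx1 : x a ≤ 1 := h1 a (Finset.mem_insert_self _ _)
    have ih' := ih (fun i hi => h0 i (Finset.mem_insert_of_mem hi))
      (fun i hi => h1 i (Finset.mem_insert_of_mem hi))
    have hsum : (0:ℝ) ≤ ∑ i ∈ s', x i :=
      Finset.sum_nonneg (fun i hi => h0 i (Finset.mem_insert_of_mem hi))
    have hprod : ∏ i ∈ s', (1 - x i) ≤ 1 := by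
      apply Finset.prod_le_one (fun i hi => by linarith [h1 i (Finset.mem_insert_of_mem hi)])
        (fun i hi => by linarith [h0 i (Finset.mem_insert_of_mem hi)])
    nlinarith

/-- The standard complex Gaussian measure on `ℂ`, with density
`π⁻¹ exp (-|w|²)` with respect to Lebesgue measure. -/
noncomputable def stdComplexGaussian : Measure ℂ :=
  volume.withDensity fun w => ENNReal.ofReal (Real.exp (-(‖w‖) ^ 2) / Real.pi)

lemma measurable_stdDensity :
    Measurable fun w : ℂ => ENNReal.ofReal (Real.exp (-(‖w‖) ^ 2) / Real.pi) := by
  apply Measurable.ennreal_ofReal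
  apply Measurable.div _ measurable_const
  exact (Real.continuous_exp.comp ((continuous_norm.pow 2).neg)).measurable

lemma lintegral_half_gaussian :
    ∫⁻ w : ℂ, ENNReal.ofReal (Real.exp (-(‖w‖) ^ 2 / 2)) = ENNReal.ofReal (2 * π) := by
  have hb : (0:ℝ) < 1/2 := by norm_num
  have hint : Integrable (fun v : ℂ => Real.exp (-(1/2 : ℝ) * ‖v‖ ^ 2)) := by
    have h := GaussianFourier.integrable_cexp_neg_mul_sq_norm_add (V := ℂ) (b := (1/2 : ℂ))
      (by norm_num) 0 0
    have h2 := h.norm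
    apply h2.congr
    filter_upwards with v
    rw [Complex.norm_exp]
    congr 1
    simp [← Complex.ofReal_pow]
  have heq : ∫ v : ℂ, Real.exp (-(1/2:ℝ) * ‖v‖ ^ 2) = 2 * π := by
    rw [GaussianFourier.integral_rexp_neg_mul_sq_norm hb, Complex.finrank_real_complex]
    norm_num
    ring
  rw [← heq, ofReal_integral_eq_lintegral_ofReal hint
    (Filter.Eventually.of_forall fun v => by positivity)]
  congr 1
  ext v
  ring_nf

lemma stdComplexGaussian_closedBall_ge (c : ℂ) (ρ : ℝ) (hρ : 0 ≤ ρ) :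
    ENNReal.ofReal (Real.exp (-(‖c‖ + ρ) ^ 2) * ρ ^ 2) ≤
      stdComplexGaussian (closedBall c ρ) := by
  have hπ : (0:ℝ) < π := Real.pi_pos
  rw [stdComplexGaussian, withDensity_apply _ measurableSet_closedBall]
  calc ENNReal.ofReal (Real.exp (-(‖c‖ + ρ) ^ 2) * ρ ^ 2)
      = ENNReal.ofReal (Real.exp (-(‖c‖ + ρ) ^ 2) / π) * volume (ball c ρ) := by
        rw [Complex.volume_ball, ← ENNReal.ofReal_pow hρ, ← ENNReal.ofReal_coe_nnreal,
          ← ENNReal.ofReal_mul (by positivity), ← ENNReal.ofReal_mul (by positivity)]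
        congr 1
        rw [NNReal.coe_real_pi]
        field_simp
    _ = ∫⁻ _ in ball c ρ, ENNReal.ofReal (Real.exp (-(‖c‖ + ρ) ^ 2) / π) ∂volume := by
        rw [setLIntegral_const, mul_comm]
    _ ≤ ∫⁻ w in ball c ρ, ENNReal.ofReal (Real.exp (-(‖w‖) ^ 2) / π) ∂volume := by
        apply setLIntegral_mono measurable_stdDensity
        intro w hw
        apply ENNReal.ofReal_le_ofReal
        gcongr
        rw [mem_ball] at hw
        have habs : ‖w‖ ≤ ‖c‖ + ρ := by
          calc ‖w‖ = ‖c + (w - c)‖ := by ring_nf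
            _ ≤ ‖c‖ + ‖w - c‖ := norm_add_le _ _
            _ ≤ ‖c‖ + ρ := by
                have : ‖w - c‖ = dist w c := (Complex.dist_eq w c).symm
                rw [this]
                linarith
        nlinarith [norm_nonneg w, norm_nonneg c]
    _ ≤ ∫⁻ w in closedBall c ρ, ENNReal.ofReal (Real.exp (-(‖w‖) ^ 2) / π) ∂volume :=
        lintegral_mono_set ball_subset_closedBall

lemma stdComplexGaussian_tail_le (R : ℝ) (hR : 0 ≤ R) :
    stdComplexGaussian {w : ℂ | R < ‖w‖} ≤
      ENNReal.ofReal (2 * Real.exp (-R ^ 2 / 2)) := by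
  have hπ : (0:ℝ) < π := Real.pi_pos
  have hmeas : MeasurableSet {w : ℂ | R < ‖w‖} := by
    apply measurableSet_lt measurable_const continuous_norm.measurable
  rw [stdComplexGaussian, withDensity_apply _ hmeas]
  calc ∫⁻ w in {w : ℂ | R < ‖w‖},
        ENNReal.ofReal (Real.exp (-(‖w‖) ^ 2) / π) ∂volume
      ≤ ∫⁻ w in {w : ℂ | R < ‖w‖},
        ENNReal.ofReal (Real.exp (-R ^ 2 / 2) / π * Real.exp (-(‖w‖) ^ 2 / 2)) ∂volume := by
        apply setLIntegral_mono
        · apply Measurable.ennreal_ofReal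
          apply Measurable.const_mul
          exact (Real.continuous_exp.comp
            ((continuous_norm.pow 2).neg.div_const 2)).measurable
        intro w hw
        apply ENNReal.ofReal_le_ofReal
        rw [div_mul_eq_mul_div, ← Real.exp_add]
        gcongr
        have : R ≤ ‖w‖ := le_of_lt hw
        nlinarith [norm_nonneg w]
    _ ≤ ∫⁻ w : ℂ, ENNReal.ofReal (Real.exp (-R ^ 2 / 2) / π * Real.exp (-(‖w‖) ^ 2 / 2)) ∂volume :=
        setLIntegral_le_lintegral _ _
    _ = ENNReal.ofReal (Real.exp (-R ^ 2 / 2) / π) *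
          ∫⁻ w : ℂ, ENNReal.ofReal (Real.exp (-(‖w‖) ^ 2 / 2)) ∂volume := by
        rw [← lintegral_const_mul]
        · congr 1
          ext w
          rw [← ENNReal.ofReal_mul (by positivity)]
        · exact Measurable.ennreal_ofReal
            ((Real.continuous_exp.comp ((continuous_norm.pow 2).neg.div_const 2)).measurable)
    _ = ENNReal.ofReal (2 * Real.exp (-R ^ 2 / 2)) := by
        rw [lintegral_half_gaussian, ← ENNReal.ofReal_mul (by positivity)]
        congr 1
        field_simp

/-- The random entire function `ψ(z) = ∑ ζ_k z^k / √(k!)` built from coefficients `a`. -/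
noncomputable def psiFun (a : ℕ → ℂ) (z : ℂ) : ℂ :=
  ∑' k : ℕ, a k * z ^ k / (Real.sqrt (Nat.factorial k) : ℂ)


lemma exp_nat_div_eight (k : ℕ) : Real.exp ((k:ℝ) / 8) = Real.exp (1/8 : ℝ) ^ k := by
  rw [← Real.exp_nat_mul]
  congr 1
  ring

lemma exp_five_quarters_le : Real.exp (5/4 : ℝ) ≤ 4 := by
  have h1 : Real.exp 1 < 2.7182818286 := Real.exp_one_lt_d9
  have h4 : Real.exp (5/4 : ℝ) ^ 4 = Real.exp 1 ^ 5 := by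
    rw [← Real.exp_nat_mul, ← Real.exp_nat_mul]
    norm_num
  have h5 : Real.exp 1 ^ 5 < 2.7182818286 ^ 5 :=
    pow_lt_pow_left₀ h1 (Real.exp_pos 1).le (by norm_num)
  have h6 : ((2.7182818286 : ℝ)) ^ 5 ≤ 256 := by norm_num
  have h7 : Real.exp (5/4 : ℝ) ^ 4 < 4 ^ 4 := by
    rw [h4]
    have h8 : ((4:ℝ)) ^ 4 = 256 := by norm_num
    linarith
  exact (lt_of_pow_lt_pow_left₀ 4 (by norm_num) h7).le

lemma tail_term_le (r : ℝ) (hr : 2 ≤ r) (K k : ℕ) (hK : 2000 * r ^ 2 ≤ K) (hk : K < k) :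
    Real.exp (k / 8) * r ^ k / Real.sqrt (Nat.factorial k) ≤ (1/22 : ℝ) ^ k := by
  have hr0 : (0:ℝ) < r := by linarith
  have hF : (0:ℝ) < (Nat.factorial k : ℝ) := by exact_mod_cast Nat.factorial_pos k
  have hkr : r ^ 2 ≤ (k : ℝ) / 2000 := by
    have : (K : ℝ) ≤ (k : ℝ) := by exact_mod_cast hk.le
    linarith
  set A : ℝ := Real.exp (k / 8) * r ^ k with hA
  have hA0 : 0 ≤ A := by positivity
  have hAform : A = (Real.exp (1/8 : ℝ) * r) ^ k := by
    rw [hA, exp_nat_div_eight, mul_pow]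
  have he2 : Real.exp (1/8:ℝ) ^ 2 = Real.exp (1/4:ℝ) := by
    rw [← Real.exp_nat_mul]; norm_num
  have hAsq : A ^ 2 = (Real.exp (1/4 : ℝ) * r ^ 2) ^ k := by
    rw [hAform, ← pow_mul, Nat.mul_comm, pow_mul, mul_pow, he2]
  have hexp : Real.exp (5/4 : ℝ) ≤ 4 := exp_five_quarters_le
  have hbase : Real.exp (1/4 : ℝ) * r ^ 2 ≤ (1/484 : ℝ) * ((k : ℝ) * Real.exp (-1 : ℝ)) := by
    have h1 : Real.exp (1/4 : ℝ) * r ^ 2 ≤ Real.exp (1/4 : ℝ) * ((k:ℝ) / 2000) :=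
      mul_le_mul_of_nonneg_left hkr (Real.exp_pos _).le
    have h3 : Real.exp (1/4 : ℝ) / 2000 ≤ Real.exp (-1:ℝ) / 484 := by
      rw [div_le_div_iff₀ (by norm_num) (by norm_num)]
      have hme : Real.exp (1/4:ℝ) = Real.exp (5/4:ℝ) * Real.exp (-1:ℝ) := by
        rw [← Real.exp_add]; norm_num
      rw [hme]
      nlinarith [mul_le_mul_of_nonneg_right hexp (Real.exp_pos (-1:ℝ)).le]
    calc Real.exp (1/4 : ℝ) * r ^ 2 ≤ Real.exp (1/4 : ℝ) / 2000 * (k:ℝ) := by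
          rw [div_mul_eq_mul_div]; linarith [h1]
      _ ≤ Real.exp (-1:ℝ) / 484 * (k:ℝ) :=
          mul_le_mul_of_nonneg_right h3 (Nat.cast_nonneg k)
      _ = (1/484 : ℝ) * ((k : ℝ) * Real.exp (-1 : ℝ)) := by ring
  have he3 : Real.exp (-1:ℝ) ^ k = Real.exp (-(k:ℝ)) := by
    rw [← Real.exp_nat_mul]
    congr 1
    ring
  have hcore : A ^ 2 ≤ (1/484 : ℝ) ^ k * (Nat.factorial k) := by
    have hfact : ((k:ℝ) * Real.exp (-1:ℝ)) ^ k ≤ (Nat.factorial k : ℝ) := by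
      have h := pow_self_le_exp_mul_factorial k
      have hcancel : Real.exp (-(k:ℝ)) * Real.exp (k:ℝ) = 1 := by
        rw [← Real.exp_add]; simp
      calc ((k:ℝ) * Real.exp (-1:ℝ)) ^ k = (k:ℝ)^k * Real.exp (-(k:ℝ)) := by
            rw [mul_pow, he3]
        _ ≤ Real.exp (-(k:ℝ)) * (Real.exp k * (Nat.factorial k)) := by
            rw [mul_comm]
            exact mul_le_mul_of_nonneg_left h (Real.exp_pos _).le
        _ = (Nat.factorial k : ℝ) := by rw [← mul_assoc, hcancel, one_mul]
    calc A ^ 2 = (Real.exp (1/4 : ℝ) * r ^ 2) ^ k := hAsq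
      _ ≤ ((1/484 : ℝ) * ((k : ℝ) * Real.exp (-1 : ℝ))) ^ k :=
          pow_le_pow_left₀ (by positivity) hbase k
      _ = (1/484 : ℝ) ^ k * ((k : ℝ) * Real.exp (-1 : ℝ)) ^ k := mul_pow _ _ _
      _ ≤ (1/484 : ℝ) ^ k * (Nat.factorial k) :=
          mul_le_mul_of_nonneg_left hfact (by positivity)
  have hsq : A / Real.sqrt (Nat.factorial k) = Real.sqrt (A ^ 2 / (Nat.factorial k)) := by
    rw [Real.sqrt_div (sq_nonneg A), Real.sqrt_sq hA0]
  rw [hsq]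
  have h484 : ((1/484 : ℝ)) ^ k = ((1/22 : ℝ) ^ k) ^ 2 := by
    rw [← pow_mul, Nat.mul_comm, pow_mul]
    norm_num
  calc Real.sqrt (A ^ 2 / (Nat.factorial k)) ≤ Real.sqrt ((1/22 : ℝ) ^ k * (1/22:ℝ)^k) := by
        apply Real.sqrt_le_sqrt
        rw [div_le_iff₀ hF]
        calc A ^ 2 ≤ (1/484 : ℝ) ^ k * (Nat.factorial k) := hcore
          _ = (1/22:ℝ)^k * (1/22:ℝ)^k * (Nat.factorial k) := by
              rw [h484]; ring
    _ = (1/22 : ℝ) ^ k := Real.sqrt_mul_self (by positivity)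

lemma psi_ne_zero (r : ℝ) (hr : 2 ≤ r) (K : ℕ) (hK : 2000 * r ^ 2 ≤ K) (a : ℕ → ℂ)
    (h0 : ‖a 0 - 2‖ ≤ 1)
    (hmid : ∀ k, 1 ≤ k → k ≤ K → ‖a k‖ ≤ Real.exp (-(3 * r ^ 2)))
    (htail : ∀ k, K < k → ‖a k‖ ≤ Real.exp (k / 8))
    (z : ℂ) (hz : ‖z‖ ≤ r) : psiFun a z ≠ 0 := by
  have hr0 : (0:ℝ) < r := by linarith
  set f : ℕ → ℂ := fun k => a k * z ^ k / (Real.sqrt (Nat.factorial k) : ℂ) with hf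
  have hnorm : ∀ k, ‖f k‖ = ‖a k‖ * ‖z‖ ^ k / Real.sqrt (Nat.factorial k) := by
    intro k
    simp only [hf, norm_div, norm_mul, norm_pow, Complex.norm_real, Real.norm_eq_abs]
    rw [abs_of_nonneg (Real.sqrt_nonneg _)]
  have hnormle : ∀ k, ‖f k‖ ≤ ‖a k‖ * r ^ k / Real.sqrt (Nat.factorial k) := by
    intro k
    rw [hnorm k]
    gcongr
  have hglob : ∀ k, ‖a k‖ ≤ 3 * Real.exp (1/8 : ℝ) ^ k := by
    intro k
    have hek : (1:ℝ) ≤ Real.exp (1/8:ℝ) ^ k :=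
      one_le_pow₀ (Real.one_le_exp (by norm_num))
    rcases Nat.eq_zero_or_pos k with rfl | hk
    · have h3 : ‖a 0‖ ≤ 3 := by
        calc ‖a 0‖ = ‖(a 0 - 2) + 2‖ := by ring_nf
          _ ≤ ‖a 0 - 2‖ + ‖(2:ℂ)‖ := norm_add_le _ _
          _ ≤ 3 := by rw [Complex.norm_two]; linarith
      calc ‖a 0‖ ≤ 3 := h3
        _ ≤ 3 * Real.exp (1/8:ℝ) ^ 0 := by norm_num
    · rcases le_or_gt k K with hkK | hkK
      · have hm := hmid k hk hkK
        have h1 : Real.exp (-(3 * r ^ 2)) ≤ 1 := Real.exp_le_one_iff.2 (by nlinarith)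
        nlinarith
      · have hle : ‖a k‖ ≤ Real.exp (1/8:ℝ) ^ k := by
          rw [← exp_nat_div_eight]
          exact htail k hkK
        nlinarith [norm_nonneg (a k)]
  have hsummable : Summable (fun k => ‖f k‖) := by
    apply Summable.of_nonneg_of_le (fun k => norm_nonneg _) (fun k => ?_)
      ((summable_pow_div_sqrt_factorial (Real.exp (1/8:ℝ) * r) (by positivity)).mul_left 3)
    calc ‖f k‖ ≤ ‖a k‖ * r ^ k / Real.sqrt (Nat.factorial k) := hnormle k
      _ ≤ (3 * Real.exp (1/8:ℝ) ^ k) * r ^ k / Real.sqrt (Nat.factorial k) := by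
          gcongr
          exact hglob k
      _ = 3 * ((Real.exp (1/8:ℝ) * r) ^ k / Real.sqrt (Nat.factorial k)) := by
          rw [mul_pow]; ring
  have hsumf : Summable f := Summable.of_norm hsummable
  set δ : ℝ := Real.exp (-(3 * r ^ 2)) with hδ
  have hδ0 : (0:ℝ) < δ := Real.exp_pos _
  have hshift_summ : Summable (fun j => ‖f (j+1)‖) := (summable_nat_add_iff 1).2 hsummable
  have hsummh1 : Summable (fun j => r ^ (j+1) / Real.sqrt (Nat.factorial (j+1))) :=
    (summable_nat_add_iff 1).2 (summable_pow_div_sqrt_factorial r hr0.le)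
  have hsummh2 : Summable (fun j : ℕ => (1/22:ℝ)^(j+1)) :=
    (summable_nat_add_iff 1).2 (summable_geometric_of_lt_one (by norm_num) (by norm_num))
  have hptwise : ∀ j, ‖f (j+1)‖ ≤
      δ * (r ^ (j+1) / Real.sqrt (Nat.factorial (j+1))) + (1/22:ℝ)^(j+1) := by
    intro j
    rcases le_or_gt (j+1) K with hjK | hjK
    · calc ‖f (j+1)‖ ≤ ‖a (j+1)‖ * r ^ (j+1) / Real.sqrt (Nat.factorial (j+1)) :=
            hnormle (j+1)
        _ ≤ δ * r ^ (j+1) / Real.sqrt (Nat.factorial (j+1)) := by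
            gcongr
            exact hmid (j+1) (Nat.succ_le_succ (Nat.zero_le j)) hjK
        _ ≤ _ := by
            rw [mul_div_assoc]
            exact le_add_of_nonneg_right (by positivity)
    · calc ‖f (j+1)‖ ≤ ‖a (j+1)‖ * r ^ (j+1) / Real.sqrt (Nat.factorial (j+1)) :=
            hnormle (j+1)
        _ ≤ Real.exp (((j+1:ℕ)) / 8) * r ^ (j+1) / Real.sqrt (Nat.factorial (j+1)) := by
            gcongr
            exact htail (j+1) hjK
        _ ≤ (1/22:ℝ)^(j+1) := tail_term_le r hr K (j+1) hK hjK
        _ ≤ _ := le_add_of_nonneg_left (by positivity)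
  have htsum_le : ∑' j, ‖f (j+1)‖ ≤ 1/2 := by
    have hle1 : ∑' j, ‖f (j+1)‖ ≤
        ∑' j, (δ * (r ^ (j+1) / Real.sqrt (Nat.factorial (j+1))) + (1/22:ℝ)^(j+1)) :=
      Summable.tsum_le_tsum hptwise hshift_summ ((hsummh1.mul_left δ).add hsummh2)
    have heq : ∑' j, (δ * (r ^ (j+1) / Real.sqrt (Nat.factorial (j+1))) + (1/22:ℝ)^(j+1))
        = δ * (∑' j, r ^ (j+1) / Real.sqrt (Nat.factorial (j+1)))
          + ∑' j : ℕ, (1/22:ℝ)^(j+1) := by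
      rw [Summable.tsum_add (hsummh1.mul_left δ) hsummh2, tsum_mul_left]
    have hS1 : ∑' j, r ^ (j+1) / Real.sqrt (Nat.factorial (j+1)) ≤ 4 + Real.exp (2 * r ^ 2) := by
      have hsum := summable_pow_div_sqrt_factorial r hr0.le
      have hsplit := (Summable.sum_add_tsum_nat_add 1 hsum).symm
      have h0' : ∑ i ∈ Finset.range 1, r ^ i / Real.sqrt (Nat.factorial i) = 1 := by
        simp
      have htot := tsum_pow_div_sqrt_factorial_le r hr0.le
      rw [hsplit, h0'] at htot
      linarith
    have hS2 : ∑' j : ℕ, (1/22:ℝ)^(j+1) ≤ 1/21 := by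
      have hgeom : ∑' j : ℕ, (1/22:ℝ)^(j+1) = (1/22) * ∑' j : ℕ, (1/22:ℝ)^j := by
        rw [← tsum_mul_left]
        congr 1
        ext j
        rw [pow_succ]
        ring
      rw [hgeom, tsum_geometric_of_lt_one (by norm_num) (by norm_num)]
      norm_num
    have he1 : Real.exp (-1:ℝ) ≤ 1/2 := by
      rw [Real.exp_neg]
      have h2 : (2:ℝ) ≤ Real.exp 1 := by
        have := Real.add_one_le_exp (1:ℝ)
        linarith
      rw [inv_le_comm₀ (Real.exp_pos 1) (by norm_num)]
      linarith
    have hr4 : (4:ℝ) ≤ r ^ 2 := by nlinarith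
    have hd1 : δ ≤ (1/2:ℝ)^12 := by
      have h1 : δ ≤ Real.exp (-(12:ℝ)) := Real.exp_le_exp.2 (by nlinarith)
      have h2 : Real.exp (-(12:ℝ)) = Real.exp (-1:ℝ) ^ 12 := by
        rw [← Real.exp_nat_mul]; norm_num
      calc δ ≤ Real.exp (-(12:ℝ)) := h1
        _ = Real.exp (-1:ℝ) ^ 12 := h2
        _ ≤ (1/2:ℝ)^12 := pow_le_pow_left₀ (Real.exp_pos _).le he1 12
    have hd2 : δ * Real.exp (2 * r ^ 2) ≤ (1/16 : ℝ) := by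
      have h1 : δ * Real.exp (2 * r ^ 2) = Real.exp (-(r^2)) := by
        rw [hδ, ← Real.exp_add]
        congr 1
        ring
      have h2 : Real.exp (-(r^2)) ≤ Real.exp (-(4:ℝ)) := Real.exp_le_exp.2 (by nlinarith)
      have h3 : Real.exp (-(4:ℝ)) = Real.exp (-1:ℝ) ^ 4 := by
        rw [← Real.exp_nat_mul]; norm_num
      have h4 : Real.exp (-1:ℝ) ^ 4 ≤ (1/2:ℝ)^4 := pow_le_pow_left₀ (Real.exp_pos _).le he1 4
      rw [h1]
      rw [h3] at h2
      calc Real.exp (-(r^2)) ≤ Real.exp (-1:ℝ)^4 := h2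
        _ ≤ (1/2:ℝ)^4 := h4
        _ ≤ 1/16 := by norm_num
    have hexp2 : (0:ℝ) < Real.exp (2 * r ^ 2) := Real.exp_pos _
    calc ∑' j, ‖f (j+1)‖
        ≤ δ * (∑' j, r ^ (j+1) / Real.sqrt (Nat.factorial (j+1))) + ∑' j : ℕ, (1/22:ℝ)^(j+1) := by
          rw [← heq]; exact hle1
      _ ≤ δ * (4 + Real.exp (2 * r ^ 2)) + 1/21 := by
          have := mul_le_mul_of_nonneg_left hS1 hδ0.le
          linarith
      _ = δ * 4 + δ * Real.exp (2 * r ^ 2) + 1/21 := by ring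
      _ ≤ (1/2:ℝ)^12 * 4 + 1/16 + 1/21 := by
          have := mul_le_mul_of_nonneg_right hd1 (by norm_num : (0:ℝ) ≤ 4)
          linarith
      _ ≤ 1/2 := by norm_num
  have htsum_eq : psiFun a z = f 0 + ∑' j, f (j+1) := by
    have h1 : psiFun a z = ∑' k, f k := rfl
    rw [h1, Summable.tsum_eq_zero_add hsumf]
  have hf0 : f 0 = a 0 := by
    simp [hf]
  have hrest : ‖∑' j, f (j+1)‖ ≤ 1/2 :=
    (norm_tsum_le_tsum_norm hshift_summ).trans htsum_le
  have ha0 : 1 ≤ ‖a 0‖ := by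
    have h1 : ‖(2:ℂ)‖ - ‖a 0‖ ≤ ‖a 0 - 2‖ := by
      have h := norm_sub_norm_le (2:ℂ) (a 0)
      rw [norm_sub_rev] at h
      simpa using h
    rw [Complex.norm_two] at h1
    linarith
  intro hzero
  rw [hzero, hf0] at htsum_eq
  have hneg : a 0 = - ∑' j, f (j+1) := by
    linear_combination -htsum_eq
  have : ‖a 0‖ ≤ 1/2 := by
    rw [hneg, norm_neg]
    exact hrest
  linarith

theorem hole_probability_lower_bound
    {Ω : Type*} [MeasureSpace Ω] [IsProbabilityMeasure (ℙ : Measure Ω)]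
    (ζ : ℕ → Ω → ℂ) (hmeas : ∀ k, Measurable (ζ k))
    (hindep : iIndepFun ζ ℙ)
    (hdist : ∀ k, Measure.map (ζ k) ℙ = stdComplexGaussian) :
    ∃ C > (0 : ℝ), ∃ r₀ > (0 : ℝ), ∀ r : ℝ, r₀ ≤ r →
      ℙ {ω | ∀ z : ℂ, ‖z‖ ≤ r → psiFun (fun k => ζ k ω) z ≠ 0}
        ≥ ENNReal.ofReal (Real.exp (-C * r ^ 4)) := by
  refine ⟨100000, by norm_num, 2, by norm_num, fun r hr => ?_⟩
  have hr0 : (0:ℝ) < r := by linarith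
  have hr4 : (4:ℝ) ≤ r ^ 2 := by nlinarith
  have he2 : (2:ℝ) ≤ Real.exp 1 := by
    have := Real.add_one_le_exp (1:ℝ); linarith
  have he1 : Real.exp (-1:ℝ) ≤ 1/2 := by
    rw [Real.exp_neg, inv_le_comm₀ (Real.exp_pos 1) (by norm_num)]
    linarith
  -- the target measure facts
  have hν_univ : stdComplexGaussian Set.univ = 1 := by
    rw [← hdist 0, Measure.map_apply (hmeas 0) MeasurableSet.univ]
    simp
  haveI hνprob : IsProbabilityMeasure stdComplexGaussian := ⟨hν_univ⟩
  set K : ℕ := ⌈2000 * r ^ 2⌉₊ with hKdef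
  have hKge : 2000 * r ^ 2 ≤ (K:ℝ) := Nat.le_ceil _
  have hKle : (K:ℝ) ≤ 2001 * r ^ 2 := by
    have h := Nat.ceil_lt_add_one (by positivity : (0:ℝ) ≤ 2000 * r ^ 2)
    rw [← hKdef] at h
    nlinarith
  have hK8000 : (8000:ℝ) ≤ (K:ℝ) := by nlinarith
  have hK1 : 1 ≤ K := by
    by_contra h
    push_neg at h
    interval_cases K
    norm_num at hK8000
  set δ : ℝ := Real.exp (-(3 * r ^ 2)) with hδdef
  have hδ0 : (0:ℝ) < δ := Real.exp_pos _
  have hδ1 : δ ≤ 1 := Real.exp_le_one_iff.2 (by nlinarith)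
  set B : ℕ → Set ℂ := fun k =>
    if k = 0 then Metric.closedBall (2:ℂ) 1
    else if k ≤ K then Metric.closedBall (0:ℂ) δ
    else Metric.closedBall (0:ℂ) (Real.exp (k / 8)) with hBdef
  have hBmeas : ∀ k, MeasurableSet (B k) := by
    intro k
    rw [hBdef]
    dsimp only
    split_ifs <;> exact measurableSet_closedBall
  set A : ℕ → Set Ω := fun k => ζ k ⁻¹' B k with hAdef
  have hAmeas : ∀ k, MeasurableSet (A k) := fun k => (hmeas k) (hBmeas k)
  have hνA : ∀ k, ℙ (ζ k ⁻¹' B k) = stdComplexGaussian (B k) := by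
    intro k
    rw [← Measure.map_apply (hmeas k) (hBmeas k), hdist k]
  set p : ℕ → ℝ := fun k =>
    if k = 0 then Real.exp (-9:ℝ)
    else if k ≤ K then Real.exp (-(6 * r ^ 2) - 1)
    else 1 - Real.exp (-(k:ℝ)) with hpdef
  have hp_nonneg : ∀ k, 0 ≤ p k := by
    intro k
    rw [hpdef]
    dsimp only
    split_ifs
    · positivity
    · positivity
    · have : Real.exp (-(k:ℝ)) ≤ 1 := Real.exp_le_one_iff.2 (neg_nonpos.2 (Nat.cast_nonneg k))
      linarith
  -- lower bound each factor
  have hp_le : ∀ k, ENNReal.ofReal (p k) ≤ stdComplexGaussian (B k) := by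
    intro k
    rw [hpdef, hBdef]
    dsimp only
    split_ifs with h0 h1
    · -- k = 0
      refine le_trans ?_ (stdComplexGaussian_closedBall_ge 2 1 (by norm_num))
      apply ENNReal.ofReal_le_ofReal
      rw [Complex.norm_two]
      norm_num
    · -- middle
      refine le_trans ?_ (stdComplexGaussian_closedBall_ge 0 δ hδ0.le)
      apply ENNReal.ofReal_le_ofReal
      have habs : ‖(0:ℂ)‖ = 0 := norm_zero
      rw [habs, zero_add]
      have hδsq : δ ^ 2 = Real.exp (-(6 * r ^ 2)) := by
        rw [hδdef, ← Real.exp_nat_mul]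
        congr 1
        ring
      have hexpδ : Real.exp (-1:ℝ) ≤ Real.exp (-δ ^ 2) := by
        apply Real.exp_le_exp.2
        nlinarith
      calc Real.exp (-(6 * r ^ 2) - 1) = Real.exp (-1:ℝ) * Real.exp (-(6 * r ^ 2)) := by
            rw [← Real.exp_add]; congr 1; ring
        _ ≤ Real.exp (-δ ^ 2) * Real.exp (-(6 * r ^ 2)) := by
            apply mul_le_mul_of_nonneg_right hexpδ (Real.exp_pos _).le
        _ = Real.exp (-δ ^ 2) * δ ^ 2 := by rw [hδsq]
    · -- tail k > K
      push_neg at h1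
      set R : ℝ := Real.exp ((k:ℝ) / 8) with hRdef
      have hR0 : (0:ℝ) ≤ R := (Real.exp_pos _).le
      have hkK : (K:ℝ) < (k:ℝ) := by exact_mod_cast h1
      have hk8000 : (8000:ℝ) ≤ (k:ℝ) := by linarith
      have hcompl : (Metric.closedBall (0:ℂ) R)ᶜ = {w : ℂ | R < ‖w‖} := by
        ext w
        simp [Complex.dist_eq, not_le]
      have htail2 : 2 * Real.exp (-R ^ 2 / 2) ≤ Real.exp (-(k:ℝ)) := by
        have hRsq : R ^ 2 = Real.exp ((k:ℝ)/4) := by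
          rw [hRdef, ← Real.exp_nat_mul]
          congr 1
          push_cast
          ring
        have hlow : (1 + (k:ℝ)/8) ^ 2 ≤ R ^ 2 := by
          rw [hRsq]
          have h1 : (1 + (k:ℝ)/8) ≤ Real.exp ((k:ℝ)/8) := by
            have := Real.add_one_le_exp ((k:ℝ)/8)
            linarith
          have h2 : Real.exp ((k:ℝ)/8) ^ 2 = Real.exp ((k:ℝ)/4) := by
            rw [← Real.exp_nat_mul]
            congr 1
            ring
          rw [← h2]
          apply pow_le_pow_left₀ (by positivity) h1
        have hbig : 2 * ((k:ℝ) + 1) ≤ R ^ 2 := by nlinarith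
        calc 2 * Real.exp (-R ^ 2 / 2) ≤ 2 * Real.exp (-((k:ℝ)+1)) := by
              have : -R^2/2 ≤ -((k:ℝ)+1) := by linarith
              have := Real.exp_le_exp.2 this
              linarith
          _ = 2 * (Real.exp (-1:ℝ) * Real.exp (-(k:ℝ))) := by
              rw [← Real.exp_add]
              congr 2
              ring
          _ ≤ Real.exp (-(k:ℝ)) := by
              nlinarith [Real.exp_pos (-(k:ℝ)), he1]
      have htail3 : stdComplexGaussian (Metric.closedBall (0:ℂ) R)ᶜ ≤
          ENNReal.ofReal (Real.exp (-(k:ℝ))) := by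
        rw [hcompl]
        exact le_trans (stdComplexGaussian_tail_le R hR0) (ENNReal.ofReal_le_ofReal htail2)
      have hsum := measure_add_measure_compl (μ := stdComplexGaussian)
        (measurableSet_closedBall (x := (0:ℂ)) (ε := R))
      rw [hν_univ] at hsum
      have hexpk1 : Real.exp (-(k:ℝ)) ≤ 1 := Real.exp_le_one_iff.2 (neg_nonpos.2 (Nat.cast_nonneg k))
      have hofr : ENNReal.ofReal (1 - Real.exp (-(k:ℝ))) + ENNReal.ofReal (Real.exp (-(k:ℝ))) = 1 := by
        rw [← ENNReal.ofReal_add (by linarith) (Real.exp_pos _).le]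
        norm_num
      have hchain : ENNReal.ofReal (1 - Real.exp (-(k:ℝ))) + stdComplexGaussian (Metric.closedBall (0:ℂ) R)ᶜ
          ≤ stdComplexGaussian (Metric.closedBall (0:ℂ) R) + stdComplexGaussian (Metric.closedBall (0:ℂ) R)ᶜ := by
        calc ENNReal.ofReal (1 - Real.exp (-(k:ℝ))) + stdComplexGaussian (Metric.closedBall (0:ℂ) R)ᶜ
            ≤ ENNReal.ofReal (1 - Real.exp (-(k:ℝ))) + ENNReal.ofReal (Real.exp (-(k:ℝ))) :=
              add_le_add_right htail3 _
          _ = 1 := hofr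
          _ = stdComplexGaussian (Metric.closedBall (0:ℂ) R) + stdComplexGaussian (Metric.closedBall (0:ℂ) R)ᶜ := hsum.symm
      exact ENNReal.le_of_add_le_add_right (measure_ne_top _ _) hchain
  -- product formula
  have hSn : ∀ n : ℕ, ℙ (⋂ k ∈ Finset.range (n+1), A k) =
      ∏ k ∈ Finset.range (n+1), stdComplexGaussian (B k) := by
    intro n
    have h := hindep.measure_inter_preimage_eq_mul (Finset.range (n+1)) (sets := B)
      (fun i _ => hBmeas i)
    rw [hAdef]
    rw [h]
    exact Finset.prod_congr rfl (fun i _ => hνA i)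
  -- real product lower bound
  set Lreal : ℝ := Real.exp (-9:ℝ) * Real.exp (-(6 * r ^ 2) - 1) ^ K * (1/2) with hLdef
  have hprod_real : ∀ n : ℕ, K ≤ n → Lreal ≤ ∏ k ∈ Finset.range (n+1), p k := by
    intro n hn
    have hsplit : (∏ k ∈ Finset.Ico 0 (K+1), p k) * ∏ k ∈ Finset.Ico (K+1) (n+1), p k
        = ∏ k ∈ Finset.range (n+1), p k := by
      rw [Finset.prod_Ico_consecutive _ (by omega) (by omega), Finset.range_eq_Ico]
    have hfirst : ∏ k ∈ Finset.Ico 0 (K+1), p k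
        = Real.exp (-9:ℝ) * Real.exp (-(6 * r ^ 2) - 1) ^ K := by
      have hsplit1 : (∏ k ∈ Finset.Ico 0 1, p k) * ∏ k ∈ Finset.Ico 1 (K+1), p k
          = ∏ k ∈ Finset.Ico 0 (K+1), p k :=
        Finset.prod_Ico_consecutive _ (by omega) (by omega)
      rw [← hsplit1]
      have h0 : ∏ k ∈ Finset.Ico 0 1, p k = Real.exp (-9:ℝ) := by
        rw [show Finset.Ico 0 1 = {0} by rfl, Finset.prod_singleton, hpdef]
        simp
      have h1 : ∏ k ∈ Finset.Ico 1 (K+1), p k = Real.exp (-(6 * r ^ 2) - 1) ^ K := by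
        have hval : ∀ k ∈ Finset.Ico 1 (K+1), p k = Real.exp (-(6 * r ^ 2) - 1) := by
          intro k hk
          rcases Finset.mem_Ico.1 hk with ⟨hk1, hk2⟩
          rw [hpdef]
          have hne : k ≠ 0 := by omega
          have hle : k ≤ K := by omega
          simp [hne, hle]
        rw [Finset.prod_congr rfl hval, Finset.prod_const, Nat.card_Ico]
        norm_num
      rw [h0, h1]
    have hsecond : (1/2:ℝ) ≤ ∏ k ∈ Finset.Ico (K+1) (n+1), p k := by
      have hp_eq : ∀ k ∈ Finset.Ico (K+1) (n+1), p k = 1 - Real.exp (-(k:ℝ)) := by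
        intro k hk
        rcases Finset.mem_Ico.1 hk with ⟨hk1, hk2⟩
        rw [hpdef]
        have h1 : k ≠ 0 := by omega
        have h2 : ¬ (k ≤ K) := by omega
        simp_all
      rw [Finset.prod_congr rfl hp_eq]
      have hge := prod_one_sub_ge (Finset.Ico (K+1) (n+1)) (fun k => Real.exp (-(k:ℝ)))
        (fun i _ => (Real.exp_pos _).le)
        (fun i _ => Real.exp_le_one_iff.2 (neg_nonpos.2 (Nat.cast_nonneg i)))
      have hsum_le : ∑ k ∈ Finset.Ico (K+1) (n+1), Real.exp (-(k:ℝ)) ≤ 1/2 := by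
        have hterm : ∀ k ∈ Finset.Ico (K+1) (n+1), Real.exp (-(k:ℝ)) ≤ (1/2:ℝ)^k := by
          intro k _
          have : Real.exp (-(k:ℝ)) = Real.exp (-1:ℝ) ^ k := by
            rw [← Real.exp_nat_mul]
            congr 1
            ring
          rw [this]
          exact pow_le_pow_left₀ (Real.exp_pos _).le he1 k
        calc ∑ k ∈ Finset.Ico (K+1) (n+1), Real.exp (-(k:ℝ))
            ≤ ∑ k ∈ Finset.Ico (K+1) (n+1), (1/2:ℝ)^k := Finset.sum_le_sum hterm
          _ ≤ (1/2:ℝ)^K := by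
              rw [Finset.sum_Ico_eq_sum_range]
              have : ∀ j, (1/2:ℝ)^(K+1+j) = (1/2:ℝ)^(K+1) * (1/2:ℝ)^j := by
                intro j
                rw [pow_add]
              rw [Finset.sum_congr rfl (fun j _ => this j), ← Finset.mul_sum]
              have hgs : ∑ j ∈ Finset.range (n+1-(K+1)), (1/2:ℝ)^j ≤ 2 := by
                have h2 := Summable.sum_le_tsum (Finset.range (n+1-(K+1)))
                  (fun j _ => by positivity)
                  (summable_geometric_of_lt_one (by norm_num) (by norm_num : (1/2:ℝ) < 1))
                rw [tsum_geometric_of_lt_one (by norm_num) (by norm_num)] at h2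
                norm_num at h2
                exact h2
              calc (1/2:ℝ)^(K+1) * ∑ j ∈ Finset.range (n+1-(K+1)), (1/2:ℝ)^j
                  ≤ (1/2:ℝ)^(K+1) * 2 := by
                    apply mul_le_mul_of_nonneg_left hgs (by positivity)
                _ = (1/2:ℝ)^K := by
                    rw [pow_succ]
                    ring
          _ ≤ 1/2 := by
              calc (1/2:ℝ)^K ≤ (1/2:ℝ)^1 :=
                    pow_le_pow_of_le_one (by norm_num) (by norm_num) hK1
                _ = 1/2 := by norm_num
      linarith
    calc Lreal = (Real.exp (-9:ℝ) * Real.exp (-(6 * r ^ 2) - 1) ^ K) * (1/2) := by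
          rw [hLdef]
      _ ≤ (∏ k ∈ Finset.Ico 0 (K+1), p k) * ∏ k ∈ Finset.Ico (K+1) (n+1), p k := by
          rw [hfirst]
          apply mul_le_mul_of_nonneg_left hsecond (by positivity)
      _ = ∏ k ∈ Finset.range (n+1), p k := hsplit
  -- ENNReal product bound
  have hprod_enn : ∀ n : ℕ, K ≤ n →
      ENNReal.ofReal Lreal ≤ ℙ (⋂ k ∈ Finset.range (n+1), A k) := by
    intro n hn
    rw [hSn n]
    calc ENNReal.ofReal Lreal ≤ ENNReal.ofReal (∏ k ∈ Finset.range (n+1), p k) :=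
          ENNReal.ofReal_le_ofReal (hprod_real n hn)
      _ = ∏ k ∈ Finset.range (n+1), ENNReal.ofReal (p k) :=
          ENNReal.ofReal_prod_of_nonneg (fun i _ => hp_nonneg i)
      _ ≤ ∏ k ∈ Finset.range (n+1), stdComplexGaussian (B k) :=
          Finset.prod_le_prod' (fun i _ => hp_le i)
  -- limit
  set S : ℕ → Set Ω := fun n => ⋂ k ∈ Finset.range (n+1), A k with hSdef
  have hanti : Antitone S := by
    intro m n hmn x hx
    simp only [hSdef, Set.mem_iInter] at hx ⊢
    intro k hk
    exact hx k (Finset.mem_range.2 (lt_of_lt_of_le (Finset.mem_range.1 hk) (by omega)))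
  have hSmeas : ∀ n, MeasurableSet (S n) := by
    intro n
    rw [hSdef]
    exact Finset.measurableSet_biInter _ (fun k _ => hAmeas k)
  have hEeq : (⋂ n, S n) = ⋂ k, A k := by
    ext x
    simp only [hSdef, Set.mem_iInter, Finset.mem_range]
    constructor
    · intro h k
      exact h k k (by omega)
    · intro h n k _
      exact h k
  have htend := tendsto_measure_iInter_atTop (μ := ℙ)
    (fun n => (hSmeas n).nullMeasurableSet) hanti ⟨0, measure_ne_top _ _⟩
  have hlim : ENNReal.ofReal Lreal ≤ ℙ (⋂ k, A k) := by
    rw [← hEeq]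
    apply ge_of_tendsto htend
    filter_upwards [Filter.eventually_ge_atTop K] with n hn
    exact hprod_enn n hn
  -- inclusion
  have hincl : (⋂ k, A k) ⊆
      {ω | ∀ z : ℂ, ‖z‖ ≤ r → psiFun (fun k => ζ k ω) z ≠ 0} := by
    intro ω hω
    simp only [Set.mem_iInter] at hω
    intro z hz
    apply psi_ne_zero r hr K hKge (fun k => ζ k ω) ?_ ?_ ?_ z hz
    · have h := hω 0
      rw [hAdef] at h
      simp only [Set.mem_preimage, hBdef, if_pos rfl] at h
      rw [Metric.mem_closedBall, Complex.dist_eq] at h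
      exact h
    · intro k hk1 hk2
      have h := hω k
      rw [hAdef] at h
      simp only [Set.mem_preimage, hBdef] at h
      rw [if_neg (by omega), if_pos hk2] at h
      rw [Metric.mem_closedBall, Complex.dist_eq, sub_zero] at h
      exact h
    · intro k hk
      have h := hω k
      rw [hAdef] at h
      simp only [Set.mem_preimage, hBdef] at h
      rw [if_neg (by omega), if_neg (by omega)] at h
      rw [Metric.mem_closedBall, Complex.dist_eq, sub_zero] at h
      exact h
  -- final numeric comparison
  have hfinal : Real.exp (-(100000:ℝ) * r ^ 4) ≤ Lreal := by
    have hKx : Real.exp (-(6 * r ^ 2) - 1) ^ K = Real.exp ((K:ℝ) * (-(6 * r ^ 2) - 1)) := by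
      rw [← Real.exp_nat_mul]
    have hhalf : Real.exp (-1:ℝ) ≤ 1/2 := he1
    calc Real.exp (-(100000:ℝ) * r ^ 4)
        ≤ Real.exp ((-9:ℝ) + (K:ℝ) * (-(6 * r ^ 2) - 1) + (-1:ℝ)) := by
          apply Real.exp_le_exp.2
          have hK0 : (0:ℝ) ≤ (K:ℝ) := Nat.cast_nonneg K
          nlinarith [sq_nonneg r, sq_nonneg (r^2), mul_le_mul_of_nonneg_left hr4 hK0]
      _ = Real.exp (-9:ℝ) * Real.exp ((K:ℝ) * (-(6 * r ^ 2) - 1)) * Real.exp (-1:ℝ) := by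
          rw [← Real.exp_add, ← Real.exp_add]
      _ ≤ Real.exp (-9:ℝ) * Real.exp ((K:ℝ) * (-(6 * r ^ 2) - 1)) * (1/2) := by
          apply mul_le_mul_of_nonneg_left hhalf (by positivity)
      _ = Lreal := by rw [hLdef, hKx]
  calc ℙ {ω | ∀ z : ℂ, ‖z‖ ≤ r → psiFun (fun k => ζ k ω) z ≠ 0}
      ≥ ℙ (⋂ k, A k) := measure_mono hincl
    _ ≥ ENNReal.ofReal Lreal := hlim
    _ ≥ ENNReal.ofReal (Real.exp (-(100000:ℝ) * r ^ 4)) := ENNReal.ofReal_le_ofReal hfinal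
end

section
/- For every δ ∈ (0, 1/4] there exists a constant c(δ) > 0 such that for every r ≥ 1, P( log M(r, ψ) ≤ (1/2 − δ) r² ) ≤ exp(−c(δ) r⁴). -/
set_option maxHeartbeats 1000000

open MeasureTheory ProbabilityTheory Metric NNReal ENNReal

/-- `M(r, f) = max_{|z| ≤ r} |f z|`. -/
noncomputable def maxAbs (f : ℂ → ℂ) (r : ℝ) : ℝ :=
  sSup ((fun z => ‖f z‖) '' closedBall (0 : ℂ) r)

lemma coeff_bound (a : ℕ → ℂ)
    (h : ∀ R : ℝ≥0, Summable fun k =>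
      ‖a k‖ / Real.sqrt (Nat.factorial k) * (R : ℝ) ^ k)
    {r y : ℝ} (hr : 0 < r) (hy : Real.log (maxAbs (psiFun a) r) ≤ y) (k : ℕ) :
    ‖a k‖ / Real.sqrt (Nat.factorial k) * r ^ k ≤ Real.exp y := by
  set c : ℕ → ℂ := fun k => a k / (Real.sqrt (Nat.factorial k) : ℂ) with hc
  set p : FormalMultilinearSeries ℂ ℂ ℂ := FormalMultilinearSeries.ofScalars ℂ c with hp
  have habs : ∀ n, ‖c n‖ = ‖a n‖ / Real.sqrt (Nat.factorial n) := by
    intro n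
    simp [hc, norm_div, Complex.norm_real, Real.norm_eq_abs,
      abs_of_nonneg (Real.sqrt_nonneg _)]
  have hnorm : ∀ n, ‖p n‖ = ‖a n‖ / Real.sqrt (Nat.factorial n) := by
    intro n
    rw [hp, FormalMultilinearSeries.ofScalars_norm, habs]
  have hrad : p.radius = ⊤ := by
    apply FormalMultilinearSeries.radius_eq_top_of_summable_norm
    intro R
    simpa only [hnorm] using h R
  have hsum_eq : p.sum = psiFun a := by
    funext z
    rw [FormalMultilinearSeries.sum, psiFun]
    refine tsum_congr fun n => ?_
    rw [hp, FormalMultilinearSeries.ofScalars_apply_eq]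
    simp [hc, smul_eq_mul, div_mul_eq_mul_div]
  have hball : HasFPowerSeriesOnBall (psiFun a) p 0 ⊤ := by
    have := p.hasFPowerSeriesOnBall (by rw [hrad]; exact ENNReal.zero_lt_top)
    rwa [hrad, hsum_eq] at this
  have hdiff : Differentiable ℂ (psiFun a) := by
    have := hball.differentiableOn
    rw [Metric.emetric_ball_top] at this
    rw [← differentiableOn_univ]; exact this
  -- bound on the closed ball
  have hfC : ∀ z ∈ closedBall (0 : ℂ) r, ‖psiFun a z‖ ≤ Real.exp y := by
    intro z hz
    have hbdd : BddAbove ((fun z => ‖psiFun a z‖) '' closedBall (0 : ℂ) r) :=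
      ((isCompact_closedBall (0 : ℂ) r).image
        (continuous_norm.comp hdiff.continuous)).bddAbove
    have hle : ‖psiFun a z‖ ≤ maxAbs (psiFun a) r :=
      le_csSup hbdd ⟨z, hz, rfl⟩
    rcases le_or_gt (maxAbs (psiFun a) r) 0 with hM | hM
    · exact hle.trans (hM.trans (Real.exp_pos y).le)
    · calc ‖psiFun a z‖ ≤ maxAbs (psiFun a) r := hle
        _ = Real.exp (Real.log (maxAbs (psiFun a) r)) := (Real.exp_log hM).symm
        _ ≤ Real.exp y := Real.exp_le_exp.2 hy
  set R : ℝ≥0 := ⟨r, hr.le⟩ with hR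
  have hRpos : 0 < R := by exact_mod_cast hr
  have h2 : HasFPowerSeriesOnBall (psiFun a) (cauchyPowerSeries (psiFun a) 0 R) 0 R :=
    (hdiff.differentiableOn).hasFPowerSeriesOnBall hRpos
  have hpq : p = cauchyPowerSeries (psiFun a) 0 R :=
    hball.hasFPowerSeriesAt.eq_formalMultilinearSeries h2.hasFPowerSeriesAt
  have hcont : Continuous fun θ : ℝ => ‖psiFun a (circleMap 0 R θ)‖ :=
    (hdiff.continuous.comp (continuous_circleMap 0 R)).norm
  have hIle : (∫ θ : ℝ in (0)..2 * Real.pi, ‖psiFun a (circleMap 0 R θ)‖)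
      ≤ 2 * Real.pi * Real.exp y := by
    have : (∫ θ : ℝ in (0)..2 * Real.pi, ‖psiFun a (circleMap 0 R θ)‖)
        ≤ ∫ _θ : ℝ in (0)..2 * Real.pi, Real.exp y := by
      refine intervalIntegral.integral_mono_on Real.two_pi_pos.le
        (hcont.intervalIntegrable 0 (2 * Real.pi)) intervalIntegrable_const fun θ _ => ?_
      refine hfC _ ?_
      simp [circleMap, Complex.norm_exp, hR, abs_of_nonneg hr.le, hr.le]; exact (abs_of_nonneg hr.le).le
    simpa using this.trans_eq (by rw [intervalIntegral.integral_const]; ring_nf)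
  have hnk := norm_cauchyPowerSeries_le (psiFun a) 0 (R : ℝ) k
  rw [← hpq] at hnk
  have habsR : |(R : ℝ)| = r := by rw [abs_of_nonneg]; rfl; exact hr.le
  rw [habsR] at hnk
  have hkey : ‖p k‖ * r ^ k ≤ Real.exp y := by
    have h3 := mul_le_mul_of_nonneg_right hnk (pow_nonneg hr.le k)
    have h4 : (2 * Real.pi)⁻¹ * (∫ θ : ℝ in (0)..2 * Real.pi,
        ‖psiFun a (circleMap 0 R θ)‖) * r⁻¹ ^ k * r ^ k
        = (2 * Real.pi)⁻¹ * ∫ θ : ℝ in (0)..2 * Real.pi, ‖psiFun a (circleMap 0 R θ)‖ := by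
      rw [mul_assoc, ← mul_pow, inv_mul_cancel₀ hr.ne', one_pow, mul_one]
    rw [h4] at h3
    refine h3.trans ?_
    calc (2 * Real.pi)⁻¹ * ∫ θ : ℝ in (0)..2 * Real.pi, ‖psiFun a (circleMap 0 R θ)‖
        ≤ (2 * Real.pi)⁻¹ * (2 * Real.pi * Real.exp y) :=
          mul_le_mul_of_nonneg_left hIle (by positivity)
      _ = Real.exp y := by field_simp
  rw [← hnorm k]
  exact hkey


lemma log_factorial_le (k : ℕ) (hk : 1 ≤ k) :
    Real.log (Nat.factorial k) ≤ k * Real.log k - k + 1 + Real.log k := by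
  induction k with
  | zero => omega
  | succ n ih =>
    rcases Nat.eq_or_lt_of_le hk with h1 | h1
    · simp [← h1]
    · have hn : 1 ≤ n := by omega
      have ihn := ih hn
      have hnpos : (0 : ℝ) < n := by exact_mod_cast hn
      have hn1pos : (0 : ℝ) < n + 1 := by linarith
      have hlog : Real.log ((n : ℝ) / (n + 1)) ≤ (n : ℝ) / (n + 1) - 1 :=
        Real.log_le_sub_one_of_pos (by positivity)
      rw [Real.log_div hnpos.ne' hn1pos.ne'] at hlog
      have hkey : Real.log (n + 1) - Real.log n ≥ 1 / (n + 1) := by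
        have : (n : ℝ) / (n + 1) - 1 = -(1 / (n + 1)) := by field_simp; ring
        rw [this] at hlog
        linarith
      have hfact : Real.log (Nat.factorial (n + 1))
          = Real.log (n + 1) + Real.log (Nat.factorial n) := by
        rw [Nat.factorial_succ]
        push_cast
        rw [Real.log_mul (by positivity) (by positivity)]
      rw [hfact]
      push_cast
      have hmul := mul_le_mul_of_nonneg_left hkey hn1pos.le
      have hone : ((n : ℝ) + 1) * (1 / (n + 1)) = 1 := by field_simp
      nlinarith [hmul, hone]

lemma eps_small {δ r : ℝ} (hδ : 0 < δ) (hδ4 : δ ≤ 1 / 4) (hr : 8 / δ ≤ r) {k : ℕ}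
    (hk1 : 1 ≤ k) (hlow : (1 - δ) * r ^ 2 ≤ k) (hhigh : (k : ℝ) ≤ r ^ 2) :
    Real.exp ((1 / 2 - δ) * r ^ 2) * Real.sqrt (Nat.factorial k) / r ^ k
      ≤ Real.exp (-(δ / 4) * r ^ 2) := by
  have hr8 : 8 ≤ δ * r := by
    rw [div_le_iff₀ hδ] at hr; linarith
  have hr32 : 32 ≤ r := by
    nlinarith
  have hrpos : (0 : ℝ) < r := by linarith
  have hkpos : (0 : ℝ) < k := by exact_mod_cast hk1
  have hfacpos : (0 : ℝ) < (Nat.factorial k : ℝ) := by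
    exact_mod_cast k.factorial_pos
  have hsqrt : Real.sqrt (Nat.factorial k)
      = Real.exp (Real.log (Nat.factorial k) / 2) := by
    rw [← Real.log_sqrt hfacpos.le, Real.exp_log (Real.sqrt_pos.2 hfacpos)]
  have hrk : (r : ℝ) ^ k = Real.exp (k * Real.log r) := by
    rw [← Real.log_pow, Real.exp_log (by positivity)]
  rw [hsqrt, hrk, ← Real.exp_add, ← Real.exp_sub, Real.exp_le_exp]
  -- arithmetic
  have hlf := log_factorial_le k hk1
  have hklog : (k : ℝ) * Real.log r = k / 2 * Real.log (r ^ 2) := by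
    rw [Real.log_pow]; push_cast; ring
  have hlogk : Real.log k ≤ Real.log (r ^ 2) := Real.log_le_log hkpos hhigh
  have hlogr : Real.log r ≤ r - 1 := by
    have := Real.log_le_sub_one_of_pos hrpos; linarith
  have hlogr2 : Real.log (r ^ 2) = 2 * Real.log r := by
    rw [Real.log_pow]; push_cast; ring
  have hklog2 : k / 2 * Real.log k ≤ k / 2 * Real.log (r ^ 2) :=
    mul_le_mul_of_nonneg_left hlogk (by positivity)
  have hlogk0 : 0 ≤ Real.log k := Real.log_nonneg (by exact_mod_cast hk1)
  nlinarith [hr8, hrpos, hlogr, hlow]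

/-- the gaussian-type integral over ℂ with half variance -/
lemma lintegral_half_gauss :
    (∫⁻ w : ℂ, ENNReal.ofReal (Real.exp (-‖w‖ ^ 2 / 2))) =
      ENNReal.ofReal (2 * Real.pi) := by
  have hmp := Complex.volume_preserving_equiv_real_prod
  have hcomp : (∫⁻ w : ℂ, ENNReal.ofReal (Real.exp (-‖w‖ ^ 2 / 2)))
      = ∫⁻ p : ℝ × ℝ, ENNReal.ofReal (Real.exp (-(p.1 ^ 2 + p.2 ^ 2) / 2)) := by
    rw [← hmp.lintegral_comp]
    · refine lintegral_congr fun z => ?_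
      congr 2
      have : ‖z‖ ^ 2 = z.re ^ 2 + z.im ^ 2 := by
        rw [Complex.sq_norm, Complex.normSq_apply]; ring
      rw [this]
      rfl
    · exact Measurable.ennreal_ofReal (by fun_prop)
  rw [hcomp]
  have hsplit : ∀ p : ℝ × ℝ, ENNReal.ofReal (Real.exp (-(p.1 ^ 2 + p.2 ^ 2) / 2))
      = ENNReal.ofReal (Real.exp (-(1 / 2) * p.1 ^ 2))
        * ENNReal.ofReal (Real.exp (-(1 / 2) * p.2 ^ 2)) := by
    intro p
    rw [← ENNReal.ofReal_mul (Real.exp_pos _).le, ← Real.exp_add]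
    ring_nf
  simp_rw [hsplit]
  have hprod := lintegral_prod_mul (μ := (volume : Measure ℝ)) (ν := (volume : Measure ℝ))
    (f := fun x : ℝ => ENNReal.ofReal (Real.exp (-(1 / 2) * x ^ 2)))
    (g := fun x : ℝ => ENNReal.ofReal (Real.exp (-(1 / 2) * x ^ 2)))
    (Measurable.ennreal_ofReal (by fun_prop)).aemeasurable
    (Measurable.ennreal_ofReal (by fun_prop)).aemeasurable
  rw [MeasureTheory.Measure.volume_eq_prod, hprod]
  have hone : (∫⁻ x : ℝ, ENNReal.ofReal (Real.exp (-(1 / 2) * x ^ 2)))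
      = ENNReal.ofReal (Real.sqrt (2 * Real.pi)) := by
    rw [← ofReal_integral_eq_lintegral_ofReal (integrable_exp_neg_mul_sq (by norm_num))
      (Filter.Eventually.of_forall fun x => (Real.exp_pos _).le)]
    rw [integral_gaussian]
    rw [show Real.pi / (1 / 2) = 2 * Real.pi by ring]
  rw [hone, ← ENNReal.ofReal_mul (Real.sqrt_nonneg _),
    Real.mul_self_sqrt (by positivity)]

lemma stdGauss_ball_le (ε : ℝ) :
    stdComplexGaussian (closedBall (0 : ℂ) ε) ≤ ENNReal.ofReal (ε ^ 2) := by
  rw [stdComplexGaussian, withDensity_apply _ measurableSet_closedBall]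
  calc (∫⁻ w in closedBall (0 : ℂ) ε,
        ENNReal.ofReal (Real.exp (-‖w‖ ^ 2) / Real.pi))
      ≤ ∫⁻ _w in closedBall (0 : ℂ) ε, ENNReal.ofReal (1 / Real.pi) := by
        refine setLIntegral_mono' measurableSet_closedBall fun w _ => ?_
        refine ENNReal.ofReal_le_ofReal ?_
        have h1 : Real.exp (-‖w‖ ^ 2) ≤ 1 :=
          Real.exp_le_one_iff.2 (neg_nonpos.2 (by positivity))
        exact (div_le_div_iff_of_pos_right Real.pi_pos).2 h1
    _ = ENNReal.ofReal (1 / Real.pi) * volume (closedBall (0 : ℂ) ε) := by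
        rw [setLIntegral_const]
    _ ≤ ENNReal.ofReal (ε ^ 2) := by
        rw [Complex.volume_closedBall]
        have hpi : (NNReal.pi : ℝ≥0∞) = ENNReal.ofReal Real.pi := by
          rw [← ENNReal.ofReal_coe_nnreal, NNReal.coe_real_pi]
        rcases le_or_gt ε 0 with hε | hε
        · rw [ENNReal.ofReal_eq_zero.2 hε]
          simp
        · rw [hpi, ← ENNReal.ofReal_pow hε.le, ← ENNReal.ofReal_mul (by positivity),
            ← ENNReal.ofReal_mul (by positivity)]
          refine le_of_eq (congrArg _ ?_)
          field_simp

lemma stdGauss_compl_le {t : ℝ} (ht : 0 ≤ t) :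
    stdComplexGaussian ((closedBall (0 : ℂ) t)ᶜ)
      ≤ ENNReal.ofReal (2 * Real.pi * Real.exp (-t ^ 2 / 2)) := by
  rw [stdComplexGaussian, withDensity_apply _ measurableSet_closedBall.compl]
  calc (∫⁻ w in (closedBall (0 : ℂ) t)ᶜ,
        ENNReal.ofReal (Real.exp (-‖w‖ ^ 2) / Real.pi))
      ≤ ∫⁻ w in (closedBall (0 : ℂ) t)ᶜ,
        ENNReal.ofReal (Real.exp (-t ^ 2 / 2)) * ENNReal.ofReal (Real.exp (-‖w‖ ^ 2 / 2)) := by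
        refine setLIntegral_mono' measurableSet_closedBall.compl fun w hw => ?_
        rw [← ENNReal.ofReal_mul (Real.exp_pos _).le, ← Real.exp_add]
        refine ENNReal.ofReal_le_ofReal ?_
        have hw' : t ≤ ‖w‖ := by
          simp only [Set.mem_compl_iff, mem_closedBall, Complex.dist_eq, sub_zero,
            not_le] at hw
          exact hw.le
        have h2 : ‖w‖ ^ 2 ≥ t ^ 2 := by nlinarith [norm_nonneg w]
        have h3 : Real.exp (-‖w‖ ^ 2) ≤ Real.exp (-t ^ 2 / 2 + -‖w‖ ^ 2 / 2) := by
          rw [Real.exp_le_exp]; linarith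
        calc Real.exp (-‖w‖ ^ 2) / Real.pi ≤ Real.exp (-‖w‖ ^ 2) / 1 := by
              refine div_le_div_of_nonneg_left (Real.exp_pos _).le one_pos ?_ |>.trans_eq rfl
              linarith [Real.pi_gt_three]
          _ = Real.exp (-‖w‖ ^ 2) := by rw [div_one]
          _ ≤ _ := h3
    _ ≤ ∫⁻ w : ℂ, ENNReal.ofReal (Real.exp (-t ^ 2 / 2)) * ENNReal.ofReal (Real.exp (-‖w‖ ^ 2 / 2)) :=
        setLIntegral_le_lintegral _ _
    _ = ENNReal.ofReal (Real.exp (-t ^ 2 / 2)) * ∫⁻ w : ℂ, ENNReal.ofReal (Real.exp (-‖w‖ ^ 2 / 2)) :=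
        lintegral_const_mul _ (Measurable.ennreal_ofReal (Continuous.measurable (by continuity)))
    _ = ENNReal.ofReal (2 * Real.pi * Real.exp (-t ^ 2 / 2)) := by
        rw [lintegral_half_gauss, ← ENNReal.ofReal_mul (Real.exp_pos _).le]
        ring_nf

lemma stdGauss_compl_ge {A : ℝ} (hA : 0 ≤ A) :
    ENNReal.ofReal (Real.exp (-(A + 3) ^ 2)) ≤ stdComplexGaussian ((closedBall (0 : ℂ) A)ᶜ) := by
  have hsub : closedBall ((A + 2 : ℝ) : ℂ) 1 ⊆ (closedBall (0 : ℂ) A)ᶜ := by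
    intro w hw
    simp only [mem_closedBall, Complex.dist_eq] at hw
    simp only [Set.mem_compl_iff, mem_closedBall, Complex.dist_eq, sub_zero, not_le]
    have h1 : ‖((A + 2 : ℝ) : ℂ)‖ ≤ ‖((A + 2 : ℝ) : ℂ) - w‖ + ‖w‖ := by
      simpa using norm_add_le (((A + 2 : ℝ) : ℂ) - w) w
    rw [norm_sub_rev] at h1
    have h2 : ‖((A + 2 : ℝ) : ℂ)‖ = A + 2 := by
      rw [Complex.norm_real, Real.norm_eq_abs, abs_of_nonneg (by linarith)]
    linarith [hw, h1, h2]
  calc ENNReal.ofReal (Real.exp (-(A + 3) ^ 2))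
      = ENNReal.ofReal (Real.exp (-(A + 3) ^ 2) / Real.pi) * volume (closedBall ((A + 2 : ℝ) : ℂ) 1) := by
        rw [Complex.volume_closedBall, ← ENNReal.ofReal_coe_nnreal, NNReal.coe_real_pi,
          ENNReal.ofReal_one, one_pow, one_mul, ← ENNReal.ofReal_mul (by positivity)]
        rw [div_mul_cancel₀ _ Real.pi_pos.ne']
    _ = ∫⁻ _w in closedBall ((A + 2 : ℝ) : ℂ) 1, ENNReal.ofReal (Real.exp (-(A + 3) ^ 2) / Real.pi) :=
        (setLIntegral_const _ _).symm
    _ ≤ ∫⁻ w in closedBall ((A + 2 : ℝ) : ℂ) 1,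
          ENNReal.ofReal (Real.exp (-‖w‖ ^ 2) / Real.pi) := by
        refine setLIntegral_mono' measurableSet_closedBall fun w hw => ?_
        refine ENNReal.ofReal_le_ofReal ?_
        have habs : ‖w‖ ≤ A + 3 := by
          simp only [mem_closedBall, Complex.dist_eq] at hw
          calc ‖w‖ = ‖w - ((A + 2 : ℝ) : ℂ) + ((A + 2 : ℝ) : ℂ)‖ := by ring_nf
            _ ≤ ‖w - ((A + 2 : ℝ) : ℂ)‖ + ‖((A + 2 : ℝ) : ℂ)‖ :=
                norm_add_le _ _
            _ ≤ 1 + (A + 2) := by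
                rw [Complex.norm_real, Real.norm_eq_abs, abs_of_nonneg (by linarith)]
                linarith
            _ = A + 3 := by ring
        have : ‖w‖ ^ 2 ≤ (A + 3) ^ 2 := by nlinarith [norm_nonneg w]
        have := Real.exp_le_exp.2 (neg_le_neg this)
        exact (div_le_div_iff_of_pos_right Real.pi_pos).2 this
    _ ≤ stdComplexGaussian ((closedBall (0 : ℂ) A)ᶜ) := by
        rw [stdComplexGaussian, withDensity_apply _ measurableSet_closedBall.compl]
        exact lintegral_mono_set hsub


lemma summable_aux {C : ℝ} (hC : 0 ≤ C) (R : ℝ) (hR : 0 ≤ R) :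
    Summable fun k : ℕ => (C + k) / Real.sqrt (Nat.factorial k) * R ^ k := by
  refine summable_of_ratio_norm_eventually_le (r := 1 / 2) (by norm_num) ?_
  filter_upwards [Filter.eventually_ge_atTop (max 1 ⌈16 * R ^ 2⌉₊)] with k hk
  have hk1 : 1 ≤ k := le_trans (le_max_left _ _) hk
  have hkR : 16 * R ^ 2 ≤ (k : ℝ) := by
    have := Nat.ceil_le.1 (le_trans (le_max_right _ _) hk)
    exact_mod_cast this
  have hkpos : (1 : ℝ) ≤ (k : ℝ) := by exact_mod_cast hk1
  have hfac : (0 : ℝ) < Real.sqrt (Nat.factorial k) := by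
    have : (0 : ℝ) < (Nat.factorial k : ℝ) := by exact_mod_cast k.factorial_pos
    positivity
  have hfac1 : (0 : ℝ) < Real.sqrt ((k : ℝ) + 1) := by positivity
  have hsqrtR : 4 * R ≤ Real.sqrt ((k : ℝ) + 1) := by
    have h1 : 4 * R = Real.sqrt ((4 * R) ^ 2) := (Real.sqrt_sq (by positivity)).symm
    rw [h1]
    exact Real.sqrt_le_sqrt (by nlinarith)
  have e1 : Real.sqrt (Nat.factorial (k + 1))
      = Real.sqrt ((k : ℝ) + 1) * Real.sqrt (Nat.factorial k) := by
    rw [Nat.factorial_succ, ← Real.sqrt_mul (by positivity)]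
    congr 1
    push_cast
    ring
  have key : (C + ((k : ℝ) + 1)) * R ≤ 1 / 2 * ((C + k) * Real.sqrt ((k : ℝ) + 1)) := by
    have h2 : C + ((k : ℝ) + 1) ≤ 2 * (C + k) := by linarith
    nlinarith [mul_le_mul h2 hsqrtR (by positivity) (by positivity)]
  have factored : (C + ((k : ℝ) + 1)) / Real.sqrt (Nat.factorial (k + 1)) * R ^ (k + 1)
      = ((C + ((k : ℝ) + 1)) * R / Real.sqrt ((k : ℝ) + 1))
        * (R ^ k / Real.sqrt (Nat.factorial k)) := by
    rw [e1, pow_succ]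
    field_simp
  have hfactor : (C + ((k : ℝ) + 1)) * R / Real.sqrt ((k : ℝ) + 1) ≤ 1 / 2 * (C + k) := by
    rw [div_le_iff₀ hfac1]
    calc (C + ((k : ℝ) + 1)) * R ≤ 1 / 2 * ((C + k) * Real.sqrt ((k : ℝ) + 1)) := key
      _ = 1 / 2 * (C + k) * Real.sqrt ((k : ℝ) + 1) := by ring
  rw [Real.norm_of_nonneg (by positivity), Real.norm_of_nonneg (by positivity)]
  push_cast
  rw [factored]
  calc ((C + ((k : ℝ) + 1)) * R / Real.sqrt ((k : ℝ) + 1))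
        * (R ^ k / Real.sqrt (Nat.factorial k))
      ≤ (1 / 2 * (C + k)) * (R ^ k / Real.sqrt (Nat.factorial k)) :=
        mul_le_mul_of_nonneg_right hfactor (by positivity)
    _ = 1 / 2 * ((C + k) / Real.sqrt (Nat.factorial k) * R ^ k) := by ring

lemma summable_coeff {b : ℕ → ℝ} (hb : ∀ k, 0 ≤ b k) {C : ℝ} (hC : 0 ≤ C)
    (h : ∀ k, b k ≤ C + k) (R : ℝ) (hR : 0 ≤ R) :
    Summable fun k : ℕ => b k / Real.sqrt (Nat.factorial k) * R ^ k := by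
  refine Summable.of_nonneg_of_le (fun k => ?_) (fun k => ?_) (summable_aux hC R hR)
  · have hfac : (0 : ℝ) < Real.sqrt (Nat.factorial k) := by
      have : (0 : ℝ) < (Nat.factorial k : ℝ) := by exact_mod_cast k.factorial_pos
      positivity
    exact mul_nonneg (div_nonneg (hb k) hfac.le) (pow_nonneg hR k)
  · have hfac : (0 : ℝ) < Real.sqrt (Nat.factorial k) := by
      have : (0 : ℝ) < (Nat.factorial k : ℝ) := by exact_mod_cast k.factorial_pos
      positivity
    exact mul_le_mul_of_nonneg_right
      ((div_le_div_iff_of_pos_right hfac).2 (h k)) (by positivity)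


theorem log_max_lower_large_deviations
    {Ω : Type*} [MeasureSpace Ω] [IsProbabilityMeasure (ℙ : Measure Ω)]
    (ζ : ℕ → Ω → ℂ) (hmeas : ∀ k, Measurable (ζ k))
    (hindep : iIndepFun ζ ℙ)
    (hdist : ∀ k, Measure.map (ζ k) ℙ = stdComplexGaussian) :
    ∀ δ : ℝ, δ ∈ Set.Ioc (0 : ℝ) (1 / 4) → ∃ c > (0 : ℝ), ∀ r : ℝ, 1 ≤ r →
      ℙ {ω | Real.log (maxAbs (psiFun (fun k => ζ k ω)) r) ≤ (1 / 2 - δ) * r ^ 2}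
        ≤ ENNReal.ofReal (Real.exp (-c * r ^ 4)) := by
  classical
  intro δ hδ
  obtain ⟨hδ0, hδ4⟩ := hδ
  have hGuniv : stdComplexGaussian Set.univ = 1 := by
    rw [← hdist 0, Measure.map_apply (hmeas 0) MeasurableSet.univ, Set.preimage_univ,
      measure_univ]
  -- the good set of full measure
  set Gd : Set Ω := {ω | ∀ R : ℝ≥0, Summable fun k =>
      ‖ζ k ω‖ / Real.sqrt (Nat.factorial k) * (R : ℝ) ^ k} with hGddef
  have hGdnull : ℙ Gdᶜ = 0 := by
    set s : ℕ → Set Ω := fun k => ζ k ⁻¹' (closedBall (0 : ℂ) (k : ℝ))ᶜ with hsdef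
    have hPs : ∀ k, ℙ (s k) ≤ ENNReal.ofReal (2 * Real.pi * Real.exp (-(k : ℝ) ^ 2 / 2)) := by
      intro k
      have heq : ℙ (s k) = stdComplexGaussian ((closedBall (0 : ℂ) (k : ℝ))ᶜ) := by
        rw [hsdef, ← hdist k, Measure.map_apply (hmeas k) measurableSet_closedBall.compl]
      rw [heq]
      exact stdGauss_compl_le (Nat.cast_nonneg k)
    have hsummable : Summable fun k : ℕ => 2 * Real.pi * Real.exp (-(k : ℝ) ^ 2 / 2) := by
      have hgeo : Summable fun k : ℕ => 2 * Real.pi * Real.exp (-(1 : ℝ) / 2) ^ k :=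
        (summable_geometric_of_lt_one (Real.exp_pos _).le
          (Real.exp_lt_one_iff.2 (by norm_num : -(1 : ℝ) / 2 < 0))).mul_left (2 * Real.pi)
      refine Summable.of_nonneg_of_le (fun k => by positivity) (fun k => ?_) hgeo
      have hk2 : (k : ℝ) ≤ (k : ℝ) ^ 2 := by
        have h := Nat.le_self_pow (two_ne_zero) k
        exact_mod_cast h
      have hexp : Real.exp (-(k : ℝ) ^ 2 / 2) ≤ Real.exp (-(1 : ℝ) / 2) ^ k := by
        rw [← Real.exp_nat_mul, Real.exp_le_exp]
        push_cast
        linarith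
      exact mul_le_mul_of_nonneg_left hexp (by positivity)
    have hsum : (∑' k, ℙ (s k)) ≠ ⊤ := by
      refine ne_top_of_le_ne_top ?_ (ENNReal.tsum_le_tsum hPs)
      rw [← ENNReal.ofReal_tsum_of_nonneg (fun k => by positivity) hsummable]
      exact ENNReal.ofReal_ne_top
    refine measure_mono_null ?_ (measure_limsup_atTop_eq_zero hsum)
    intro ω hω
    by_contra hcon
    apply hω
    rw [Filter.mem_limsup_iff_frequently_mem] at hcon
    have hev : ∀ᶠ k in Filter.atTop, ‖ζ k ω‖ ≤ (k : ℝ) := by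
      have := Filter.not_frequently.1 hcon
      filter_upwards [this] with k hk
      have : ζ k ω ∈ closedBall (0 : ℂ) (k : ℝ) := by
        by_contra hmem
        exact hk hmem
      simpa [Complex.dist_eq] using this
    obtain ⟨K, hK⟩ := Filter.eventually_atTop.1 hev
    intro R
    have hCnn : (0 : ℝ) ≤ ∑ j ∈ Finset.range K, ‖ζ j ω‖ :=
      Finset.sum_nonneg fun j _ => (norm_nonneg _)
    refine summable_coeff (fun k => norm_nonneg _) hCnn (fun k => ?_) _ R.coe_nonneg
    rcases lt_or_ge k K with hk | hk
    · have h1 : ‖ζ k ω‖ ≤ ∑ j ∈ Finset.range K, ‖ζ j ω‖ :=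
        Finset.single_le_sum (f := fun j => ‖ζ j ω‖)
          (fun j _ => norm_nonneg _) (Finset.mem_range.2 hk)
      have h2 : (0 : ℝ) ≤ (k : ℝ) := Nat.cast_nonneg k
      linarith
    · have h1 := hK k hk
      linarith
  -- constants
  set r₀ : ℝ := 8 / δ with hr₀def
  have hr₀pos : 0 < r₀ := by positivity
  have hr₀32 : 32 ≤ r₀ := by
    rw [hr₀def, le_div_iff₀ hδ0]; linarith
  set A : ℝ := Real.exp (r₀ ^ 2 / 2) with hAdef
  have hApos : 0 < A := Real.exp_pos _
  set t₀ : ℝ := Real.exp (-(A + 3) ^ 2) with ht₀def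
  have ht₀pos : 0 < t₀ := Real.exp_pos _
  have ht₀lt : t₀ < 1 := by
    rw [ht₀def, Real.exp_lt_one_iff]
    nlinarith
  set b : ℝ := -Real.log (1 - t₀) with hbdef
  have hbpos : 0 < b := by
    have h1 : 0 < 1 - t₀ := by linarith
    have h2 : Real.log (1 - t₀) < 0 := Real.log_neg h1 (by linarith)
    rw [hbdef]; linarith
  set c : ℝ := min (δ ^ 2 / 4) (b / r₀ ^ 4) with hcdef
  have hcpos : 0 < c := lt_min (by positivity) (by positivity)
  refine ⟨c, hcpos, ?_⟩
  intro r hr1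
  have hrpos : (0 : ℝ) < r := by linarith
  set E : Set Ω := {ω | Real.log (maxAbs (psiFun (fun k => ζ k ω)) r) ≤ (1 / 2 - δ) * r ^ 2}
    with hEdef
  have hsplit : ℙ E ≤ ℙ (E ∩ Gd) := by
    have hsub : E ⊆ (E ∩ Gd) ∪ Gdᶜ := by
      intro ω hω
      by_cases h : ω ∈ Gd
      · exact Or.inl ⟨hω, h⟩
      · exact Or.inr h
    calc ℙ E ≤ ℙ ((E ∩ Gd) ∪ Gdᶜ) := measure_mono hsub
      _ ≤ ℙ (E ∩ Gd) + ℙ Gdᶜ := measure_union_le _ _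
      _ = ℙ (E ∩ Gd) := by rw [hGdnull, add_zero]
  have key : ∀ ω ∈ E ∩ Gd, ∀ k : ℕ,
      ‖ζ k ω‖ / Real.sqrt (Nat.factorial k) * r ^ k
        ≤ Real.exp ((1 / 2 - δ) * r ^ 2) := by
    intro ω hω k
    exact coeff_bound (fun k => ζ k ω) hω.2 hrpos hω.1 k
  rcases lt_or_ge r r₀ with hsmall | hlarge
  · -- small r: use coefficient 0
    have hsubset : E ∩ Gd ⊆ ζ 0 ⁻¹' closedBall (0 : ℂ) A := by
      intro ω hω
      have h0 := key ω hω 0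
      simp only [Nat.factorial_zero, Nat.cast_one, Real.sqrt_one, div_one, pow_zero,
        mul_one] at h0
      have h2 : Real.exp ((1 / 2 - δ) * r ^ 2) ≤ A := by
        rw [hAdef, Real.exp_le_exp]
        nlinarith [sq_nonneg r, sq_nonneg r₀]
      simp only [Set.mem_preimage, mem_closedBall, Complex.dist_eq, sub_zero]
      exact h0.trans h2
    have hmapped : ℙ (ζ 0 ⁻¹' closedBall (0 : ℂ) A) = stdComplexGaussian (closedBall (0 : ℂ) A) := by
      rw [← hdist 0, Measure.map_apply (hmeas 0) measurableSet_closedBall]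
    have hballbound : stdComplexGaussian (closedBall (0 : ℂ) A)
        ≤ ENNReal.ofReal (Real.exp (-c * r ^ 4)) := by
      have h1 : stdComplexGaussian (closedBall (0 : ℂ) A) + ENNReal.ofReal t₀ ≤ 1 := by
        calc stdComplexGaussian (closedBall (0 : ℂ) A) + ENNReal.ofReal t₀
            ≤ stdComplexGaussian (closedBall (0 : ℂ) A)
              + stdComplexGaussian ((closedBall (0 : ℂ) A)ᶜ) := by
              exact add_le_add_right (ht₀def ▸ stdGauss_compl_ge hApos.le) _
          _ = stdComplexGaussian Set.univ := measure_add_measure_compl measurableSet_closedBall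
          _ = 1 := hGuniv
      have h2 : (1 : ℝ≥0∞) ≤ ENNReal.ofReal (Real.exp (-c * r ^ 4)) + ENNReal.ofReal t₀ := by
        rw [← ENNReal.ofReal_add (by positivity) (by positivity), ← ENNReal.ofReal_one]
        refine ENNReal.ofReal_le_ofReal ?_
        have h3 : 1 - t₀ = Real.exp (-b) := by
          rw [hbdef, neg_neg, Real.exp_log (by linarith)]
        have hcr : c * r ^ 4 ≤ b := by
          have hc2 : c ≤ b / r₀ ^ 4 := min_le_right _ _
          have hr4 : r ^ 4 ≤ r₀ ^ 4 := by
            refine pow_le_pow_left₀ hrpos.le hsmall.le 4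
          calc c * r ^ 4 ≤ (b / r₀ ^ 4) * r₀ ^ 4 := by
                refine mul_le_mul hc2 hr4 (by positivity) (by positivity)
            _ = b := by field_simp
        have h4 : Real.exp (-b) ≤ Real.exp (-c * r ^ 4) := by
          rw [Real.exp_le_exp]; linarith
        linarith
      calc stdComplexGaussian (closedBall (0 : ℂ) A)
          ≤ stdComplexGaussian (closedBall (0 : ℂ) A) := le_rfl
        _ ≤ ENNReal.ofReal (Real.exp (-c * r ^ 4)) := by
            rw [← ENNReal.add_le_add_iff_right (a := ENNReal.ofReal t₀) ENNReal.ofReal_ne_top]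
            exact h1.trans h2
    calc ℙ E ≤ ℙ (E ∩ Gd) := hsplit
      _ ≤ ℙ (ζ 0 ⁻¹' closedBall (0 : ℂ) A) := measure_mono hsubset
      _ = stdComplexGaussian (closedBall (0 : ℂ) A) := hmapped
      _ ≤ ENNReal.ofReal (Real.exp (-c * r ^ 4)) := hballbound
  · -- large r: use many coefficients
    have hr8 : 8 ≤ δ * r := by
      rw [hr₀def, div_le_iff₀ hδ0] at hlarge; linarith
    have hr32 : 32 ≤ r := le_trans hr₀32 hlarge
    have hδr2 : 256 ≤ δ * r ^ 2 := by nlinarith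
    set n₀ : ℕ := ⌈(1 - δ) * r ^ 2⌉₊ with hn₀def
    set n₁ : ℕ := ⌊r ^ 2⌋₊ + 1 with hn₁def
    set S : Finset ℕ := Finset.Ico n₀ n₁ with hSdef
    set ε : ℝ := Real.exp (-(δ / 4) * r ^ 2) with hεdef
    have hn₀low : ((1 : ℝ) - δ) * r ^ 2 ≤ n₀ := Nat.le_ceil _
    have hn₀up : (n₀ : ℝ) < (1 - δ) * r ^ 2 + 1 :=
      Nat.ceil_lt_add_one (by nlinarith)
    have hn₁low : r ^ 2 < (n₁ : ℝ) := by
      rw [hn₁def]; push_cast; exact Nat.lt_floor_add_one _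
    have hn₀n₁ : n₀ ≤ n₁ := by
      have : (n₀ : ℝ) < (n₁ : ℝ) := by nlinarith
      exact_mod_cast this.le
    have hcard : δ * r ^ 2 / 2 ≤ (S.card : ℝ) := by
      rw [hSdef, Nat.card_Ico, Nat.cast_sub hn₀n₁]
      nlinarith
    have hsubset : E ∩ Gd ⊆ ⋂ k ∈ S, ζ k ⁻¹' closedBall (0 : ℂ) ε := by
      intro ω hω
      rw [Set.mem_iInter₂]
      intro k hk
      rw [hSdef, Finset.mem_Ico] at hk
      have hk1 : 1 ≤ k := by
        have : 0 < n₀ := Nat.ceil_pos.2 (by nlinarith)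
        omega
      have hklow : (1 - δ) * r ^ 2 ≤ (k : ℝ) := by
        refine hn₀low.trans ?_
        exact_mod_cast hk.1
      have hkhigh : (k : ℝ) ≤ r ^ 2 := by
        have h1 : k ≤ ⌊r ^ 2⌋₊ := by omega
        calc (k : ℝ) ≤ (⌊r ^ 2⌋₊ : ℝ) := by exact_mod_cast h1
          _ ≤ r ^ 2 := Nat.floor_le (by positivity)
      have hfac : (0 : ℝ) < Real.sqrt (Nat.factorial k) := by
        have : (0 : ℝ) < (Nat.factorial k : ℝ) := by exact_mod_cast k.factorial_pos
        positivity
      have hrk : (0 : ℝ) < r ^ k := by positivity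
      have hkey := key ω hω k
      have habs : ‖ζ k ω‖
          ≤ Real.exp ((1 / 2 - δ) * r ^ 2) * Real.sqrt (Nat.factorial k) / r ^ k := by
        rw [le_div_iff₀ hrk]
        calc ‖ζ k ω‖ * r ^ k
            = ‖ζ k ω‖ / Real.sqrt (Nat.factorial k) * r ^ k
              * Real.sqrt (Nat.factorial k) := by field_simp
          _ ≤ Real.exp ((1 / 2 - δ) * r ^ 2) * Real.sqrt (Nat.factorial k) :=
              mul_le_mul_of_nonneg_right hkey hfac.le
      have hlarge' : 8 / δ ≤ r := by rw [← hr₀def]; exact hlarge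
      have heps := eps_small hδ0 hδ4 hlarge' hk1 hklow hkhigh
      simp only [Set.mem_preimage, mem_closedBall, Complex.dist_eq, sub_zero]
      rw [hεdef]
      exact habs.trans heps
    have hprod : ℙ (⋂ k ∈ S, ζ k ⁻¹' closedBall (0 : ℂ) ε)
        = ∏ k ∈ S, ℙ (ζ k ⁻¹' closedBall (0 : ℂ) ε) :=
      hindep.meas_biInter fun k _ => ⟨closedBall (0 : ℂ) ε, measurableSet_closedBall, rfl⟩
    have heach : ∀ k, ℙ (ζ k ⁻¹' closedBall (0 : ℂ) ε)
        ≤ ENNReal.ofReal (Real.exp (-(δ / 2) * r ^ 2)) := by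
      intro k
      have heq : ℙ (ζ k ⁻¹' closedBall (0 : ℂ) ε) = stdComplexGaussian (closedBall (0 : ℂ) ε) := by
        rw [← hdist k, Measure.map_apply (hmeas k) measurableSet_closedBall]
      rw [heq]
      refine (stdGauss_ball_le ε).trans_eq ?_
      congr 1
      rw [hεdef, sq, ← Real.exp_add]
      ring_nf
    calc ℙ E ≤ ℙ (E ∩ Gd) := hsplit
      _ ≤ ℙ (⋂ k ∈ S, ζ k ⁻¹' closedBall (0 : ℂ) ε) := measure_mono hsubset
      _ = ∏ k ∈ S, ℙ (ζ k ⁻¹' closedBall (0 : ℂ) ε) := hprod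
      _ ≤ ∏ _k ∈ S, ENNReal.ofReal (Real.exp (-(δ / 2) * r ^ 2)) :=
          Finset.prod_le_prod' fun k _ => heach k
      _ = ENNReal.ofReal (Real.exp (-(δ / 2) * r ^ 2)) ^ S.card := Finset.prod_const _
      _ = ENNReal.ofReal (Real.exp (-(δ / 2) * r ^ 2) ^ S.card) :=
          (ENNReal.ofReal_pow (Real.exp_pos _).le _).symm
      _ = ENNReal.ofReal (Real.exp ((S.card : ℝ) * (-(δ / 2) * r ^ 2))) := by
          rw [Real.exp_nat_mul]
      _ ≤ ENNReal.ofReal (Real.exp (-c * r ^ 4)) := by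
          refine ENNReal.ofReal_le_ofReal (Real.exp_le_exp.2 ?_)
          have hc1 : c ≤ δ ^ 2 / 4 := min_le_left _ _
          nlinarith [mul_le_mul_of_nonneg_right hcard (show (0 : ℝ) ≤ δ / 2 * r ^ 2 by positivity),
            mul_le_mul_of_nonneg_right hc1 (show (0 : ℝ) ≤ r ^ 4 by positivity)]
end

section
/- There is an absolute constant C > 0 with the following property. Let δ ∈ (0, 1/4], r ≥ 1, κ = 1 − δ^{1/4}, N = ⌊2π/δ⌋, and z_j = κ r exp(2πij/N) for j = 0, 1, ..., N−1. Let ζ_0, ..., ζ_{N−1} be any points of ℂ with |ζ_j − z_j| ≤ δ r for each j. Then max over z with |z| = r of | (1/N) Σ_{j=0}^{N−1} P(z, ζ_j) − 1 | ≤ C δ^{1/2}, where P(z, ζ) = (r² − |ζ|²)/|z − ζ|² is the Poisson kernel of the disk {|w| < r}. -/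
open Finset

lemma poisson_re (z c : ℂ) :
    (‖z‖ ^ 2 - ‖c‖ ^ 2) / ‖z - c‖ ^ 2 =
      ((z + c) / (z - c)).re := by
  rw [Complex.div_re, ← add_div, Complex.sq_norm, Complex.sq_norm, Complex.sq_norm]
  congr 1
  simp only [Complex.normSq_apply, Complex.add_re, Complex.add_im, Complex.sub_re,
    Complex.sub_im]
  ring

lemma key_sum (n : ℕ) (hn : 0 < n) (w z : ℂ) (h : z ^ n ≠ w ^ n) :
    ∑ j ∈ Finset.range n,
        (z + w * Complex.exp (((2 * Real.pi * j / n : ℝ) : ℂ) * Complex.I)) /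
          (z - w * Complex.exp (((2 * Real.pi * j / n : ℝ) : ℂ) * Complex.I)) =
      n + 2 * n * w ^ n / (z ^ n - w ^ n) := by
  set ζ : ℂ := Complex.exp (2 * Real.pi * Complex.I / n) with hζdef
  have hζ : IsPrimitiveRoot ζ n := Complex.isPrimitiveRoot_exp n hn.ne'
  have he : ∀ j : ℕ, Complex.exp (((2 * Real.pi * j / n : ℝ) : ℂ) * Complex.I) = ζ ^ j := by
    intro j
    rw [hζdef, ← Complex.exp_nat_mul]
    congr 1
    push_cast
    ring
  have hcn : ∀ j : ℕ, (w * ζ ^ j) ^ n = w ^ n := by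
    intro j
    rw [mul_pow, ← pow_mul, mul_comm j n, pow_mul, hζ.pow_eq_one, one_pow, mul_one]
  have hzc : ∀ j : ℕ, z - w * ζ ^ j ≠ 0 := by
    intro j hc
    apply h
    rw [sub_eq_zero] at hc
    rw [hc, hcn]
  have hzw : z ^ n - w ^ n ≠ 0 := sub_ne_zero.mpr h
  have hterm : ∀ j ∈ Finset.range n,
      (z + w * ζ ^ j) / (z - w * ζ ^ j) =
        1 + 2 * ((w * ζ ^ j) * ∑ k ∈ Finset.range n, (w * ζ ^ j) ^ k * z ^ (n - 1 - k)) /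
          (z ^ n - w ^ n) := by
    intro j _
    have hg : (∑ k ∈ Finset.range n, (w * ζ ^ j) ^ k * z ^ (n - 1 - k)) * ((w * ζ ^ j) - z)
        = (w * ζ ^ j) ^ n - z ^ n := geom_sum₂_mul _ _ n
    rw [hcn j] at hg
    have h2 : 1 + 2 * ((w * ζ ^ j) * ∑ k ∈ Finset.range n, (w * ζ ^ j) ^ k * z ^ (n - 1 - k)) /
          (z ^ n - w ^ n)
        = ((z ^ n - w ^ n) + 2 * ((w * ζ ^ j) * ∑ k ∈ Finset.range n,
            (w * ζ ^ j) ^ k * z ^ (n - 1 - k))) / (z ^ n - w ^ n) := by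
      field_simp
    rw [h2, div_eq_div_iff (hzc j) hzw]
    linear_combination (2 * (w * ζ ^ j)) * hg
  calc ∑ j ∈ Finset.range n,
        (z + w * Complex.exp (((2 * Real.pi * j / n : ℝ) : ℂ) * Complex.I)) /
          (z - w * Complex.exp (((2 * Real.pi * j / n : ℝ) : ℂ) * Complex.I))
      = ∑ j ∈ Finset.range n, (z + w * ζ ^ j) / (z - w * ζ ^ j) := by
        refine Finset.sum_congr rfl fun j _ => ?_
        rw [he j]
    _ = ∑ j ∈ Finset.range n,
        (1 + 2 * ((w * ζ ^ j) * ∑ k ∈ Finset.range n, (w * ζ ^ j) ^ k * z ^ (n - 1 - k)) /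
          (z ^ n - w ^ n)) := Finset.sum_congr rfl hterm
    _ = n + 2 * n * w ^ n / (z ^ n - w ^ n) := by
        rw [Finset.sum_add_distrib, Finset.sum_const, Finset.card_range, nsmul_eq_mul, mul_one]
        congr 1
        rw [← Finset.sum_div]
        congr 1
        have step1 : ∀ j ∈ Finset.range n,
            2 * ((w * ζ ^ j) * ∑ k ∈ Finset.range n, (w * ζ ^ j) ^ k * z ^ (n - 1 - k))
              = ∑ k ∈ Finset.range n, (w * ζ ^ j) ^ (k + 1) * (2 * z ^ (n - 1 - k)) := by
          intro j _
          rw [Finset.mul_sum, Finset.mul_sum]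
          exact Finset.sum_congr rfl fun k _ => by ring
        rw [Finset.sum_congr rfl step1, Finset.sum_comm]
        have hpow : ∀ k j : ℕ, (w * ζ ^ j) ^ (k + 1) = w ^ (k + 1) * (ζ ^ (k + 1)) ^ j := by
          intro k j
          rw [mul_pow, ← pow_mul, mul_comm j (k + 1), pow_mul]
        have hzero : ∀ k ∈ Finset.range n, k ≠ n - 1 →
            ∑ j ∈ Finset.range n, (w * ζ ^ j) ^ (k + 1) * (2 * z ^ (n - 1 - k)) = 0 := by
          intro k hk hkne
          rw [← Finset.sum_mul]
          have hsz : ∑ j ∈ Finset.range n, (w * ζ ^ j) ^ (k + 1) = 0 := by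
            have : ∑ j ∈ Finset.range n, (w * ζ ^ j) ^ (k + 1)
                = w ^ (k + 1) * ∑ j ∈ Finset.range n, (ζ ^ (k + 1)) ^ j := by
              rw [Finset.mul_sum]
              exact Finset.sum_congr rfl fun j _ => hpow k j
            rw [this]
            have hklt : k + 1 < n := by
              rcases Nat.lt_or_ge (k + 1) n with h' | h'
              · exact h'
              · exfalso
                apply hkne
                have := Finset.mem_range.mp hk
                omega
            have hx : ζ ^ (k + 1) ≠ 1 := hζ.pow_ne_one_of_pos_of_lt (Nat.succ_ne_zero k) hklt
            rw [geom_sum_eq hx]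
            have : (ζ ^ (k + 1)) ^ n = 1 := by
              rw [← pow_mul, mul_comm (k + 1) n, pow_mul, hζ.pow_eq_one, one_pow]
            rw [this, sub_self, zero_div, mul_zero]
          rw [hsz, zero_mul]
        have hsingle := Finset.sum_eq_single_of_mem (s := Finset.range n)
          (f := fun k => ∑ j ∈ Finset.range n, (w * ζ ^ j) ^ (k + 1) * (2 * z ^ (n - 1 - k)))
          (n - 1) (Finset.mem_range.mpr (Nat.pred_lt hn.ne')) hzero
        rw [hsingle]
        have hn1 : n - 1 + 1 = n := Nat.succ_pred_eq_of_pos hn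
        have hn0 : n - 1 - (n - 1) = 0 := Nat.sub_self _
        simp only [hn1, hn0, pow_zero, mul_one]
        calc ∑ j ∈ Finset.range n, (w * ζ ^ j) ^ n * 2
            = ∑ j ∈ Finset.range n, w ^ n * 2 :=
              Finset.sum_congr rfl fun j _ => by rw [hcn j]
          _ = 2 * n * w ^ n := by
              rw [Finset.sum_const, Finset.card_range, nsmul_eq_mul]; ring
lemma pert_bound (r a δ A B u v : ℝ)
    (hr : 0 < r) (ha : 0 < a)
    (hA : a * r / 2 ≤ A) (hB : a * r ≤ B)
    (hAB : |A - B| ≤ δ * r) (huv : |u - v| ≤ δ * r)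
    (hu0 : 0 ≤ u) (hv0 : 0 ≤ v) (hu : u ≤ r) (hv : v ≤ r)
    (hy0 : 0 ≤ r ^ 2 - v ^ 2) (hy : r ^ 2 - v ^ 2 ≤ 2 * a * r ^ 2) (hδ : 0 ≤ δ) :
    |(r ^ 2 - u ^ 2) / A ^ 2 - (r ^ 2 - v ^ 2) / B ^ 2| ≤ 20 * δ / a ^ 2 := by
  have hA0 : 0 < A := lt_of_lt_of_le (by positivity) hA
  have hB0 : 0 < B := lt_of_lt_of_le (by positivity) hB
  have hid : (r ^ 2 - u ^ 2) / A ^ 2 - (r ^ 2 - v ^ 2) / B ^ 2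
      = (v ^ 2 - u ^ 2) / A ^ 2 + ((r ^ 2 - v ^ 2) * ((B - A) * (B + A))) / (A ^ 2 * B ^ 2) := by
    field_simp
    ring
  have h1 : |(v ^ 2 - u ^ 2) / A ^ 2| ≤ 8 * δ / a ^ 2 := by
    rw [abs_div, abs_of_pos (by positivity : (0:ℝ) < A ^ 2)]
    rw [div_le_div_iff₀ (by positivity) (by positivity)]
    have hnum : |v ^ 2 - u ^ 2| ≤ 2 * δ * r ^ 2 := by
      have e : v ^ 2 - u ^ 2 = (v - u) * (v + u) := by ring
      rw [e, abs_mul]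
      have h1' : |v - u| ≤ δ * r := by rw [abs_sub_comm] at huv; exact huv
      have h2' : |v + u| ≤ 2 * r := by rw [abs_of_nonneg (by linarith)]; linarith
      calc |v - u| * |v + u| ≤ (δ * r) * (2 * r) :=
            mul_le_mul h1' h2' (abs_nonneg _) (by positivity)
        _ = 2 * δ * r ^ 2 := by ring
    -- goal : |v^2 - u^2| * a^2 ≤ 8 * δ * A^2
    have hA2 : a ^ 2 * r ^ 2 ≤ 4 * A ^ 2 := by nlinarith [mul_le_mul hA hA (by positivity : (0:ℝ) ≤ a * r / 2) hA0.le]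
    nlinarith [abs_nonneg (v ^ 2 - u ^ 2), sq_nonneg a]
  have h2 : |((r ^ 2 - v ^ 2) * ((B - A) * (B + A))) / (A ^ 2 * B ^ 2)| ≤ 12 * δ / a ^ 2 := by
    rw [abs_div, abs_of_pos (by positivity : (0:ℝ) < A ^ 2 * B ^ 2)]
    rw [div_le_div_iff₀ (by positivity) (by positivity)]
    -- goal : |num| * a^2 ≤ 12 * δ * (A^2 * B^2)
    have hnum : |(r ^ 2 - v ^ 2) * ((B - A) * (B + A))| ≤ (2 * a * r ^ 2) * ((δ * r) * (A + B)) := by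
      rw [abs_mul, abs_mul]
      have e1 : |r ^ 2 - v ^ 2| ≤ 2 * a * r ^ 2 := by rw [abs_of_nonneg hy0]; exact hy
      have e2 : |B - A| ≤ δ * r := by rw [abs_sub_comm] at hAB; exact hAB
      have e3 : |B + A| = A + B := by rw [abs_of_pos (by linarith)]; ring
      rw [e3]
      exact mul_le_mul e1 (mul_le_mul e2 le_rfl (by linarith) (by positivity))
        (mul_nonneg (abs_nonneg _) (by linarith)) (by positivity)
    have f1 : a * r ≤ 2 * A := by linarith
    -- a^3 r^3 ≤ 4 A^2 B  and  a^3 r^3 ≤ 2 A B^2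
    have g1 : (a * r) * (a * r) * (a * r) ≤ (2 * A) * (2 * A) * B :=
      mul_le_mul (mul_le_mul f1 f1 (by positivity) (by positivity)) hB (by positivity)
        (by positivity)
    have g2 : (a * r) * (a * r) * (a * r) ≤ (2 * A) * B * B :=
      mul_le_mul (mul_le_mul f1 hB (by positivity) (by positivity)) hB (by positivity)
        (by positivity)
    -- |num| * a^2 ≤ 2 a^3 r^3 δ (A+B) ≤ 2δ(4A^2B·B + 2AB^2·A)/... 
    nlinarith [abs_nonneg ((r ^ 2 - v ^ 2) * ((B - A) * (B + A))), sq_nonneg a,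
      mul_le_mul_of_nonneg_right g1 (mul_nonneg hδ hB0.le),
      mul_le_mul_of_nonneg_right g2 (mul_nonneg hδ hA0.le),
      mul_le_mul_of_nonneg_right hnum (sq_nonneg a)]
  calc |(r ^ 2 - u ^ 2) / A ^ 2 - (r ^ 2 - v ^ 2) / B ^ 2|
      ≤ |(v ^ 2 - u ^ 2) / A ^ 2| + |((r ^ 2 - v ^ 2) * ((B - A) * (B + A))) / (A ^ 2 * B ^ 2)| := by
        rw [hid]; exact abs_add_le _ _
    _ ≤ 8 * δ / a ^ 2 + 12 * δ / a ^ 2 := add_le_add h1 h2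
    _ = 20 * δ / a ^ 2 := by ring

lemma avg_bound (n : ℕ) (hn : 0 < n) (r κ : ℝ) (hr : 0 < r) (hκ0 : 0 ≤ κ) (hκ1 : κ < 1)
    (z : ℂ) (hz : ‖z‖ = r) :
    |(n : ℝ)⁻¹ * ∑ j ∈ Finset.range n,
        (r ^ 2 - ‖((κ * r : ℝ) : ℂ) *
            Complex.exp (((2 * Real.pi * j / n : ℝ) : ℂ) * Complex.I)‖ ^ 2) /
          ‖z - ((κ * r : ℝ) : ℂ) *
            Complex.exp (((2 * Real.pi * j / n : ℝ) : ℂ) * Complex.I)‖ ^ 2 - 1|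
      ≤ 2 * κ ^ n / (1 - κ ^ n) := by
  set w : ℂ := ((κ * r : ℝ) : ℂ) with hwdef
  have hn0' : (0 : ℝ) < n := Nat.cast_pos.mpr hn
  have habsw : ‖w‖ = κ * r := by
    rw [hwdef, Complex.norm_real, Real.norm_eq_abs, abs_of_nonneg (mul_nonneg hκ0 hr.le)]
  have hκn1 : κ ^ n < 1 := pow_lt_one₀ hκ0 hκ1 hn.ne'
  have hlt : (κ * r) ^ n < r ^ n := by
    apply pow_lt_pow_left₀ _ (mul_nonneg hκ0 hr.le) hn.ne'
    nlinarith
  have hzw : z ^ n ≠ w ^ n := by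
    intro hcon
    have h1 : ‖z ^ n‖ = ‖w ^ n‖ := by rw [hcon]
    rw [norm_pow, norm_pow, hz, habsw] at h1
    linarith [h1 ▸ hlt]
  have hkey := key_sum n hn w z hzw
  have hre : ∀ j ∈ Finset.range n,
      (r ^ 2 - ‖w * Complex.exp (((2 * Real.pi * j / n : ℝ) : ℂ) * Complex.I)‖ ^ 2) /
          ‖z - w * Complex.exp (((2 * Real.pi * j / n : ℝ) : ℂ) * Complex.I)‖ ^ 2
        = ((z + w * Complex.exp (((2 * Real.pi * j / n : ℝ) : ℂ) * Complex.I)) /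
            (z - w * Complex.exp (((2 * Real.pi * j / n : ℝ) : ℂ) * Complex.I))).re := by
    intro j _
    rw [← hz]
    exact poisson_re z _
  rw [Finset.sum_congr rfl hre, ← Complex.re_sum, hkey]
  rw [Complex.add_re, Complex.natCast_re]
  have hXre : (n : ℝ)⁻¹ * ((n : ℝ) + (2 * n * w ^ n / (z ^ n - w ^ n)).re) - 1
      = (n : ℝ)⁻¹ * (2 * (n : ℂ) * w ^ n / (z ^ n - w ^ n)).re := by
    field_simp
    ring
  rw [hXre]
  have hden : r ^ n * (1 - κ ^ n) ≤ ‖z ^ n - w ^ n‖ := by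
    have h1 : ‖z ^ n‖ - ‖w ^ n‖ ≤ ‖z ^ n - w ^ n‖ := norm_sub_norm_le _ _
    rw [norm_pow, norm_pow, hz, habsw] at h1
    calc r ^ n * (1 - κ ^ n) = r ^ n - (κ * r) ^ n := by rw [mul_pow]; ring
      _ ≤ _ := h1
  have hden0 : (0 : ℝ) < r ^ n * (1 - κ ^ n) :=
    mul_pos (pow_pos hr n) (by linarith)
  have habsX : ‖2 * (n : ℂ) * w ^ n / (z ^ n - w ^ n)‖
      ≤ 2 * n * κ ^ n / (1 - κ ^ n) := by
    rw [norm_div, norm_mul, norm_mul, norm_pow, habsw, Complex.norm_two, Complex.norm_natCast]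
    calc 2 * (n : ℝ) * (κ * r) ^ n / ‖z ^ n - w ^ n‖
        ≤ 2 * (n : ℝ) * (κ * r) ^ n / (r ^ n * (1 - κ ^ n)) := by
          apply div_le_div_of_nonneg_left _ hden0 hden
          positivity
      _ = 2 * n * κ ^ n / (1 - κ ^ n) := by
          have hone : (1:ℝ) - κ ^ n ≠ 0 := by linarith
          have hrn : r ^ n ≠ 0 := (pow_pos hr n).ne'
          rw [mul_pow]
          field_simp
  calc |(n : ℝ)⁻¹ * (2 * (n : ℂ) * w ^ n / (z ^ n - w ^ n)).re|
      = (n : ℝ)⁻¹ * |(2 * (n : ℂ) * w ^ n / (z ^ n - w ^ n)).re| := by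
        rw [abs_mul, abs_of_nonneg (by positivity : (0:ℝ) ≤ (n : ℝ)⁻¹)]
    _ ≤ (n : ℝ)⁻¹ * ‖2 * (n : ℂ) * w ^ n / (z ^ n - w ^ n)‖ := by
        gcongr
        exact Complex.abs_re_le_norm _
    _ ≤ (n : ℝ)⁻¹ * (2 * n * κ ^ n / (1 - κ ^ n)) := by gcongr
    _ = 2 * κ ^ n / (1 - κ ^ n) := by
        have hone : (1:ℝ) - κ ^ n ≠ 0 := by linarith
        field_simp

lemma avg_diff (n : ℕ) (hn : 0 < n) (f g : ℕ → ℝ) (b : ℝ)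
    (h : ∀ j ∈ Finset.range n, |f j - g j| ≤ b) :
    |(n : ℝ)⁻¹ * ∑ j ∈ Finset.range n, f j - (n : ℝ)⁻¹ * ∑ j ∈ Finset.range n, g j| ≤ b := by
  have hn0' : (0 : ℝ) < n := Nat.cast_pos.mpr hn
  rw [← mul_sub, ← Finset.sum_sub_distrib, abs_mul,
    abs_of_nonneg (by positivity : (0:ℝ) ≤ (n : ℝ)⁻¹)]
  calc (n : ℝ)⁻¹ * |∑ j ∈ Finset.range n, (f j - g j)|
      ≤ (n : ℝ)⁻¹ * ∑ j ∈ Finset.range n, |f j - g j| := by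
        gcongr
        exact Finset.abs_sum_le_sum_abs _ _
    _ ≤ (n : ℝ)⁻¹ * (n * b) := by
        gcongr
        calc ∑ j ∈ Finset.range n, |f j - g j| ≤ (Finset.range n).card • b :=
              Finset.sum_le_card_nsmul _ _ _ h
          _ = n * b := by rw [Finset.card_range, nsmul_eq_mul]
    _ = b := by field_simp

open Metric

set_option maxHeartbeats 2000000 in
theorem poisson_kernel_average_close_to_one :
    ∃ C > (0 : ℝ), ∀ δ : ℝ, δ ∈ Set.Ioc (0 : ℝ) (1 / 4) → ∀ r : ℝ, 1 ≤ r →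
      ∀ p : ℕ → ℂ,
        (∀ j < ⌊2 * Real.pi / δ⌋₊,
          ‖p j -
            (((1 - δ ^ ((1 : ℝ) / 4)) * r : ℝ) : ℂ) *
              Complex.exp (((2 * Real.pi * j / ⌊2 * Real.pi / δ⌋₊ : ℝ) : ℂ) * Complex.I)‖
            ≤ δ * r) →
        ∀ z : ℂ, ‖z‖ = r →
          |(⌊2 * Real.pi / δ⌋₊ : ℝ)⁻¹ *
              ∑ j ∈ Finset.range ⌊2 * Real.pi / δ⌋₊,
                (r ^ 2 - ‖p j‖ ^ 2) / ‖z - p j‖ ^ 2 - 1|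
            ≤ C * Real.sqrt δ := by
  refine ⟨21, by norm_num, ?_⟩
  rintro δ ⟨hδ0, hδ4⟩ r hr p hp z hz
  have hr0 : (0 : ℝ) < r := lt_of_lt_of_le one_pos hr
  set a := δ ^ ((1 : ℝ) / 4) with hadef
  set n := ⌊2 * Real.pi / δ⌋₊ with hndef
  have ha0 : 0 < a := Real.rpow_pos_of_pos hδ0 _
  have ha4 : a ^ 4 = δ := by
    rw [hadef, ← Real.rpow_natCast (δ ^ ((1 : ℝ) / 4)) 4, ← Real.rpow_mul hδ0.le]
    norm_num
  have ha34 : a ≤ 3 / 4 := by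
    by_contra hcon
    push_neg at hcon
    have h1 : (3 / 4 : ℝ) ^ 4 < a ^ 4 := pow_lt_pow_left₀ hcon (by norm_num) (by norm_num)
    rw [ha4] at h1
    norm_num at h1
    linarith
  have hs : Real.sqrt δ = a ^ 2 := by
    rw [← ha4, show (4 : ℕ) = 2 * 2 from rfl, pow_mul, Real.sqrt_sq (by positivity)]
  have ha3 : a ^ 3 ≤ 27 / 64 := by
    calc a ^ 3 ≤ (3 / 4 : ℝ) ^ 3 := pow_le_pow_left₀ ha0.le ha34 3
      _ = 27 / 64 := by norm_num
  have hδa : δ ≤ a / 2 := by nlinarith [ha0.le]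
  have hδa1 : δ ≤ a := le_trans hδa (by linarith)
  have hnd : 6 < (n : ℝ) * δ := by
    have h1 : 2 * Real.pi / δ < n + 1 := Nat.lt_floor_add_one _
    have h2 : 2 * Real.pi < ((n : ℝ) + 1) * δ := by rwa [div_lt_iff₀ hδ0] at h1
    nlinarith [Real.pi_gt_d6]
  have hn0 : 0 < n := by
    rcases Nat.eq_zero_or_pos n with h | h
    · rw [h] at hnd; norm_num at hnd
    · exact h
  have hn0' : (0 : ℝ) < n := Nat.cast_pos.mpr hn0
  set κ := 1 - a with hκdef
  have hκ0 : 0 < κ := by rw [hκdef]; linarith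
  have hκ1 : κ < 1 := by rw [hκdef]; linarith
  have hκr : κ * r = r - a * r := by rw [hκdef]; ring
  have har : 0 < a * r := mul_pos ha0 hr0
  have hκn16 : κ ^ n ≤ a ^ 3 / 6 := by
    have hb : 1 + (n : ℝ) * a ≤ (1 + a) ^ n := one_add_mul_le_pow (by linarith) n
    have hprod : (κ * (1 + a)) ^ n ≤ 1 := by
      apply pow_le_one₀ (by nlinarith) (by nlinarith)
    rw [mul_pow] at hprod
    have hκnn : 0 ≤ κ ^ n := pow_nonneg hκ0.le n
    have h2 : κ ^ n * ((n : ℝ) * a) ≤ 1 := by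
      calc κ ^ n * ((n : ℝ) * a) ≤ κ ^ n * (1 + a) ^ n := by
            apply mul_le_mul_of_nonneg_left _ hκnn
            exact le_trans (by linarith) hb
        _ ≤ 1 := hprod
    have h3 : 6 < (n : ℝ) * a * a ^ 3 := by
      calc (6 : ℝ) < n * δ := hnd
        _ = n * a * a ^ 3 := by rw [← ha4]; ring
    nlinarith [mul_le_mul_of_nonneg_right h2 (by positivity : (0:ℝ) ≤ a ^ 3),
      mul_le_mul_of_nonneg_left h3.le hκnn]
  have hterm : ∀ j ∈ Finset.range n,
      |(r ^ 2 - ‖p j‖ ^ 2) / ‖z - p j‖ ^ 2 -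
        (r ^ 2 - ‖((κ * r : ℝ) : ℂ) *
            Complex.exp (((2 * Real.pi * j / n : ℝ) : ℂ) * Complex.I)‖ ^ 2) /
          ‖z - ((κ * r : ℝ) : ℂ) *
            Complex.exp (((2 * Real.pi * j / n : ℝ) : ℂ) * Complex.I)‖ ^ 2| ≤ 20 * a ^ 2 := by
    intro j hj
    have hpj := hp j (Finset.mem_range.mp hj)
    set q : ℂ := ((κ * r : ℝ) : ℂ) *
      Complex.exp (((2 * Real.pi * j / n : ℝ) : ℂ) * Complex.I) with hqdef
    have habsq : ‖q‖ = κ * r := by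
      rw [hqdef, norm_mul, Complex.norm_real, Real.norm_eq_abs, Complex.norm_exp_ofReal_mul_I, mul_one,
        abs_of_nonneg (mul_nonneg hκ0.le hr0.le)]
    set u := ‖p j‖ with hudef
    set A := ‖z - p j‖ with hAdef
    set B := ‖z - q‖ with hBdef
    have hδr : δ * r ≤ a / 2 * r := mul_le_mul_of_nonneg_right hδa hr0.le
    have hδr1 : δ * r ≤ a * r := mul_le_mul_of_nonneg_right hδa1 hr0.le
    have hB : a * r ≤ B := by
      have h1 : ‖z‖ - ‖q‖ ≤ ‖z - q‖ := norm_sub_norm_le _ _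
      rw [hz, habsq] at h1
      rw [hBdef]
      linarith
    have hAB : |A - B| ≤ δ * r := by
      have h1 : |‖z - p j‖ - ‖z - q‖| ≤ ‖(z - p j) - (z - q)‖ := abs_norm_sub_norm_le _ _
      have h2 : (z - p j) - (z - q) = -(p j - q) := by ring
      rw [h2, norm_neg] at h1
      exact le_trans h1 hpj
    have hA : a * r / 2 ≤ A := by
      have := abs_le.mp hAB
      linarith
    have huv : |u - κ * r| ≤ δ * r := by
      have h1 : |‖p j‖ - ‖q‖| ≤ ‖p j - q‖ := abs_norm_sub_norm_le _ _
      rw [habsq] at h1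
      exact le_trans h1 hpj
    have hu : u ≤ r := by
      have h2 := (abs_le.mp huv).2
      linarith
    have hvr : κ * r ≤ r := by linarith
    have hv0 : 0 ≤ κ * r := mul_nonneg hκ0.le hr0.le
    have hy0 : 0 ≤ r ^ 2 - (κ * r) ^ 2 := by nlinarith
    have hy : r ^ 2 - (κ * r) ^ 2 ≤ 2 * a * r ^ 2 := by nlinarith [sq_nonneg (a * r)]
    have hbd := pert_bound r a δ A B u (κ * r) hr0 ha0 hA hB hAB huv
      (norm_nonneg _) hv0 hu hvr hy0 hy hδ0.le
    rw [habsq]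
    have heq : 20 * δ / a ^ 2 = 20 * a ^ 2 := by
      rw [← ha4]
      field_simp
    rw [heq] at hbd
    exact hbd
  have hmain := avg_bound n hn0 r κ hr0 hκ0.le hκ1 z hz
  have hκnsmall : 2 * κ ^ n / (1 - κ ^ n) ≤ a ^ 2 := by
    have hκn1 : κ ^ n < 1 := pow_lt_one₀ hκ0.le hκ1 hn0.ne'
    rw [div_le_iff₀ (by linarith)]
    have hκnn : 0 ≤ κ ^ n := pow_nonneg hκ0.le n
    nlinarith
  have hdiff := avg_diff n hn0
    (fun j => (r ^ 2 - ‖p j‖ ^ 2) / ‖z - p j‖ ^ 2)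
    (fun j => (r ^ 2 - ‖((κ * r : ℝ) : ℂ) *
        Complex.exp (((2 * Real.pi * j / n : ℝ) : ℂ) * Complex.I)‖ ^ 2) /
      ‖z - ((κ * r : ℝ) : ℂ) *
        Complex.exp (((2 * Real.pi * j / n : ℝ) : ℂ) * Complex.I)‖ ^ 2)
    (20 * a ^ 2) hterm
  set Sc := (n : ℝ)⁻¹ * ∑ j ∈ Finset.range n,
      (r ^ 2 - ‖((κ * r : ℝ) : ℂ) *
          Complex.exp (((2 * Real.pi * j / n : ℝ) : ℂ) * Complex.I)‖ ^ 2) /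
        ‖z - ((κ * r : ℝ) : ℂ) *
          Complex.exp (((2 * Real.pi * j / n : ℝ) : ℂ) * Complex.I)‖ ^ 2 with hScdef
  set Sp := (n : ℝ)⁻¹ * ∑ j ∈ Finset.range n,
      (r ^ 2 - ‖p j‖ ^ 2) / ‖z - p j‖ ^ 2 with hSpdef
  calc |Sp - 1| ≤ |Sp - Sc| + |Sc - 1| := abs_sub_le _ _ _
    _ ≤ 20 * a ^ 2 + a ^ 2 := add_le_add hdiff (hmain.trans hκnsmall)
    _ = 21 * Real.sqrt δ := by rw [hs]; ring
end

section
/- There exists an absolute constant C > 0 such that for every r ≥ 1, the probability of the event Ω_r that simultaneously (i) |ζ_0| ≥ 2, (ii) |ζ_k| ≤ exp(−2r²) for every integer k with 1 ≤ k ≤ 48 r², and (iii) |ζ_k| ≤ 2^k for every integer k > 48 r², satisfies P(Ω_r) ≥ exp(−C r⁴). -/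
open MeasureTheory ProbabilityTheory Metric
open scoped ENNReal NNReal

private lemma weier (ε : ℕ → ℝ) : ∀ F : Finset ℕ, (∀ k ∈ F, 0 ≤ ε k) → (∀ k ∈ F, ε k ≤ 1) →
    1 - ∑ k ∈ F, ε k ≤ ∏ k ∈ F, (1 - ε k) := by
  intro F
  induction F using Finset.cons_induction with
  | empty => simp
  | cons a F ha ih =>
    intro h0 h1
    rw [Finset.prod_cons, Finset.sum_cons]
    have hP := ih (fun k hk => h0 k (Finset.mem_cons_of_mem hk))
      (fun k hk => h1 k (Finset.mem_cons_of_mem hk))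
    have hPn : (0:ℝ) ≤ ∏ k ∈ F, (1 - ε k) :=
      Finset.prod_nonneg fun k hk => by linarith [h1 k (Finset.mem_cons_of_mem hk)]
    have hS : (0:ℝ) ≤ ∑ k ∈ F, ε k :=
      Finset.sum_nonneg fun k hk => h0 k (Finset.mem_cons_of_mem hk)
    have ha0 := h0 a (Finset.mem_cons_self a F)
    have ha1 := h1 a (Finset.mem_cons_self a F)
    nlinarith


private lemma stdGauss_lower {S : Set ℂ} (hS : MeasurableSet S) {c : ℝ}
    (hc : ∀ w ∈ S, c ≤ Real.exp (-(‖w‖) ^ 2) / Real.pi) :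
    ENNReal.ofReal c * volume S ≤ stdComplexGaussian S := by
  rw [stdComplexGaussian, withDensity_apply _ hS, ← setLIntegral_const S _]
  exact setLIntegral_mono' hS fun w hw => ENNReal.ofReal_le_ofReal (hc w hw)

private lemma gauss_half_1d :
    ∫⁻ x : ℝ, ENNReal.ofReal (Real.exp (-x ^ 2 / 2)) = ENNReal.ofReal (Real.sqrt (2 * Real.pi)) := by
  have hfun : (fun x : ℝ => Real.exp (-x ^ 2 / 2)) = fun x => Real.exp (-(1/2) * x ^ 2) := by
    funext x; congr 1; ring
  have hint : Integrable (fun x : ℝ => Real.exp (-x ^ 2 / 2)) := by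
    rw [hfun]; exact integrable_exp_neg_mul_sq (by norm_num)
  rw [← ofReal_integral_eq_lintegral_ofReal hint
    (Filter.Eventually.of_forall fun x => (Real.exp_pos _).le)]
  congr 1
  rw [hfun, integral_gaussian]
  rw [show Real.pi / (1/2) = 2 * Real.pi by ring]

private lemma gauss_half :
    ∫⁻ w : ℂ, ENNReal.ofReal (Real.exp (-(‖w‖) ^ 2 / 2)) = ENNReal.ofReal (2 * Real.pi) := by
  have hg : Measurable (fun p : ℝ × ℝ =>
      ENNReal.ofReal (Real.exp (-p.1 ^ 2 / 2)) * ENNReal.ofReal (Real.exp (-p.2 ^ 2 / 2))) := by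
    fun_prop
  have h := Complex.volume_preserving_equiv_real_prod.lintegral_comp hg
  have hpt : ∀ w : ℂ, ENNReal.ofReal (Real.exp (-(‖w‖) ^ 2 / 2)) =
      ENNReal.ofReal (Real.exp (-(w.re) ^ 2 / 2)) * ENNReal.ofReal (Real.exp (-(w.im) ^ 2 / 2)) := by
    intro w
    rw [← ENNReal.ofReal_mul (Real.exp_pos _).le, ← Real.exp_add]
    congr 2
    rw [Complex.sq_norm, Complex.normSq_apply]
    ring
  calc ∫⁻ w : ℂ, ENNReal.ofReal (Real.exp (-(‖w‖) ^ 2 / 2))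
      = ∫⁻ w : ℂ, ENNReal.ofReal (Real.exp (-(w.re) ^ 2 / 2)) *
          ENNReal.ofReal (Real.exp (-(w.im) ^ 2 / 2)) := by simp_rw [hpt]
    _ = ∫⁻ p : ℝ × ℝ, ENNReal.ofReal (Real.exp (-p.1 ^ 2 / 2)) *
          ENNReal.ofReal (Real.exp (-p.2 ^ 2 / 2)) := h
    _ = (∫⁻ x : ℝ, ENNReal.ofReal (Real.exp (-x ^ 2 / 2))) *
          ∫⁻ y : ℝ, ENNReal.ofReal (Real.exp (-y ^ 2 / 2)) := by
        rw [Measure.volume_eq_prod]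
        exact lintegral_prod_mul (f := fun x => ENNReal.ofReal (Real.exp (-x ^ 2 / 2)))
          (g := fun y => ENNReal.ofReal (Real.exp (-y ^ 2 / 2))) (by fun_prop) (by fun_prop)
    _ = ENNReal.ofReal (2 * Real.pi) := by
        rw [gauss_half_1d, ← ENNReal.ofReal_mul (Real.sqrt_nonneg _),
          Real.mul_self_sqrt (by positivity)]

private lemma stdGauss_tail {t : ℝ} (ht : 0 ≤ t) :
    stdComplexGaussian {w : ℂ | t < ‖w‖} ≤ ENNReal.ofReal (2 * Real.exp (-t ^ 2 / 2)) := by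
  have hTm : MeasurableSet {w : ℂ | t < ‖w‖} :=
    measurableSet_lt measurable_const continuous_norm.measurable
  rw [stdComplexGaussian, withDensity_apply _ hTm]
  have hpt : ∀ w ∈ {w : ℂ | t < ‖w‖},
      ENNReal.ofReal (Real.exp (-(‖w‖) ^ 2) / Real.pi) ≤
        ENNReal.ofReal (Real.exp (-t ^ 2 / 2) / Real.pi) *
          ENNReal.ofReal (Real.exp (-(‖w‖) ^ 2 / 2)) := by
    intro w hw
    rw [← ENNReal.ofReal_mul (by positivity)]
    apply ENNReal.ofReal_le_ofReal
    have habs : t ≤ ‖w‖ := le_of_lt hw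
    have h1 : Real.exp (-(‖w‖) ^ 2) =
        Real.exp (-(‖w‖) ^ 2 / 2) * Real.exp (-(‖w‖) ^ 2 / 2) := by
      rw [← Real.exp_add]; ring_nf
    have h2 : Real.exp (-(‖w‖) ^ 2 / 2) ≤ Real.exp (-t ^ 2 / 2) := by
      apply Real.exp_le_exp.2
      nlinarith [norm_nonneg w]
    rw [h1, div_mul_eq_mul_div]
    gcongr
  calc ∫⁻ w in {w : ℂ | t < ‖w‖}, ENNReal.ofReal (Real.exp (-(‖w‖) ^ 2) / Real.pi)
      ≤ ∫⁻ w in {w : ℂ | t < ‖w‖},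
          ENNReal.ofReal (Real.exp (-t ^ 2 / 2) / Real.pi) *
            ENNReal.ofReal (Real.exp (-(‖w‖) ^ 2 / 2)) := setLIntegral_mono' hTm hpt
    _ ≤ ∫⁻ w : ℂ, ENNReal.ofReal (Real.exp (-t ^ 2 / 2) / Real.pi) *
            ENNReal.ofReal (Real.exp (-(‖w‖) ^ 2 / 2)) := setLIntegral_le_lintegral _ _
    _ = ENNReal.ofReal (Real.exp (-t ^ 2 / 2) / Real.pi) * ENNReal.ofReal (2 * Real.pi) := by
        rw [lintegral_const_mul' _ _ ENNReal.ofReal_ne_top, gauss_half]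
    _ = ENNReal.ofReal (2 * Real.exp (-t ^ 2 / 2)) := by
        rw [← ENNReal.ofReal_mul (by positivity)]
        congr 1
        field_simp

private lemma ball_measure_lb {z : ℂ} {ρ c : ℝ} 
    (hc : ∀ w ∈ Metric.ball z ρ, c ≤ Real.exp (-(‖w‖) ^ 2) / Real.pi) :
    ENNReal.ofReal c * (ENNReal.ofReal ρ ^ 2 * NNReal.pi) ≤ stdComplexGaussian (Metric.ball z ρ) := by
  have := stdGauss_lower measurableSet_ball hc
  rwa [Complex.volume_ball] at this

private lemma enn_pi : (NNReal.pi : ℝ≥0∞) = ENNReal.ofReal Real.pi := by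
  rw [← NNReal.coe_real_pi, ENNReal.ofReal_coe_nnreal]

private lemma e2ge4 : (4:ℝ) ≤ Real.exp 2 := by
  have h1 : (2:ℝ) ≤ Real.exp 1 := by linarith [Real.add_one_le_exp (1:ℝ)]
  have h2 : Real.exp 2 = Real.exp 1 * Real.exp 1 := by rw [← Real.exp_add]; norm_num
  nlinarith

private lemma stdGauss_outer :
    ENNReal.ofReal (Real.exp (-15)) ≤ stdComplexGaussian {w : ℂ | 2 ≤ ‖w‖} := by
  have hsub : Metric.ball (3 : ℂ) (1/2) ⊆ {w : ℂ | 2 ≤ ‖w‖} := by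
    intro w hw
    simp only [Metric.mem_ball, Complex.dist_eq] at hw
    simp only [Set.mem_setOf_eq]
    have h2 := norm_sub_norm_le (3 : ℂ) w
    rw [norm_sub_rev] at h2
    simp only [Complex.norm_ofNat] at h2
    linarith
  have hc : ∀ w ∈ Metric.ball (3 : ℂ) (1/2),
      Real.exp (-13) / Real.pi ≤ Real.exp (-(‖w‖) ^ 2) / Real.pi := by
    intro w hw
    simp only [Metric.mem_ball, Complex.dist_eq] at hw
    gcongr
    have h1 : ‖w‖ ≤ 7/2 := by
      have := norm_sub_norm_le w (3 : ℂ)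
      simp only [Complex.norm_ofNat] at this
      linarith
    nlinarith [norm_nonneg w]
  calc ENNReal.ofReal (Real.exp (-15))
      ≤ ENNReal.ofReal (Real.exp (-13) / Real.pi * ((1/2)^2 * Real.pi)) := by
        apply ENNReal.ofReal_le_ofReal
        have hπ := Real.pi_pos
        have heq : Real.exp (-13) / Real.pi * ((1/2:ℝ)^2 * Real.pi) = Real.exp (-13) / 4 := by
          field_simp; ring
        rw [heq]
        have hsplit : Real.exp (-15) = Real.exp (-13) * Real.exp (-2) := by
          rw [← Real.exp_add]; norm_num
        have hinv : Real.exp (-2) * Real.exp 2 = 1 := by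
          rw [← Real.exp_add]; norm_num
        nlinarith [Real.exp_pos (-13), Real.exp_pos (-2), e2ge4]
    _ ≤ ENNReal.ofReal (Real.exp (-13) / Real.pi) * (ENNReal.ofReal (1/2) ^ 2 * NNReal.pi) := by
        rw [enn_pi, ← ENNReal.ofReal_pow (by norm_num), ← ENNReal.ofReal_mul (by positivity),
          ← ENNReal.ofReal_mul (by positivity)]
    _ ≤ stdComplexGaussian (Metric.ball (3 : ℂ) (1/2)) := ball_measure_lb hc
    _ ≤ stdComplexGaussian {w : ℂ | 2 ≤ ‖w‖} := measure_mono hsub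

private lemma stdGauss_small {s : ℝ} (h0 : 0 < s) (h1 : s ≤ 1) :
    ENNReal.ofReal (Real.exp (-1) * s ^ 2) ≤ stdComplexGaussian {w : ℂ | ‖w‖ ≤ s} := by
  have hsub : Metric.ball (0 : ℂ) s ⊆ {w : ℂ | ‖w‖ ≤ s} := by
    intro w hw
    simp only [Metric.mem_ball, Complex.dist_eq, sub_zero] at hw
    exact le_of_lt hw
  have hc : ∀ w ∈ Metric.ball (0 : ℂ) s,
      Real.exp (-1) / Real.pi ≤ Real.exp (-(‖w‖) ^ 2) / Real.pi := by
    intro w hw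
    simp only [Metric.mem_ball, Complex.dist_eq, sub_zero] at hw
    gcongr
    nlinarith [norm_nonneg w]
  calc ENNReal.ofReal (Real.exp (-1) * s ^ 2)
      = ENNReal.ofReal (Real.exp (-1) / Real.pi * (s ^ 2 * Real.pi)) := by
        congr 1
        have hπ := Real.pi_pos
        field_simp
    _ ≤ ENNReal.ofReal (Real.exp (-1) / Real.pi) * (ENNReal.ofReal s ^ 2 * NNReal.pi) := by
        rw [enn_pi, ← ENNReal.ofReal_pow h0.le, ← ENNReal.ofReal_mul (by positivity),
          ← ENNReal.ofReal_mul (by positivity)]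
    _ ≤ stdComplexGaussian (Metric.ball (0 : ℂ) s) := ball_measure_lb hc
    _ ≤ stdComplexGaussian {w : ℂ | ‖w‖ ≤ s} := measure_mono hsub

private lemma stdGauss_big (hprob : IsProbabilityMeasure stdComplexGaussian) (k : ℕ) (hk : 1 ≤ k) :
    ENNReal.ofReal (1 - 2 * Real.exp (-(2 * (k : ℝ)))) ≤
      stdComplexGaussian {w : ℂ | ‖w‖ ≤ (2:ℝ) ^ k} := by
  set S : Set ℂ := {w : ℂ | ‖w‖ ≤ (2:ℝ) ^ k} with hS
  have hcompl : Sᶜ = {w : ℂ | (2:ℝ) ^ k < ‖w‖} := by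
    ext w; simp [hS, not_le]
  have htail : stdComplexGaussian Sᶜ ≤ ENNReal.ofReal (2 * Real.exp (-(2 * (k : ℝ)))) := by
    rw [hcompl]
    refine (stdGauss_tail (by positivity)).trans (ENNReal.ofReal_le_ofReal ?_)
    have h2k : (k : ℝ) + 1 ≤ (2:ℝ) ^ k := by
      have h := Nat.lt_two_pow_self (n := k)
      have h' : k + 1 ≤ 2 ^ k := h
      exact_mod_cast h'
    have hsq : ((k:ℝ) + 1) ^ 2 ≤ ((2:ℝ) ^ k) ^ 2 := by
      have : (0:ℝ) ≤ (k:ℝ) + 1 := by positivity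
      exact pow_le_pow_left₀ this h2k 2
    have hge : 2 * (k : ℝ) ≤ ((2:ℝ) ^ k) ^ 2 / 2 := by
      nlinarith [sq_nonneg ((k:ℝ) - 1)]
    have hexp := Real.exp_le_exp.2 (neg_le_neg hge)
    rw [neg_div]
    nlinarith [Real.exp_pos (-(((2:ℝ) ^ k) ^ 2 / 2)), hexp]
  have hunion : (1 : ℝ≥0∞) ≤ stdComplexGaussian S + stdComplexGaussian Sᶜ := by
    have := measure_union_le (μ := stdComplexGaussian) S Sᶜ
    rwa [Set.union_compl_self, measure_univ] at this
  have hge : ENNReal.ofReal (1 - 2 * Real.exp (-(2 * (k : ℝ)))) ≤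
      1 - ENNReal.ofReal (2 * Real.exp (-(2 * (k : ℝ)))) := by
    rw [← ENNReal.ofReal_one, ← ENNReal.ofReal_sub _ (by positivity)]
  refine hge.trans ?_
  rw [tsub_le_iff_right]
  exact hunion.trans (add_le_add_right htail _)

set_option maxHeartbeats 1000000 in
theorem coefficient_event_probability_lower_bound
    {Ω : Type*} [MeasureSpace Ω] [IsProbabilityMeasure (ℙ : Measure Ω)]
    (ζ : ℕ → Ω → ℂ) (hmeas : ∀ k, Measurable (ζ k))
    (hindep : iIndepFun ζ ℙ)
    (hdist : ∀ k, Measure.map (ζ k) ℙ = stdComplexGaussian) :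
    ∃ C > (0 : ℝ), ∀ r : ℝ, 1 ≤ r →
      ENNReal.ofReal (Real.exp (-C * r ^ 4)) ≤
        ℙ {ω | 2 ≤ ‖ζ 0 ω‖ ∧
            (∀ k : ℕ, 1 ≤ k → (k : ℝ) ≤ 48 * r ^ 2 →
              ‖ζ k ω‖ ≤ Real.exp (-2 * r ^ 2)) ∧
            (∀ k : ℕ, 48 * r ^ 2 < (k : ℝ) → ‖ζ k ω‖ ≤ 2 ^ k)} := by
  classical
  have hprob : IsProbabilityMeasure stdComplexGaussian :=
    hdist 0 ▸ Measure.isProbabilityMeasure_map (hmeas 0).aemeasurable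
  refine ⟨1000, by norm_num, fun r hr => ?_⟩
  have hr2 : (1:ℝ) ≤ r ^ 2 := by nlinarith
  have h48 : (0:ℝ) ≤ 48 * r ^ 2 := by positivity
  set m := ⌊48 * r ^ 2⌋₊ with hmdef
  have hm_le : (m : ℝ) ≤ 48 * r ^ 2 := Nat.floor_le h48
  have hm_ge : 48 ≤ m := Nat.le_floor (by push_cast; nlinarith)
  set s := Real.exp (-2 * r ^ 2) with hsdef
  have hs_pos : 0 < s := Real.exp_pos _
  have hs_le : s ≤ 1 := Real.exp_le_one_iff.2 (by nlinarith)
  -- basic exp facts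
  have hexp2 : Real.exp (-2:ℝ) ≤ 1/2 := by
    have h2 : (3:ℝ) ≤ Real.exp 2 := by linarith [Real.add_one_le_exp (2:ℝ)]
    have hinv : Real.exp (-2:ℝ) * Real.exp 2 = 1 := by rw [← Real.exp_add]; norm_num
    nlinarith [Real.exp_pos (-2:ℝ)]
  have hexp1 : Real.exp (-1:ℝ) ≤ 1/2 := by
    have h2 : (2:ℝ) ≤ Real.exp 1 := by linarith [Real.add_one_le_exp (1:ℝ)]
    have hinv : Real.exp (-1:ℝ) * Real.exp 1 = 1 := by rw [← Real.exp_add]; norm_num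
    nlinarith [Real.exp_pos (-1:ℝ)]
  have hone : ∀ k : ℕ, 1 ≤ k → 2 * Real.exp (-(2 * (k:ℝ))) ≤ 1 := by
    intro k hk
    have hkr : (1:ℝ) ≤ (k:ℝ) := by exact_mod_cast hk
    have := Real.exp_le_exp.2 (show -(2*(k:ℝ)) ≤ -2 by linarith)
    linarith
  set S : ℕ → Set ℂ := fun k =>
    if k = 0 then {w | 2 ≤ ‖w‖}
    else if k ≤ m then {w | ‖w‖ ≤ s}
    else {w | ‖w‖ ≤ (2:ℝ) ^ k} with hSdef
  have hSmeas : ∀ k, MeasurableSet (S k) := by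
    intro k
    simp only [hSdef]
    split_ifs
    · exact measurableSet_le measurable_const continuous_norm.measurable
    · exact measurableSet_le continuous_norm.measurable measurable_const
    · exact measurableSet_le continuous_norm.measurable measurable_const
  set E : ℕ → Set Ω := fun k => ζ k ⁻¹' S k with hEdef
  have hEmeas : ∀ k, MeasurableSet (E k) := fun k => hmeas k (hSmeas k)
  have hPE : ∀ k, ℙ (E k) = stdComplexGaussian (S k) := fun k => by
    rw [hEdef, ← hdist k, Measure.map_apply (hmeas k) (hSmeas k)]
  have hevent : {ω | 2 ≤ ‖ζ 0 ω‖ ∧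
      (∀ k : ℕ, 1 ≤ k → (k : ℝ) ≤ 48 * r ^ 2 →
        ‖ζ k ω‖ ≤ s) ∧
      (∀ k : ℕ, 48 * r ^ 2 < (k : ℝ) → ‖ζ k ω‖ ≤ 2 ^ k)} = ⋂ k, E k := by
    ext ω
    simp only [Set.mem_setOf_eq, Set.mem_iInter, hEdef, Set.mem_preimage, hSdef]
    constructor
    · rintro ⟨h1, h2, h3⟩ k
      by_cases hk0 : k = 0
      · subst hk0; rw [if_pos rfl]; exact h1
      · rw [if_neg hk0]
        by_cases hkm : k ≤ m
        · rw [if_pos hkm]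
          refine h2 k (Nat.one_le_iff_ne_zero.2 hk0) (le_trans ?_ hm_le)
          exact_mod_cast Nat.cast_le.2 hkm
        · rw [if_neg hkm]
          exact h3 k ((Nat.floor_lt h48).1 (not_le.1 hkm))
    · intro h
      refine ⟨?_, ?_, ?_⟩
      · have := h 0; rwa [if_pos rfl] at this
      · intro k hk1 hk48
        have := h k
        rwa [if_neg (by omega), if_pos (Nat.le_floor hk48)] at this
      · intro k hk48
        have hk0 : k ≠ 0 := by
          rintro rfl
          simp only [Nat.cast_zero] at hk48
          linarith
        have hkm : ¬ k ≤ m := not_le.2 ((Nat.floor_lt h48).2 hk48)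
        have := h k
        rwa [if_neg hk0, if_neg hkm] at this
  rw [hevent]
  set F : ℕ → Set Ω := fun n => ⋂ k ∈ Finset.range (n+1), E k with hFdef
  have hFmeas : ∀ n, MeasurableSet (F n) :=
    fun n => Finset.measurableSet_biInter _ fun k _ => hEmeas k
  have hFanti : Antitone F := by
    intro a b hab ω hω
    simp only [hFdef, Set.mem_iInter] at hω ⊢
    intro k hk
    exact hω k (Finset.mem_range.2 (lt_of_lt_of_le (Finset.mem_range.1 hk) (by omega)))
  have hFinter : ⋂ n, F n = ⋂ k, E k := by
    ext ω
    simp only [hFdef, Set.mem_iInter]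
    constructor
    · intro h k
      exact h k k (Finset.mem_range.2 (by omega))
    · intro h n k _
      exact h k
  have htend : Filter.Tendsto (fun n => ℙ (F n)) Filter.atTop (nhds (ℙ (⋂ k, E k))) := by
    have := tendsto_measure_iInter_atTop (μ := ℙ) (s := F)
      (fun n => (hFmeas n).nullMeasurableSet) hFanti ⟨0, measure_ne_top _ _⟩
    rw [hFinter] at this
    exact this
  set b : ℕ → ℝ := fun k => if k = 0 then Real.exp (-15)
    else if k ≤ m then Real.exp (-(4 * r ^ 2 + 1))
    else 1 - 2 * Real.exp (-(2 * (k:ℝ))) with hbdef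
  have hbnonneg : ∀ k, 0 ≤ b k := by
    intro k
    simp only [hbdef]
    split_ifs with h1 h2
    · positivity
    · positivity
    · have hk1 : 1 ≤ k := Nat.one_le_iff_ne_zero.2 h1
      linarith [hone k hk1]
  have hbk : ∀ k, ENNReal.ofReal (b k) ≤ ℙ (E k) := by
    intro k
    rw [hPE k]
    simp only [hbdef, hSdef]
    split_ifs with h1 h2
    · exact stdGauss_outer
    · have heq : Real.exp (-(4 * r ^ 2 + 1)) = Real.exp (-1) * s ^ 2 := by
        rw [hsdef, ← Real.exp_nat_mul, ← Real.exp_add]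
        congr 1
        push_cast
        ring
      rw [heq]
      exact stdGauss_small hs_pos hs_le
    · exact stdGauss_big hprob k (by omega)
  -- real-valued product lower bound
  have hprod : ∀ n : ℕ, Real.exp (-1000 * r ^ 4) ≤ ∏ k ∈ Finset.range (n+1), b k := by
    intro n
    rw [← Finset.prod_filter_mul_prod_filter_not (Finset.range (n+1)) (· ≤ m)]
    set A := (Finset.range (n+1)).filter (· ≤ m) with hA
    set B := (Finset.range (n+1)).filter (fun k => ¬ k ≤ m) with hB
    have hAle : ∀ k ∈ A, Real.exp (-(5 * r ^ 2 + 15)) ≤ b k := by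
      intro k hk
      have hkm : k ≤ m := by simpa using (Finset.mem_filter.1 hk).2
      simp only [hbdef]
      by_cases hk0 : k = 0
      · rw [if_pos hk0]; exact Real.exp_le_exp.2 (by nlinarith)
      · rw [if_neg hk0, if_pos hkm]; exact Real.exp_le_exp.2 (by nlinarith)
    have hcardA : A.card ≤ m + 1 := by
      have hsub : A ⊆ Finset.range (m+1) := by
        intro k hk
        have hkm : k ≤ m := by simpa using (Finset.mem_filter.1 hk).2
        exact Finset.mem_range.2 (Nat.lt_succ_of_le hkm)
      simpa using Finset.card_le_card hsub
    have hA1 : Real.exp (-(5 * r ^ 2 + 15) * ((m:ℝ) + 1)) ≤ ∏ k ∈ A, b k := by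
      calc Real.exp (-(5 * r ^ 2 + 15) * ((m:ℝ) + 1))
          = Real.exp (-(5 * r ^ 2 + 15)) ^ (m + 1) := by
            rw [← Real.exp_nat_mul]; congr 1; push_cast; ring
        _ ≤ Real.exp (-(5 * r ^ 2 + 15)) ^ A.card :=
            pow_le_pow_of_le_one (Real.exp_pos _).le
              (Real.exp_le_one_iff.2 (by nlinarith)) hcardA
        _ = ∏ _k ∈ A, Real.exp (-(5 * r ^ 2 + 15)) := (Finset.prod_const _).symm
        _ ≤ ∏ k ∈ A, b k := Finset.prod_le_prod (fun _ _ => (Real.exp_pos _).le) hAle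
    have hBmem : ∀ k ∈ B, 48 ≤ k ∧ b k = 1 - 2 * Real.exp (-(2 * (k:ℝ))) := by
      intro k hk
      have hkm : ¬ k ≤ m := by simpa using (Finset.mem_filter.1 hk).2
      refine ⟨by omega, ?_⟩
      simp only [hbdef]
      rw [if_neg (by omega), if_neg hkm]
    have hB1 : (1/2 : ℝ) ≤ ∏ k ∈ B, b k := by
      have heq : ∏ k ∈ B, b k = ∏ k ∈ B, (1 - 2 * Real.exp (-(2 * (k:ℝ)))) :=
        Finset.prod_congr rfl fun k hk => (hBmem k hk).2
      rw [heq]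
      have hsum : ∑ k ∈ B, 2 * Real.exp (-(2 * (k:ℝ))) ≤ 1/2 := by
        have hstep : ∀ k ∈ B, 2 * Real.exp (-(2 * (k:ℝ))) ≤
            2 * Real.exp (-48) * Real.exp (-1:ℝ) ^ k := by
          intro k hk
          have h48k : 48 ≤ k := (hBmem k hk).1
          have hkr : (48:ℝ) ≤ (k:ℝ) := by exact_mod_cast h48k
          have hpow : Real.exp (-1:ℝ) ^ k = Real.exp (-(k:ℝ)) := by
            rw [← Real.exp_nat_mul]; congr 1; ring
          rw [hpow, mul_assoc, ← Real.exp_add]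
          have := Real.exp_le_exp.2 (show -(2*(k:ℝ)) ≤ -48 + -(k:ℝ) by linarith)
          linarith
        have hgeo : ∑ k ∈ B, Real.exp (-1:ℝ) ^ k ≤ 2 := by
          have hsub : B ⊆ Finset.range (n+1) := Finset.filter_subset _ _
          have h1 : ∑ k ∈ B, Real.exp (-1:ℝ) ^ k ≤
              ∑ k ∈ Finset.range (n+1), Real.exp (-1:ℝ) ^ k :=
            Finset.sum_le_sum_of_subset_of_nonneg hsub (fun k _ _ => by positivity)
          have hlt1 : Real.exp (-1:ℝ) < 1 := by linarith
          have h2 : ∑ k ∈ Finset.range (n+1), Real.exp (-1:ℝ) ^ k ≤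
              (1 - Real.exp (-1:ℝ))⁻¹ := by
            apply Summable.sum_le_tsum (Finset.range (n+1)) (fun k _ => by positivity)
              (summable_geometric_of_lt_one (by positivity) hlt1) |>.trans_eq
            exact tsum_geometric_of_lt_one (by positivity) hlt1
          have h3 : (1 - Real.exp (-1:ℝ))⁻¹ ≤ 2 := by
            rw [inv_le_comm₀ (by linarith) (by norm_num)]
            linarith
          linarith
        calc ∑ k ∈ B, 2 * Real.exp (-(2 * (k:ℝ)))
            ≤ ∑ k ∈ B, 2 * Real.exp (-48) * Real.exp (-1:ℝ) ^ k :=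
              Finset.sum_le_sum hstep
          _ = 2 * Real.exp (-48) * ∑ k ∈ B, Real.exp (-1:ℝ) ^ k := by
              rw [Finset.mul_sum]
          _ ≤ 2 * Real.exp (-48) * 2 := by
              have h0 : (0:ℝ) ≤ 2 * Real.exp (-48) := by positivity
              exact mul_le_mul_of_nonneg_left hgeo h0
          _ ≤ 1/2 := by
              have h6 : Real.exp (-48:ℝ) ≤ Real.exp (-6:ℝ) :=
                Real.exp_le_exp.2 (by norm_num)
              have h66 : Real.exp (-6:ℝ) = Real.exp (-2:ℝ) * Real.exp (-2:ℝ) * Real.exp (-2:ℝ) := by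
                rw [← Real.exp_add, ← Real.exp_add]; norm_num
              nlinarith [Real.exp_pos (-2:ℝ), Real.exp_pos (-48:ℝ)]
      have hweier := weier (fun k => 2 * Real.exp (-(2 * (k:ℝ)))) B
        (fun k _ => by positivity)
        (fun k hk => hone k (by have := (hBmem k hk).1; omega))
      linarith
    have hcoef : (5 * r ^ 2 + 15) * ((m:ℝ) + 1) + 1 ≤ 1000 * r ^ 4 := by
      have hc1 : 5 * r ^ 2 + 15 ≤ 20 * r ^ 2 := by nlinarith
      have hc2 : (m:ℝ) + 1 ≤ 49 * r ^ 2 := by nlinarith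
      have hc3 : (5 * r ^ 2 + 15) * ((m:ℝ) + 1) ≤ 20 * r ^ 2 * (49 * r ^ 2) := by
        apply mul_le_mul hc1 hc2 (by positivity) (by positivity)
      have hc4 : 20 * r ^ 2 * (49 * r ^ 2) = 980 * r ^ 4 := by ring
      have hr4 : (1:ℝ) ≤ r ^ 4 := by nlinarith
      linarith
    calc Real.exp (-1000 * r ^ 4)
        ≤ Real.exp (-(5 * r ^ 2 + 15) * ((m:ℝ) + 1)) * Real.exp (-1:ℝ) := by
          rw [← Real.exp_add]
          apply Real.exp_le_exp.2
          nlinarith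
      _ ≤ Real.exp (-(5 * r ^ 2 + 15) * ((m:ℝ) + 1)) * (1/2) := by
          exact mul_le_mul_of_nonneg_left hexp1 (Real.exp_pos _).le
      _ ≤ (∏ k ∈ A, b k) * ∏ k ∈ B, b k := by
          apply mul_le_mul hA1 hB1 (by norm_num) ((Finset.prod_nonneg (fun k _ => hbnonneg k)))
  -- assemble
  refine ge_of_tendsto' htend ?_
  intro n
  have hind : ℙ (F n) = ∏ k ∈ Finset.range (n+1), ℙ (E k) :=
    hindep.meas_biInter (fun i _ => ⟨S i, hSmeas i, rfl⟩)
  calc ENNReal.ofReal (Real.exp (-1000 * r ^ 4))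
      ≤ ENNReal.ofReal (∏ k ∈ Finset.range (n+1), b k) :=
        ENNReal.ofReal_le_ofReal (hprod n)
    _ = ∏ k ∈ Finset.range (n+1), ENNReal.ofReal (b k) :=
        ENNReal.ofReal_prod_of_nonneg (fun i _ => hbnonneg i)
    _ ≤ ∏ k ∈ Finset.range (n+1), ℙ (E k) :=
        Finset.prod_le_prod' (fun i _ => hbk i)
    _ = ℙ (F n) := hind.symm
end

section
/- There exists r₀ > 0 such that for every r ≥ r₀ the following holds: if (a_k)_{k≥0} is a sequence of complex numbers with |a_0| ≥ 2, |a_k| ≤ exp(−2r²) for every integer k with 1 ≤ k ≤ 48 r², and |a_k| ≤ 2^k for every integer k > 48 r², then the entire function f(z) = Σ_{k≥0} a_k z^k/√(k!) satisfies |f(z)| ≥ 1 for all z with |z| ≤ r; in particular f has no zeros in the closed disk {|z| ≤ r}. -/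
open MeasureTheory ProbabilityTheory Metric

/-- `k^k ≤ k! * e^k`. -/
lemma aux_pow_le_factorial_mul_exp (k : ℕ) :
    (k : ℝ) ^ k ≤ (Nat.factorial k : ℝ) * Real.exp k := by
  have h := Real.sum_le_exp_of_nonneg (x := (k : ℝ)) (Nat.cast_nonneg k) (k + 1)
  have h2 : (k : ℝ) ^ k / (Nat.factorial k : ℝ) ≤ Real.exp k := by
    refine le_trans ?_ h
    exact Finset.single_le_sum (f := fun i => (k : ℝ) ^ i / (Nat.factorial i : ℝ))
      (fun i _ => by positivity) (Finset.self_mem_range_succ k)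
  rw [div_le_iff₀ (by positivity)] at h2
  linarith

/-- `e^{13/12} ≤ 3`. -/
lemma aux_exp_13_12_le_3 : Real.exp (13 / 12) ≤ 3 := by
  by_contra hcon
  push_neg at hcon
  have h12 : Real.exp (13 / 12) ^ 12 = Real.exp 13 := by
    rw [← Real.exp_nat_mul]; norm_num
  have h13 : Real.exp 13 < 531441 := by
    have he : Real.exp 13 = Real.exp 1 ^ 13 := by rw [← Real.exp_nat_mul]; norm_num
    rw [he]
    calc Real.exp 1 ^ 13 < 2.7182818286 ^ 13 :=
          pow_lt_pow_left₀ Real.exp_one_lt_d9 (Real.exp_pos 1).le (by norm_num)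
      _ ≤ 531441 := by norm_num
  have h3 : (3 : ℝ) ^ 12 < Real.exp (13 / 12) ^ 12 :=
    pow_lt_pow_left₀ hcon (by norm_num) (by norm_num)
  rw [h12] at h3
  norm_num at h3
  linarith

/-- AM-GM: `√(x*y) ≤ (x+y)/2`. -/
lemma aux_sqrt_mul_le (x y : ℝ) (hx : 0 ≤ x) (hy : 0 ≤ y) :
    Real.sqrt (x * y) ≤ (x + y) / 2 := by
  have h : Real.sqrt (x * y) ≤ Real.sqrt (((x + y) / 2) ^ 2) :=
    Real.sqrt_le_sqrt (by nlinarith [sq_nonneg (x - y)])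
  rwa [Real.sqrt_sq (by positivity)] at h

theorem deterministic_no_zeros_in_disk :
    ∃ r₀ > (0 : ℝ), ∀ r : ℝ, r₀ ≤ r → ∀ a : ℕ → ℂ,
      2 ≤ ‖a 0‖ →
      (∀ k : ℕ, 1 ≤ k → (k : ℝ) ≤ 48 * r ^ 2 →
        ‖a k‖ ≤ Real.exp (-2 * r ^ 2)) →
      (∀ k : ℕ, 48 * r ^ 2 < (k : ℝ) → ‖a k‖ ≤ 2 ^ k) →
      ∀ z : ℂ, ‖z‖ ≤ r →
        1 ≤ ‖psiFun a z‖ ∧ psiFun a z ≠ 0 := by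
  refine ⟨1, one_pos, ?_⟩
  intro r hr a ha0 hmid hfar z hz
  have hr0 : (0 : ℝ) < r := lt_of_lt_of_le one_pos hr
  set A := Real.exp (-2 * r ^ 2) with hA
  have hApos : 0 < A := Real.exp_pos _
  set f : ℕ → ℂ := fun k => a k * z ^ k / (Real.sqrt (Nat.factorial k) : ℂ) with hfdef
  set g : ℕ → ℝ := fun k =>
    A / 2 * ((2 * r ^ 2) ^ k / (Nat.factorial k : ℝ)) + 3 * A / 2 * (1 / 2 : ℝ) ^ k with hgdef
  have hpsi : psiFun a z = ∑' k, f k := rfl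
  have hgnonneg : ∀ k, 0 ≤ g k := by
    intro k; simp only [hgdef]; positivity
  have hgsum : Summable g := by
    refine Summable.add ?_ ?_
    · exact (Real.summable_pow_div_factorial (2 * r ^ 2)).mul_left _
    · exact (summable_geometric_of_lt_one (by norm_num) (by norm_num)).mul_left _
  -- value of the sum of g
  have htsumg : (∑' k, g k) = 1 / 2 + 3 * A := by
    have h1 : (∑' k : ℕ, (2 * r ^ 2) ^ k / (Nat.factorial k : ℝ)) = Real.exp (2 * r ^ 2) := by
      rw [Real.exp_eq_exp_ℝ, NormedSpace.exp_eq_tsum_div]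
    have h2 : (∑' k : ℕ, ((1 : ℝ) / 2) ^ k) = 2 := by
      rw [tsum_geometric_of_lt_one (by norm_num) (by norm_num)]; norm_num
    have hAE : A * Real.exp (2 * r ^ 2) = 1 := by
      rw [hA, ← Real.exp_add]; norm_num
    simp only [hgdef]
    rw [Summable.tsum_add ((Real.summable_pow_div_factorial (2 * r ^ 2)).mul_left _)
      ((summable_geometric_of_lt_one (by norm_num) (by norm_num)).mul_left _),
      tsum_mul_left, tsum_mul_left, h1, h2]
    nlinarith [hAE]
  -- pointwise absolute value of f
  have hsqrtpos : ∀ k : ℕ, (0 : ℝ) < Real.sqrt (Nat.factorial k) := by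
    intro k
    have : (0 : ℝ) < (Nat.factorial k : ℝ) := by exact_mod_cast Nat.factorial_pos k
    exact Real.sqrt_pos.mpr this
  have habs : ∀ k, ‖f k‖
      = ‖a k‖ * ‖z‖ ^ k / Real.sqrt (Nat.factorial k) := by
    intro k
    simp only [hfdef, norm_div, norm_mul, norm_pow, Complex.norm_real, Real.norm_eq_abs,
      abs_of_nonneg (Real.sqrt_nonneg _)]
  -- the key pointwise bound for k ≥ 1
  have hbound : ∀ k : ℕ, 1 ≤ k → ‖f k‖ ≤ g k := by
    intro k hk
    have hzk : ‖z‖ ^ k ≤ r ^ k := pow_le_pow_left₀ (norm_nonneg z) hz k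
    have hfactpos : (0 : ℝ) < (Nat.factorial k : ℝ) := by exact_mod_cast Nat.factorial_pos k
    have hx : (0 : ℝ) ≤ (2 * r ^ 2) ^ k / (Nat.factorial k : ℝ) := by positivity
    have hy : (0 : ℝ) ≤ ((1 : ℝ) / 2) ^ k := by positivity
    rcases le_or_gt (k : ℝ) (48 * r ^ 2) with hcase | hcase
    · -- middle range
      have ha : ‖a k‖ ≤ A := hmid k hk hcase
      have h1 : ‖f k‖ ≤ A * (r ^ k / Real.sqrt (Nat.factorial k)) := by
        rw [habs, ← mul_div_assoc]
        gcongr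
      have hprod : (2 * r ^ 2) ^ k / (Nat.factorial k : ℝ) * ((1 : ℝ) / 2) ^ k
          = (r ^ k) ^ 2 / (Nat.factorial k : ℝ) := by
        rw [div_mul_eq_mul_div, ← mul_pow]
        congr 1
        ring
      have h2 : r ^ k / Real.sqrt (Nat.factorial k)
          ≤ ((2 * r ^ 2) ^ k / (Nat.factorial k : ℝ) + ((1 : ℝ) / 2) ^ k) / 2 := by
        have heq : r ^ k / Real.sqrt (Nat.factorial k)
            = Real.sqrt ((2 * r ^ 2) ^ k / (Nat.factorial k : ℝ) * ((1 : ℝ) / 2) ^ k) := by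
          rw [hprod, Real.sqrt_div (by positivity), Real.sqrt_sq (by positivity)]
        rw [heq]
        exact aux_sqrt_mul_le _ _ hx hy
      have h3 : A * (r ^ k / Real.sqrt (Nat.factorial k))
          ≤ A * (((2 * r ^ 2) ^ k / (Nat.factorial k : ℝ) + ((1 : ℝ) / 2) ^ k) / 2) :=
        mul_le_mul_of_nonneg_left h2 hApos.le
      have h4 : 0 ≤ A * ((1 : ℝ) / 2) ^ k := by positivity
      simp only [hgdef]
      nlinarith [h1, h3, h4]
    · -- far range
      have ha : ‖a k‖ ≤ 2 ^ k := hfar k hcase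
      have hk48 : 48 * r ^ 2 ≤ (k : ℝ) := hcase.le
      -- factorial lower bound
      have hfact : (16 * r ^ 2) ^ k * Real.exp (4 * r ^ 2) ≤ (Nat.factorial k : ℝ) := by
        have hstep : (16 * r ^ 2) ^ k * Real.exp (4 * r ^ 2) * Real.exp k ≤ (k : ℝ) ^ k := by
          have he1 : Real.exp (4 * r ^ 2) * Real.exp k ≤ Real.exp (13 / 12) ^ k := by
            rw [← Real.exp_add, ← Real.exp_nat_mul]
            apply Real.exp_le_exp.mpr
            have : 4 * r ^ 2 ≤ (k : ℝ) / 12 := by linarith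
            push_cast
            linarith
          calc (16 * r ^ 2) ^ k * Real.exp (4 * r ^ 2) * Real.exp k
              = (16 * r ^ 2) ^ k * (Real.exp (4 * r ^ 2) * Real.exp k) := by ring
            _ ≤ (16 * r ^ 2) ^ k * Real.exp (13 / 12) ^ k := by
                gcongr
            _ = (16 * r ^ 2 * Real.exp (13 / 12)) ^ k := by rw [← mul_pow]
            _ ≤ (48 * r ^ 2) ^ k := by
                apply pow_le_pow_left₀ (by positivity)
                nlinarith [aux_exp_13_12_le_3, sq_nonneg r, hr0]
            _ ≤ (k : ℝ) ^ k := pow_le_pow_left₀ (by positivity) hk48 k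
        have hkfe := aux_pow_le_factorial_mul_exp k
        have := hstep.trans hkfe
        exact le_of_mul_le_mul_right this (Real.exp_pos k)
      have hsqrt : (4 * r) ^ k * Real.exp (2 * r ^ 2) ≤ Real.sqrt (Nat.factorial k) := by
        rw [show ((4 : ℝ) * r) ^ k * Real.exp (2 * r ^ 2)
            = Real.sqrt (((4 * r) ^ k * Real.exp (2 * r ^ 2)) ^ 2) by
          rw [Real.sqrt_sq (by positivity)]]
        apply Real.sqrt_le_sqrt
        calc ((4 * r) ^ k * Real.exp (2 * r ^ 2)) ^ 2
            = ((4 * r) ^ 2) ^ k * (Real.exp (2 * r ^ 2) * Real.exp (2 * r ^ 2)) := by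
              rw [mul_pow, ← pow_mul, mul_comm k 2, pow_mul]
              ring
            _ = (16 * r ^ 2) ^ k * Real.exp (4 * r ^ 2) := by
              rw [← Real.exp_add, show ((4:ℝ) * r) ^ 2 = 16 * r ^ 2 by ring,
                show 2 * r ^ 2 + 2 * r ^ 2 = 4 * r ^ 2 by ring]
            _ ≤ (Nat.factorial k : ℝ) := hfact
      have h1 : ‖f k‖ ≤ 2 ^ k * r ^ k / Real.sqrt (Nat.factorial k) := by
        rw [habs]
        gcongr
      have h2 : 2 ^ k * r ^ k / Real.sqrt (Nat.factorial k)
          ≤ 2 ^ k * r ^ k / ((4 * r) ^ k * Real.exp (2 * r ^ 2)) := by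
        gcongr
      have h3 : (2 : ℝ) ^ k * r ^ k / ((4 * r) ^ k * Real.exp (2 * r ^ 2))
          = A * (1 / 2 : ℝ) ^ k := by
        have hq : (2 : ℝ) ^ k * r ^ k / (4 * r) ^ k = (1 / 2 : ℝ) ^ k := by
          rw [← mul_pow, ← div_pow]
          congr 1
          field_simp
          ring
        rw [← div_div, hq, hA, show (-2 : ℝ) * r ^ 2 = -(2 * r ^ 2) by ring, Real.exp_neg,
          div_eq_mul_inv, mul_comm]
      have h4 : A * (1 / 2 : ℝ) ^ k ≤ g k := by
        simp only [hgdef]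
        have hp1 : (0 : ℝ) ≤ A / 2 * ((2 * r ^ 2) ^ k / (Nat.factorial k : ℝ)) := by positivity
        have hp2 : A * (1 / 2 : ℝ) ^ k ≤ 3 * A / 2 * (1 / 2 : ℝ) ^ k :=
          mul_le_mul_of_nonneg_right (by linarith) hy
        linarith
      calc ‖f k‖ ≤ 2 ^ k * r ^ k / Real.sqrt (Nat.factorial k) := h1
        _ ≤ 2 ^ k * r ^ k / ((4 * r) ^ k * Real.exp (2 * r ^ 2)) := h2
        _ = A * (1 / 2 : ℝ) ^ k := h3
        _ ≤ g k := h4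
  -- summability of the tail
  have hgsum' : Summable (fun k => g (k + 1)) := (summable_nat_add_iff 1).mpr hgsum
  have hFnorm : Summable (fun k => ‖f (k + 1)‖) := by
    apply Summable.of_nonneg_of_le (fun k => norm_nonneg _) (fun k => ?_) hgsum'
    exact hbound (k + 1) (Nat.le_add_left 1 k)
  have hFsum : Summable (fun k => f (k + 1)) := hFnorm.of_norm
  have hfsum : Summable f := (summable_nat_add_iff 1).mp hFsum
  -- splitting off the first term
  have hsplit : psiFun a z = f 0 + ∑' k, f (k + 1) := by
    rw [hpsi]; exact Summable.tsum_eq_zero_add hfsum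
  have hf0 : f 0 = a 0 := by
    simp [hfdef]
  -- bound on the tail
  have htail : ‖∑' k, f (k + 1)‖ ≤ 1 / 2 + 3 * A := by
    calc ‖∑' k, f (k + 1)‖ = ‖∑' k, f (k + 1)‖ := rfl
      _ ≤ ∑' k, ‖f (k + 1)‖ := norm_tsum_le_tsum_norm hFnorm
      _ ≤ ∑' k, g (k + 1) := by
          apply Summable.tsum_le_tsum (fun k => ?_) hFnorm hgsum'
          exact hbound (k + 1) (Nat.le_add_left 1 k)
      _ ≤ ∑' k, g k := by
          have hz0 := Summable.tsum_eq_zero_add hgsum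
          have := hgnonneg 0
          linarith
      _ = 1 / 2 + 3 * A := htsumg
  -- A is small
  have hA6 : A ≤ 1 / 6 := by
    have h1 : A ≤ Real.exp (-2) := by
      rw [hA]
      apply Real.exp_le_exp.mpr
      nlinarith [sq_nonneg (r - 1), hr]
    have h2 : Real.exp (-2) ≤ 1 / 6 := by
      have h6 : (6 : ℝ) ≤ Real.exp 2 := by
        have he2 : Real.exp 2 = Real.exp 1 * Real.exp 1 := by
          rw [← Real.exp_add]; norm_num
        nlinarith [Real.exp_one_gt_d9, Real.exp_pos 1]
      have hmul : Real.exp (-2) * Real.exp 2 = 1 := by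
        rw [← Real.exp_add]; norm_num
      nlinarith [mul_le_mul_of_nonneg_left h6 (Real.exp_pos (-2)).le]
    linarith
  -- conclusion
  have hmain : 1 ≤ ‖psiFun a z‖ := by
    rw [hsplit, hf0]
    have habs0 : ‖a 0‖
        ≤ ‖a 0 + ∑' k, f (k + 1)‖ + ‖∑' k, f (k + 1)‖ := by
      have h := norm_add_le (a 0 + ∑' k, f (k + 1)) (-(∑' k, f (k + 1)))
      simpa using h
    linarith
  exact ⟨hmain, fun h => by rw [h, norm_zero] at hmain; linarith⟩
end

section
/- For every δ ∈ (0, 1/4] there exists r₀(δ) > 0 such that for every r ≥ r₀(δ) the following holds: if (a_k)_{k≥0} is a sequence of complex numbers with |a_k| ≤ exp(2δr²/3) for every integer k with 0 ≤ k < 4er² and |a_k| ≤ (√2)^k for every integer k ≥ 4er², then the entire function f(z) = Σ_{k≥0} a_k z^k/√(k!) satisfies max_{|z| ≤ r} |f(z)| ≤ exp((1/2 + δ) r²). -/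
open MeasureTheory ProbabilityTheory Metric

/-- single term bound: `x ^ k / k! ≤ exp x` for `x ≥ 0`. -/
lemma aux_pow_div_factorial_le_exp {x : ℝ} (hx : 0 ≤ x) (k : ℕ) :
    x ^ k / (Nat.factorial k : ℝ) ≤ Real.exp x := by
  have h := Real.sum_le_exp_of_nonneg hx (k + 1)
  refine le_trans ?_ h
  have := Finset.single_le_sum (f := fun i => x ^ i / (Nat.factorial i : ℝ))
    (fun i _ => by positivity) (Finset.self_mem_range_succ k)
  simpa using this

/-- factorial lower bound: `(k/e)^k ≤ k!`. -/
lemma aux_factorial_ge (k : ℕ) :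
    ((k : ℝ) / Real.exp 1) ^ k ≤ (Nat.factorial k : ℝ) := by
  have h := aux_pow_div_factorial_le_exp (x := (k : ℝ)) (Nat.cast_nonneg k) k
  have hfac : (0 : ℝ) < (Nat.factorial k : ℝ) := by exact_mod_cast Nat.factorial_pos k
  rw [div_le_iff₀ hfac] at h
  rw [div_pow, Real.exp_one_pow, div_le_iff₀ (Real.exp_pos _)]
  linarith [h]

set_option maxHeartbeats 1000000 in
theorem deterministic_max_upper_bound :
    ∀ δ : ℝ, δ ∈ Set.Ioc (0 : ℝ) (1 / 4) → ∃ r₀ > (0 : ℝ), ∀ r : ℝ, r₀ ≤ r →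
      ∀ a : ℕ → ℂ,
        (∀ k : ℕ, (k : ℝ) < 4 * Real.exp 1 * r ^ 2 →
          ‖a k‖ ≤ Real.exp (2 * δ * r ^ 2 / 3)) →
        (∀ k : ℕ, 4 * Real.exp 1 * r ^ 2 ≤ (k : ℝ) →
          ‖a k‖ ≤ (Real.sqrt 2) ^ k) →
        ∀ z : ℂ, ‖z‖ ≤ r →
          ‖psiFun a z‖ ≤ Real.exp ((1 / 2 + δ) * r ^ 2) := by
  intro δ hδ
  obtain ⟨hδ0, hδ4⟩ := hδ
  refine ⟨24 / δ, by positivity, ?_⟩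
  intro r hr a ha1 ha2 z hz
  have hδr : 24 ≤ δ * r := by
    rw [div_le_iff₀ hδ0] at hr; linarith [hr]
  have hr96 : 96 ≤ r := by
    have : 24 / δ ≥ 96 := by
      rw [ge_iff_le, le_div_iff₀ hδ0]; linarith
    linarith
  have hr1 : (1 : ℝ) ≤ r := by linarith
  have hr0 : (0 : ℝ) < r := by linarith
  have hz0 : (0 : ℝ) ≤ ‖z‖ := norm_nonneg z
  have he1 : (0 : ℝ) < Real.exp 1 := Real.exp_pos 1
  have he3 : Real.exp 1 < 2.7182818286 := Real.exp_one_lt_d9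
  set K := ⌈4 * Real.exp 1 * r ^ 2⌉₊ with hK
  set C := Real.exp (2 * δ * r ^ 2 / 3) with hC
  have hC1 : (1 : ℝ) ≤ C := Real.one_le_exp (by positivity)
  have hC0 : (0 : ℝ) < C := lt_of_lt_of_le one_pos hC1
  set F : ℕ → ℝ := fun k => ‖a k * z ^ k / (Real.sqrt (Nat.factorial k) : ℂ)‖ with hF
  have hsq2 : (0:ℝ) < Real.sqrt 2 := Real.sqrt_pos.2 (by norm_num)
  have hsq2le : Real.sqrt 2 ≤ 1.5 := by
    rw [show (1.5:ℝ) = Real.sqrt (1.5^2) by rw [Real.sqrt_sq]; norm_num]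
    exact Real.sqrt_le_sqrt (by norm_num)
  have hsq1 : (1:ℝ) ≤ Real.sqrt 2 := by
    rw [show (1:ℝ) = Real.sqrt 1 by simp]
    exact Real.sqrt_le_sqrt (by norm_num)
  -- pointwise bound for F by majorant
  have hFval : ∀ k : ℕ, F k = ‖a k‖ * ‖z‖ ^ k
      / Real.sqrt (Nat.factorial k) := by
    intro k
    simp [hF, norm_div, norm_mul, norm_pow, Complex.norm_real, Real.norm_eq_abs,
      abs_of_nonneg (Real.sqrt_nonneg _)]
  have hfacpos : ∀ k : ℕ, (0:ℝ) < Real.sqrt (Nat.factorial k) := by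
    intro k
    exact Real.sqrt_pos.2 (by exact_mod_cast Nat.factorial_pos k)
  have haK : ∀ k : ℕ, ‖a k‖ ≤ C * (Real.sqrt 2) ^ k := by
    intro k
    rcases lt_or_ge (k : ℝ) (4 * Real.exp 1 * r ^ 2) with h | h
    · calc ‖a k‖ ≤ C := ha1 k h
        _ ≤ C * (Real.sqrt 2) ^ k := by
          nth_rewrite 1 [← mul_one C]
          exact mul_le_mul_of_nonneg_left (one_le_pow₀ hsq1) hC0.le
    · calc ‖a k‖ ≤ (Real.sqrt 2) ^ k := ha2 k h
        _ ≤ C * (Real.sqrt 2) ^ k := by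
          nth_rewrite 1 [← one_mul ((Real.sqrt 2) ^ k)]
          exact mul_le_mul_of_nonneg_right hC1 (by positivity)
  set maj : ℕ → ℝ := fun k => C * (Real.sqrt 2 * r) ^ k / Real.sqrt (Nat.factorial k)
    with hmaj
  have hmajpos : ∀ k, 0 ≤ maj k := fun k => by
    have := hfacpos k; positivity
  have hFle : ∀ k : ℕ, F k ≤ maj k := by
    intro k
    rw [hFval k, hmaj]
    have h1 : ‖a k‖ * ‖z‖ ^ k ≤ C * (Real.sqrt 2 * r) ^ k := by
      rw [mul_pow, ← mul_assoc]
      exact mul_le_mul (haK k) (pow_le_pow_left₀ hz0 hz k) (by positivity) (by positivity)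
    exact div_le_div₀ (by positivity) h1 (hfacpos k) le_rfl
  have hsummaj : Summable maj := by
    refine summable_of_ratio_norm_eventually_le (r := 1/2) (by norm_num) ?_
    filter_upwards [Filter.eventually_ge_atTop ⌈8 * r ^ 2⌉₊] with n hn
    have h8 : 8 * r ^ 2 ≤ (n:ℝ) + 1 := by
      have := Nat.ceil_le.1 (le_refl ⌈8 * r ^ 2⌉₊)
      have hn' : (⌈8 * r ^ 2⌉₊ : ℝ) ≤ n := by exact_mod_cast hn
      linarith [this.trans hn']
    have hsqrt : 2 * (Real.sqrt 2 * r) ≤ Real.sqrt ((n:ℝ) + 1) := by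
      rw [show (2 : ℝ) * (Real.sqrt 2 * r) = Real.sqrt ((2 * (Real.sqrt 2 * r))^2) by
        rw [Real.sqrt_sq (by positivity)]]
      apply Real.sqrt_le_sqrt
      have : (2 * (Real.sqrt 2 * r))^2 = 4 * (Real.sqrt 2 ^ 2) * r ^ 2 := by ring
      rw [this, Real.sq_sqrt (by norm_num : (0:ℝ) ≤ 2)]
      linarith
    have hfacsucc : Real.sqrt (Nat.factorial (n+1)) =
        Real.sqrt ((n:ℝ)+1) * Real.sqrt (Nat.factorial n) := by
      rw [← Real.sqrt_mul (by positivity)]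
      congr 1
      rw [Nat.factorial_succ]
      push_cast
      ring
    have hpos : (0:ℝ) < Real.sqrt ((n:ℝ)+1) := Real.sqrt_pos.2 (by positivity)
    have heq : maj (n+1) = maj n * (Real.sqrt 2 * r / Real.sqrt ((n:ℝ)+1)) := by
      rw [hmaj]
      simp only [hfacsucc, pow_succ]
      have := (hfacpos n).ne'
      field_simp
    have hratio : Real.sqrt 2 * r / Real.sqrt ((n:ℝ)+1) ≤ 1/2 := by
      rw [div_le_iff₀ hpos]
      linarith
    rw [Real.norm_of_nonneg (hmajpos _), Real.norm_of_nonneg (hmajpos _), heq]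
    calc maj n * (Real.sqrt 2 * r / Real.sqrt ((n:ℝ)+1))
        ≤ maj n * (1/2) := by
          apply mul_le_mul_of_nonneg_left hratio (hmajpos n)
      _ = 1/2 * maj n := by ring
  have hFnonneg : ∀ k, 0 ≤ F k := fun k => norm_nonneg _
  have hsumF : Summable F := Summable.of_nonneg_of_le hFnonneg hFle hsummaj
  -- bound |psi| by tsum of norms
  have hpsi : ‖psiFun a z‖ ≤ ∑' k, F k := by
    rw [psiFun]
    refine norm_tsum_le_tsum_norm ?_
    convert hsumF using 1
  -- split the sum
  have hsplit : ∑' k, F k = (∑ k ∈ Finset.range K, F k) + ∑' k, F (k + K) :=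
    (hsumF.sum_add_tsum_nat_add K).symm
  -- head bound
  have hhead : (∑ k ∈ Finset.range K, F k) ≤ C * (4 * r) * Real.exp (r ^ 2 / 2) := by
    have h1 : (∑ k ∈ Finset.range K, F k) ≤
        C * ∑ k ∈ Finset.range K, r ^ k / Real.sqrt (Nat.factorial k) := by
      rw [Finset.mul_sum]
      apply Finset.sum_le_sum
      intro k hk
      rw [hFval k]
      have hak : ‖a k‖ ≤ C := ha1 k (by
        exact_mod_cast Nat.lt_ceil.1 (Finset.mem_range.1 hk))
      rw [mul_div_assoc]
      apply mul_le_mul hak _ (by positivity) hC0.le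
      have := hfacpos k
      gcongr
    have h2 : ∑ k ∈ Finset.range K, r ^ k / Real.sqrt (Nat.factorial k) ≤
        Real.sqrt K * Real.exp (r ^ 2 / 2) := by
      have hcs := Real.sum_mul_le_sqrt_mul_sqrt (Finset.range K)
        (fun _ => (1:ℝ)) (fun k => r ^ k / Real.sqrt (Nat.factorial k))
      simp only [one_mul, one_pow] at hcs
      have hsq : ∀ k : ℕ, (r ^ k / Real.sqrt (Nat.factorial k)) ^ 2
          = (r ^ 2) ^ k / (Nat.factorial k : ℝ) := by
        intro k
        rw [div_pow, Real.sq_sqrt (by positivity), ← pow_mul, ← pow_mul, mul_comm]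
      have hsum1 : ∑ _k ∈ Finset.range K, (1:ℝ) = (K : ℝ) := by simp
      have hsum2 : ∑ k ∈ Finset.range K, (r ^ k / Real.sqrt (Nat.factorial k)) ^ 2
          ≤ Real.exp (r ^ 2) := by
        calc ∑ k ∈ Finset.range K, (r ^ k / Real.sqrt (Nat.factorial k)) ^ 2
            = ∑ k ∈ Finset.range K, (r ^ 2) ^ k / (Nat.factorial k : ℝ) := by
              exact Finset.sum_congr rfl fun k _ => hsq k
          _ ≤ Real.exp (r ^ 2) := Real.sum_le_exp_of_nonneg (by positivity) K
      calc ∑ k ∈ Finset.range K, r ^ k / Real.sqrt (Nat.factorial k)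
          ≤ Real.sqrt (∑ _k ∈ Finset.range K, (1:ℝ))
              * Real.sqrt (∑ k ∈ Finset.range K,
                (r ^ k / Real.sqrt (Nat.factorial k)) ^ 2) := hcs
        _ ≤ Real.sqrt K * Real.sqrt (Real.exp (r ^ 2)) := by
            apply mul_le_mul
            · rw [hsum1]
            · exact Real.sqrt_le_sqrt hsum2
            · exact Real.sqrt_nonneg _
            · positivity
        _ = Real.sqrt K * Real.exp (r ^ 2 / 2) := by rw [← Real.exp_half]
    have h3 : Real.sqrt K ≤ 4 * r := by
      rw [show (4 : ℝ) * r = Real.sqrt ((4 * r)^2) by rw [Real.sqrt_sq (by positivity)]]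
      apply Real.sqrt_le_sqrt
      have hceil : (K : ℝ) < 4 * Real.exp 1 * r ^ 2 + 1 :=
        Nat.ceil_lt_add_one (by positivity)
      have : 4 * Real.exp 1 * r ^ 2 + 1 ≤ 16 * r ^ 2 := by nlinarith
      nlinarith
    calc (∑ k ∈ Finset.range K, F k)
        ≤ C * (Real.sqrt K * Real.exp (r ^ 2 / 2)) := by
          refine h1.trans (mul_le_mul_of_nonneg_left h2 hC0.le)
      _ ≤ C * (4 * r) * Real.exp (r ^ 2 / 2) := by
          rw [mul_assoc]
          apply mul_le_mul_of_nonneg_left _ hC0.le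
          exact mul_le_mul_of_nonneg_right h3 (Real.exp_pos _).le
  -- tail bound
  have htailterm : ∀ k : ℕ, K ≤ k → F k ≤ (Real.sqrt 2 / 2) ^ k := by
    intro k hk
    have hkR : 4 * Real.exp 1 * r ^ 2 ≤ (k : ℝ) := Nat.ceil_le.1 hk
    have hfac : (4 * r ^ 2) ^ k ≤ (Nat.factorial k : ℝ) := by
      calc (4 * r ^ 2) ^ k = (4 * Real.exp 1 * r ^ 2 / Real.exp 1) ^ k := by
            congr 1; field_simp
        _ ≤ ((k : ℝ) / Real.exp 1) ^ k := by
            apply pow_le_pow_left₀ (by positivity)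
            gcongr
        _ ≤ (Nat.factorial k : ℝ) := aux_factorial_ge k
    have hsqfac : (2 * r) ^ k ≤ Real.sqrt (Nat.factorial k) := by
      rw [show ((2:ℝ) * r) ^ k = Real.sqrt (((2 * r) ^ k)^2) by
        rw [Real.sqrt_sq (by positivity)]]
      apply Real.sqrt_le_sqrt
      calc ((2 * r) ^ k) ^ 2 = (4 * r ^ 2) ^ k := by
            rw [← pow_mul, mul_comm k 2, pow_mul]; congr 1; ring
        _ ≤ (Nat.factorial k : ℝ) := hfac
    rw [hFval k]
    calc ‖a k‖ * ‖z‖ ^ k / Real.sqrt (Nat.factorial k)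
        ≤ (Real.sqrt 2) ^ k * r ^ k / (2 * r) ^ k := by
          apply div_le_div₀ (by positivity)
          · exact mul_le_mul (ha2 k hkR) (pow_le_pow_left₀ hz0 hz k)
              (by positivity) (by positivity)
          · positivity
          · exact hsqfac
      _ = (Real.sqrt 2 / 2) ^ k := by
          rw [← mul_pow, ← div_pow]
          congr 1
          field_simp
  have hgeo : Summable (fun k : ℕ => (Real.sqrt 2 / 2) ^ k) := by
    apply summable_geometric_of_lt_one (by positivity)
    linarith
  have htail : ∑' k, F (k + K) ≤ 4 := by
    have h1 : ∑' k, F (k + K) ≤ ∑' k : ℕ, (Real.sqrt 2 / 2) ^ k := by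
      have hs' : Summable (fun k => F (k + K)) := (summable_nat_add_iff K).mpr hsumF
      refine Summable.tsum_le_tsum (fun k => ?_) hs' hgeo
      calc F (k + K) ≤ (Real.sqrt 2 / 2) ^ (k + K) := htailterm _ (Nat.le_add_left K k)
        _ ≤ (Real.sqrt 2 / 2) ^ k := by
            apply pow_le_pow_of_le_one (by positivity) (by linarith) (Nat.le_add_right k K)
    have h2 : ∑' k : ℕ, (Real.sqrt 2 / 2) ^ k = (1 - Real.sqrt 2 / 2)⁻¹ :=
      tsum_geometric_of_lt_one (by positivity) (by linarith)
    have h3 : (1 - Real.sqrt 2 / 2)⁻¹ ≤ 4 := by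
      rw [inv_le_comm₀ (by linarith) (by norm_num)]
      linarith
    linarith [h1, h2 ▸ h1]
  -- combine
  have hexp8 : 8 * r ≤ Real.exp (δ * r ^ 2 / 3) := by
    have h := Real.add_one_le_exp (δ * r ^ 2 / 3)
    nlinarith
  have hhead' : C * (4 * r) * Real.exp (r ^ 2 / 2) ≤
      (1/2) * Real.exp ((1 / 2 + δ) * r ^ 2) := by
    have hE : Real.exp ((1 / 2 + δ) * r ^ 2)
        = C * Real.exp (r ^ 2 / 2) * Real.exp (δ * r ^ 2 / 3) := by
      rw [hC, ← Real.exp_add, ← Real.exp_add]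
      congr 1
      ring
    rw [hE]
    have h8 : 4 * r ≤ 1/2 * Real.exp (δ * r ^ 2 / 3) := by linarith
    calc C * (4 * r) * Real.exp (r ^ 2 / 2)
        = (4 * r) * (C * Real.exp (r ^ 2 / 2)) := by ring
      _ ≤ (1/2 * Real.exp (δ * r ^ 2 / 3)) * (C * Real.exp (r ^ 2 / 2)) :=
          mul_le_mul_of_nonneg_right h8 (by positivity)
      _ = 1/2 * (C * Real.exp (r ^ 2 / 2) * Real.exp (δ * r ^ 2 / 3)) := by ring
  have hfour : (4:ℝ) ≤ (1/2) * Real.exp ((1 / 2 + δ) * r ^ 2) := by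
    have h1 : (8:ℝ) ≤ (1 / 2 + δ) * r ^ 2 := by nlinarith
    have h2 := Real.add_one_le_exp ((1 / 2 + δ) * r ^ 2)
    linarith
  calc ‖psiFun a z‖ ≤ ∑' k, F k := hpsi
    _ = (∑ k ∈ Finset.range K, F k) + ∑' k, F (k + K) := hsplit
    _ ≤ C * (4 * r) * Real.exp (r ^ 2 / 2) + 4 := add_le_add hhead htail
    _ ≤ (1/2) * Real.exp ((1 / 2 + δ) * r ^ 2)
        + (1/2) * Real.exp ((1 / 2 + δ) * r ^ 2) := add_le_add hhead' hfour
    _ = Real.exp ((1 / 2 + δ) * r ^ 2) := by ring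
end

section
/- For every δ ∈ (0, 1/4] there exist ε(δ) ∈ (0, 1) and an absolute constant C > 0 such that the following holds for every r ≥ 1: if f(z) = Σ_{k≥0} a_k z^k/√(k!) is an entire function (with complex coefficients a_k for which the series converges everywhere) satisfying log max_{|z| ≤ r} |f(z)| ≤ (1/2 − δ) r², then for every integer k with (1 − ε(δ)) r² ≤ k ≤ r² one has |a_k| ≤ C k^{1/4} exp(−kδ/2). -/
open MeasureTheory ProbabilityTheory Metric

/-- Stirling upper bound: `k! ≤ e √k (k/e)^k` for `k ≥ 1`. -/
lemma factorial_le_stirling (k : ℕ) (hk : 1 ≤ k) :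
    (Nat.factorial k : ℝ) ≤ Real.exp 1 * Real.sqrt k * ((k : ℝ) / Real.exp 1) ^ k := by
  have h := Stirling.stirlingSeq'_antitone (Nat.zero_le (k - 1))
  have hk1 : k - 1 + 1 = k := Nat.succ_pred_eq_of_pos hk
  simp only [Function.comp, Nat.succ_eq_add_one, hk1, Nat.zero_add] at h
  rw [Stirling.stirlingSeq_one] at h
  have hkR : (0 : ℝ) < k := by exact_mod_cast hk
  have hd : (0 : ℝ) < Real.sqrt (2 * (k:ℝ)) * ((k : ℝ) / Real.exp 1) ^ k := by positivity
  rw [Stirling.stirlingSeq, div_le_div_iff₀ hd (by positivity)] at h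
  rw [Real.sqrt_mul (by norm_num : (0:ℝ) ≤ 2)] at h
  have hs2 : (0:ℝ) < Real.sqrt 2 := by positivity
  have h' : (Nat.factorial k : ℝ) * Real.sqrt 2 ≤
      (Real.exp 1 * Real.sqrt k * ((k : ℝ) / Real.exp 1) ^ k) * Real.sqrt 2 := by
    nlinarith [h]
  exact le_of_mul_le_mul_right h' hs2

/-- The key elementary exponent inequality. -/
lemma exponent_ineq {δ t K : ℝ} (hδ : 0 < δ) (ht : 1 ≤ t)
    (h1 : (1 - δ) * t ≤ K) (h2 : K ≤ t) (hδ1 : δ ≤ 1/4) :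
    K/2 * (Real.log K - 1) + (1/2 - δ) * t - K * Real.log t / 2 ≤ -(K*δ)/2 := by
  have ht0 : (0:ℝ) < t := by linarith
  have hK0 : (0:ℝ) < K := by nlinarith
  have hlog : Real.log K - Real.log t ≤ K/t - 1 := by
    have := Real.log_le_sub_one_of_pos (show 0 < K/t by positivity)
    rwa [Real.log_div (by linarith) (by linarith)] at this
  have h3 : K/2 * (Real.log K - Real.log t) ≤ K/2 * (K/t - 1) :=
    mul_le_mul_of_nonneg_left hlog (by positivity)
  have key : (t - K) * (t - K) ≤ (δ * t) * (2*t - K) := by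
    have a1 : (t - K) * (t - K) ≤ (δ * t) * (t - K) :=
      mul_le_mul_of_nonneg_right (by nlinarith) (by linarith)
    have a2 : (δ * t) * (t - K) ≤ (δ * t) * (2*t - K) :=
      mul_le_mul_of_nonneg_left (by linarith) (by positivity)
    linarith
  have e1 : K/2 * (K/t - 1) = (K*K - K*t)/(2*t) := by field_simp
  have e2 : (K*K - K*t)/(2*t) ≤ K/2 - (1/2 - δ)*t - K*δ/2 := by
    rw [div_le_iff₀ (by positivity : (0:ℝ) < 2*t)]
    nlinarith [key]
  nlinarith [h3, e1 ▸ e2]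

/-- Cauchy inequality for the coefficients of `psiFun a`. -/
lemma cauchy_coeff_bound (a : ℕ → ℂ)
    (hsum : ∀ z : ℂ, Summable fun k : ℕ => a k * z ^ k / (Real.sqrt (Nat.factorial k) : ℂ))
    {r : ℝ} (hr : 0 < r) (k : ℕ) :
    ‖a k‖ / Real.sqrt (Nat.factorial k) ≤ maxAbs (psiFun a) r / r ^ k := by
  set c : ℕ → ℂ := fun k => a k / (Real.sqrt (Nat.factorial k) : ℂ) with hc
  set p := FormalMultilinearSeries.ofScalars ℂ c with hp
  have hterm : ∀ z : ℂ, ∀ n : ℕ, a n * z ^ n / (Real.sqrt (Nat.factorial n) : ℂ) = c n * z ^ n := by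
    intro z n; rw [hc]; ring
  have hsum' : ∀ z : ℂ, Summable fun n : ℕ => c n * z ^ n := by
    intro z; exact (hsum z).congr (hterm z)
  have hrad : p.radius = ⊤ := by
    refine ENNReal.eq_top_of_forall_nnreal_le fun s => ?_
    obtain ⟨C, hC⟩ := ((hsum' ((s:ℝ):ℂ)).tendsto_atTop_zero.norm.bddAbove_range)
    refine p.le_radius_of_bound C fun n => ?_
    have h := hC (Set.mem_range_self n)
    have hn : ‖c n * ((s:ℝ):ℂ) ^ n‖ = ‖c n‖ * (s:ℝ) ^ n := by
      rw [norm_mul, norm_pow, Complex.norm_real, Real.norm_eq_abs, NNReal.abs_eq]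
    rw [hn] at h
    have hpn : ‖p n‖ = ‖c n‖ := FormalMultilinearSeries.ofScalars_norm ℂ c n
    rw [hpn]; exact h
  have hps : HasFPowerSeriesOnBall p.sum p 0 ⊤ := by
    have := p.hasFPowerSeriesOnBall (by rw [hrad]; exact ENNReal.zero_lt_top)
    rwa [hrad] at this
  have hfeq : psiFun a = p.sum := by
    funext z
    have h2 := FormalMultilinearSeries.ofScalars_sum_eq (E := ℂ) c z
    rw [psiFun, show p.sum z = FormalMultilinearSeries.ofScalarsSum c z from rfl, h2]
    exact tsum_congr fun n => by rw [hterm z n, smul_eq_mul]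
  have hpsi : HasFPowerSeriesOnBall (psiFun a) p 0 ⊤ := by rw [hfeq]; exact hps
  have hdiff : Differentiable ℂ (psiFun a) := by
    intro z
    have hz : z ∈ Metric.eball (0:ℂ) ⊤ := by simp [Metric.eball_top]
    exact (hpsi.differentiableOn z hz).differentiableAt (Metric.isOpen_eball.mem_nhds hz)
  set R : NNReal := ⟨r, hr.le⟩ with hR
  have hcau : HasFPowerSeriesOnBall (psiFun a) (cauchyPowerSeries (psiFun a) 0 R) 0 ⊤ :=
    hdiff.hasFPowerSeriesOnBall 0 (by exact_mod_cast hr)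
  have hpq : p = cauchyPowerSeries (psiFun a) 0 R :=
    hpsi.hasFPowerSeriesAt.eq_formalMultilinearSeries hcau.hasFPowerSeriesAt
  set M := maxAbs (psiFun a) r with hM
  have hbdd : ∀ z ∈ closedBall (0:ℂ) r, ‖psiFun a z‖ ≤ M := by
    intro z hz
    refine le_csSup ?_ ⟨z, hz, rfl⟩
    exact ((isCompact_closedBall (0:ℂ) r).image
      (continuous_norm.comp hdiff.continuous)).bddAbove
  have hM0 : 0 ≤ M := le_trans (norm_nonneg _) (hbdd 0 (mem_closedBall_self hr.le))
  have hint : (∫ θ in (0)..(2*Real.pi), ‖psiFun a (circleMap 0 r θ)‖) ≤ 2*Real.pi * M := by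
    have hle : ∀ θ ∈ Set.Icc (0:ℝ) (2*Real.pi), ‖psiFun a (circleMap 0 r θ)‖ ≤ M := by
      intro θ _
      exact hbdd _ (circleMap_mem_closedBall 0 hr.le θ)
    calc (∫ θ in (0)..(2*Real.pi), ‖psiFun a (circleMap 0 r θ)‖)
        ≤ ∫ _ in (0)..(2*Real.pi), M := by
          refine intervalIntegral.integral_mono_on Real.two_pi_pos.le ?_ ?_ hle
          · exact ((hdiff.continuous.comp (continuous_circleMap 0 r)).norm).intervalIntegrable _ _
          · exact intervalIntegrable_const
      _ = 2*Real.pi * M := by simp [mul_comm]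
  have hnorm : ‖p k‖ ≤ M / r ^ k := by
    rw [hpq]
    have hb : ‖cauchyPowerSeries (psiFun a) 0 R k‖ ≤
        ((2*Real.pi)⁻¹ * ∫ θ in (0)..(2*Real.pi), ‖psiFun a (circleMap 0 r θ)‖) * |r|⁻¹ ^ k :=
      norm_cauchyPowerSeries_le (psiFun a) 0 (R:ℝ) k
    refine hb.trans ?_
    rw [abs_of_nonneg hr.le, inv_pow, ← div_eq_mul_inv]
    have h1 : (2*Real.pi)⁻¹ * (∫ θ in (0)..(2*Real.pi), ‖psiFun a (circleMap 0 r θ)‖) ≤ M := by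
      rw [inv_mul_le_iff₀ Real.two_pi_pos]
      linarith [hint]
    gcongr
  have hnc : ‖p k‖ = ‖a k‖ / Real.sqrt (Nat.factorial k) := by
    have hpn : ‖p k‖ = ‖c k‖ := FormalMultilinearSeries.ofScalars_norm ℂ c k
    rw [hpn, hc]
    simp only [norm_div, Complex.norm_real, Real.norm_eq_abs, abs_of_nonneg (Real.sqrt_nonneg _)]
  rw [← hnc]; exact hnorm

theorem coefficient_bound_from_small_max :
    ∃ C > (0 : ℝ), ∀ δ : ℝ, δ ∈ Set.Ioc (0 : ℝ) (1 / 4) →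
      ∃ ε ∈ Set.Ioo (0 : ℝ) 1, ∀ r : ℝ, 1 ≤ r → ∀ a : ℕ → ℂ,
        (∀ z : ℂ, Summable fun k : ℕ => a k * z ^ k / (Real.sqrt (Nat.factorial k) : ℂ)) →
        Real.log (maxAbs (psiFun a) r) ≤ (1 / 2 - δ) * r ^ 2 →
        ∀ k : ℕ, (1 - ε) * r ^ 2 ≤ (k : ℝ) → (k : ℝ) ≤ r ^ 2 →
          ‖a k‖ ≤ C * (k : ℝ) ^ ((1 : ℝ) / 4) * Real.exp (-((k : ℝ) * δ) / 2) := by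
  refine ⟨Real.exp 1, Real.exp_pos 1, fun δ hδ => ?_⟩
  obtain ⟨hδ0, hδ1⟩ := hδ
  refine ⟨δ, ⟨hδ0, by linarith⟩, fun r hr a hsum hlog k hk1 hk2 => ?_⟩
  have hr0 : (0:ℝ) < r := by linarith
  have ht : (1:ℝ) ≤ r ^ 2 := by nlinarith
  have hK0 : (0:ℝ) < (k:ℝ) := by nlinarith
  have hk : 1 ≤ k := by
    by_contra h
    push_neg at h
    interval_cases k
    · norm_num at hK0
  have hK1 : (1:ℝ) ≤ (k:ℝ) := by exact_mod_cast hk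
  set M := maxAbs (psiFun a) r with hM
  set B : ℝ := (1/2 - δ) * r ^ 2 with hB
  have hMle : M ≤ Real.exp B := by
    rcases le_or_gt M 0 with h | h
    · exact h.trans (Real.exp_pos B).le
    · calc M = Real.exp (Real.log M) := (Real.exp_log h).symm
        _ ≤ Real.exp B := Real.exp_le_exp.mpr hlog
  have hfac0 : (0:ℝ) < (Nat.factorial k : ℝ) := by exact_mod_cast Nat.factorial_pos k
  have hsqrt0 : (0:ℝ) < Real.sqrt (Nat.factorial k) := Real.sqrt_pos.mpr hfac0
  have hcb := cauchy_coeff_bound a hsum hr0 k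
  have h0 : ‖a k‖ ≤ Real.sqrt (Nat.factorial k) * (M / r ^ k) := by
    rw [div_le_iff₀ hsqrt0] at hcb
    nlinarith [hcb]
  have h1 : ‖a k‖ ≤ Real.sqrt (Nat.factorial k) * (Real.exp B / r ^ k) := by
    refine h0.trans ?_
    gcongr
  -- now the purely real estimate
  -- log of LHS
  have hLHSpos : (0:ℝ) < Real.sqrt (Nat.factorial k) * (Real.exp B / r ^ k) := by positivity
  have hfaclog : Real.log (Nat.factorial k : ℝ) ≤
      1 + Real.log k / 2 + (k:ℝ) * (Real.log k - 1) := by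
    have hs := factorial_le_stirling k hk
    have hl := Real.log_le_log hfac0 hs
    rw [Real.log_mul (by positivity) (by positivity),
        Real.log_mul (by positivity) (by positivity),
        Real.log_exp, Real.log_sqrt (by positivity), Real.log_pow,
        Real.log_div (by positivity) (by positivity), Real.log_exp] at hl
    linarith [hl]
  have hexp : Real.log (Nat.factorial k) / 2 + B - (k:ℝ) * Real.log r ≤
      1 + Real.log k / 4 + (-((k:ℝ) * δ) / 2) := by
    have hlogt : Real.log (r ^ 2) = 2 * Real.log r := by
      rw [Real.log_pow]; norm_num
    have hmain := exponent_ineq hδ0 ht hk1 hk2 hδ1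
    rw [hlogt] at hmain
    have : (k:ℝ) * (2 * Real.log r) / 2 = (k:ℝ) * Real.log r := by ring
    rw [this] at hmain
    have h4 : Real.log (Nat.factorial k) / 2 ≤
        1/2 + Real.log k / 4 + (k:ℝ)/2 * (Real.log k - 1) := by linarith
    have h5 : (k:ℝ)/2 * (Real.log k - 1) + (1/2 - δ) * r^2 - (k:ℝ) * Real.log r
        ≤ -((k:ℝ)*δ)/2 := hmain
    rw [hB]
    linarith
  -- convert to exponentials
  have e1 : Real.exp (Real.log (Nat.factorial k) / 2) = Real.sqrt (Nat.factorial k) := by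
    rw [← Real.log_sqrt hfac0.le, Real.exp_log hsqrt0]
  have e2 : Real.exp ((k:ℝ) * Real.log r) = r ^ k := by
    rw [← Real.log_pow, Real.exp_log (by positivity)]
  have eL : Real.sqrt (Nat.factorial k) * (Real.exp B / r ^ k)
      = Real.exp (Real.log (Nat.factorial k) / 2 + B - (k:ℝ) * Real.log r) := by
    rw [Real.exp_sub, Real.exp_add, e1, e2]
    ring
  have e3 : Real.exp (Real.log (k:ℝ) / 4) = (k : ℝ) ^ ((1:ℝ)/4) := by
    rw [Real.rpow_def_of_pos hK0]
    congr 1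
    ring
  have eR : Real.exp 1 * (k : ℝ) ^ ((1:ℝ)/4) * Real.exp (-((k:ℝ) * δ) / 2)
      = Real.exp (1 + Real.log k / 4 + (-((k:ℝ) * δ) / 2)) := by
    rw [Real.exp_add, Real.exp_add, e3]
  calc ‖a k‖ ≤ Real.sqrt (Nat.factorial k) * (Real.exp B / r ^ k) := h1
    _ = Real.exp (Real.log (Nat.factorial k) / 2 + B - (k:ℝ) * Real.log r) := eL
    _ ≤ Real.exp (1 + Real.log k / 4 + (-((k:ℝ) * δ) / 2)) := Real.exp_le_exp.mpr hexp
    _ = Real.exp 1 * (k : ℝ) ^ ((1:ℝ)/4) * Real.exp (-((k:ℝ) * δ) / 2) := eR.symm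
end
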